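/- arXiv:math/0608701 — 10 statements merged into one kernel-verified Lean document; each statement's English description precedes it below -/
import Mathlib

section
/- Let n ≥ 1 and let π and t be two elements of the symmetric group S_{2n} on {1,…,2n}, each of which is a product of n disjoint transpositions (equivalently, each is a fixed-point-free involution). Then there exists g ∈ S_{2n} with g² = id and g π g⁻¹ = t. -/
/-!
The group generated by the involutions `π` and `t` is dihedral: each of its elements is `c ^ k`
or `c ^ k * t` with `c = π * t`, and each `c ^ k * t` is conjugate to `π` or to `t`, hence
fixed-point free. So every orbit of `⟨π, t⟩` is a cycle `x₀, x₁, …, x₂ₘ₋₁` along which edges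
`{x, t x}` and `{x, π x}` alternate; its even-indexed points form the `c`-cycle of `x₀`, which
never contains `t x₀`. The reflection of this cycle fixing `x₀` exchanges the two kinds of edges
and is the required `g`: on even points it is `c ^ k x₀ ↦ c ^ (-k) x₀`, and on odd points it is
forced by `g π = t g` to be `t ∘ g ∘ π`.
-/

open Subgroup

section Dihedral

variable {G : Type*} [Group G] {a b : G}

theorem mul_zpow_mul_eq_zpow_neg_mul (ha : a * a = 1) (hb : b * b = 1) (k : ℤ) :
    b * (a * b) ^ k = (a * b) ^ (-k) * b := by
  have hconj : b * (a * b) * b⁻¹ = (a * b)⁻¹ := by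
    rw [mul_inv_rev, inv_eq_of_mul_eq_one_right ha, inv_eq_of_mul_eq_one_right hb,
      mul_assoc, mul_assoc, hb, mul_one]
  have hconj_zpow : b * (a * b) ^ k * b⁻¹ = (a * b) ^ (-k) := by
    rw [← conj_zpow, hconj, inv_zpow']
  rw [← hconj_zpow, inv_mul_cancel_right]

theorem exists_zpow_eq_of_mem_closure_pair (ha : a * a = 1) (hb : b * b = 1) {g : G}
    (hg : g ∈ closure {a, b}) : ∃ k : ℤ, g = (a * b) ^ k ∨ g = (a * b) ^ k * b := by
  induction hg using closure_induction with
  | mem x hx =>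
    rcases hx with rfl | rfl
    · exact ⟨1, Or.inr (by rw [zpow_one, mul_assoc, hb, mul_one])⟩
    · exact ⟨0, Or.inr (by rw [zpow_zero, one_mul])⟩
  | one => exact ⟨0, Or.inl (zpow_zero _).symm⟩
  | mul x y _ _ hx hy =>
    obtain ⟨i, rfl | rfl⟩ := hx <;> obtain ⟨j, rfl | rfl⟩ := hy
    · exact ⟨i + j, Or.inl (zpow_add _ _ _).symm⟩
    · exact ⟨i + j, Or.inr (by rw [zpow_add, mul_assoc])⟩
    · refine ⟨i - j, Or.inr ?_⟩
      rw [mul_assoc, mul_zpow_mul_eq_zpow_neg_mul ha hb, ← mul_assoc, ← zpow_add, sub_eq_add_neg]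
    · refine ⟨i - j, Or.inl ?_⟩
      calc (a * b) ^ i * b * ((a * b) ^ j * b) = (a * b) ^ i * (b * (a * b) ^ j) * b := by
            simp only [mul_assoc]
        _ = (a * b) ^ i * (a * b) ^ (-j) * (b * b) := by
            rw [mul_zpow_mul_eq_zpow_neg_mul ha hb]; simp only [mul_assoc]
        _ = (a * b) ^ (i - j) := by rw [hb, mul_one, ← zpow_add, sub_eq_add_neg]
  | inv x _ hx =>
    obtain ⟨i, rfl | rfl⟩ := hx
    · exact ⟨-i, Or.inl (zpow_neg _ _).symm⟩
    · refine ⟨i, Or.inr ?_⟩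
      rw [mul_inv_rev, inv_eq_of_mul_eq_one_right hb, ← zpow_neg,
        mul_zpow_mul_eq_zpow_neg_mul ha hb, neg_neg]

theorem isConj_or_isConj_zpow_mul (ha : a * a = 1) (hb : b * b = 1) (k : ℤ) :
    IsConj b ((a * b) ^ k * b) ∨ IsConj a ((a * b) ^ k * b) := by
  obtain ⟨m, rfl | rfl⟩ := k.even_or_odd'
  · refine Or.inl (isConj_iff.2 ⟨(a * b) ^ m, ?_⟩)
    rw [← zpow_neg, mul_assoc, mul_zpow_mul_eq_zpow_neg_mul ha hb, neg_neg, ← mul_assoc,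
      ← zpow_add, two_mul]
  · refine Or.inr (isConj_iff.2 ⟨(a * b) ^ m, ?_⟩)
    have hab : a * b * b = a := by rw [mul_assoc, hb, mul_one]
    calc (a * b) ^ m * a * ((a * b) ^ m)⁻¹ = (a * b) ^ m * (a * b * b) * (a * b) ^ (-m) := by
          rw [hab, zpow_neg]
      _ = (a * b) ^ m * (a * b) * (b * (a * b) ^ (-m)) := by simp only [mul_assoc]
      _ = (a * b) ^ (m + 1 + m) * b := by
          rw [mul_zpow_mul_eq_zpow_neg_mul ha hb, neg_neg, ← mul_assoc, ← zpow_add_one,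
            ← zpow_add]
      _ = (a * b) ^ (2 * m + 1) * b := by congr 2; ring

end Dihedral

namespace Equiv.Perm

variable {α : Type*}

theorem apply_ne_self_of_isConj {σ τ : Perm α} (h : IsConj σ τ) (hσ : ∀ x, σ x ≠ x) (x : α) :
    τ x ≠ x := by
  obtain ⟨g, rfl⟩ := isConj_iff.1 h
  intro hx
  apply hσ (g⁻¹ x)
  simpa [mul_apply, eq_inv_iff_eq] using congrArg (⇑g⁻¹) hx

section CycleReflect

open Classical in
noncomputable def cycleReflect (c : Perm α) (r x : α) : α :=
  if h : c.SameCycle r x then (c ^ (-h.choose)) r else x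

variable {c : Perm α} {r x : α}

theorem cycleReflect_zpow_apply (k : ℤ) : cycleReflect c r ((c ^ k) r) = (c ^ (-k)) r := by
  have h : c.SameCycle r ((c ^ k) r) := ⟨k, rfl⟩
  rw [cycleReflect, dif_pos h]
  have hj := congrArg (⇑(c ^ (-h.choose - k))) h.choose_spec
  simp only [← mul_apply, ← zpow_add, sub_add_cancel,
    show -h.choose - k + h.choose = -k by ring] at hj
  exact hj.symm

theorem SameCycle.cycleReflect (h : c.SameCycle r x) : c.SameCycle r (cycleReflect c r x) := by
  obtain ⟨k, rfl⟩ := h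
  exact ⟨-k, (cycleReflect_zpow_apply k).symm⟩

theorem cycleReflect_cycleReflect (h : c.SameCycle r x) :
    cycleReflect c r (cycleReflect c r x) = x := by
  obtain ⟨k, rfl⟩ := h
  rw [cycleReflect_zpow_apply, cycleReflect_zpow_apply, neg_neg]

theorem cycleReflect_apply_self (h : c.SameCycle r x) :
    cycleReflect c r (c x) = c⁻¹ (cycleReflect c r x) := by
  obtain ⟨k, rfl⟩ := h
  rw [← mul_apply, ← zpow_one_add, cycleReflect_zpow_apply, cycleReflect_zpow_apply,
    ← mul_apply, ← zpow_neg_one, ← zpow_add, neg_add]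

end CycleReflect

structure IsFreeInvolution (σ : Perm α) : Prop where
  mul_self : σ * σ = 1
  apply_ne_self : ∀ x, σ x ≠ x

variable {π t : Perm α}

theorem IsFreeInvolution.apply_apply {σ : Perm α} (hσ : IsFreeInvolution σ) (x : α) :
    σ (σ x) = x := by
  rw [← mul_apply, hσ.mul_self, one_apply]

theorem not_sameCycle_apply (hπ : IsFreeInvolution π) (ht : IsFreeInvolution t) (x : α) :
    ¬(π * t).SameCycle x (t x) := by
  rintro ⟨k, hk⟩
  apply (isConj_or_isConj_zpow_mul hπ.mul_self ht.mul_self (-k)).elim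
    (apply_ne_self_of_isConj · ht.apply_ne_self x)
    (apply_ne_self_of_isConj · hπ.apply_ne_self x)
  rw [mul_apply, ← hk, ← mul_apply, ← zpow_add, neg_add_cancel, zpow_zero, one_apply]

noncomputable def orbitRep (π t : Perm α) (x : α) : α :=
  (Quotient.mk (MulAction.orbitRel (closure {π, t}) α) x).out

theorem orbitRep_apply_of_mem {g : Perm α} (hg : g ∈ closure {π, t}) (x : α) :
    orbitRep π t (g x) = orbitRep π t x :=
  congrArg Quotient.out (Quotient.sound ⟨⟨g, hg⟩, rfl⟩)

theorem orbitRep_eq_of_sameCycle {x y : α} (h : (π * t).SameCycle x y) :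
    orbitRep π t y = orbitRep π t x := by
  obtain ⟨k, rfl⟩ := h
  exact orbitRep_apply_of_mem (zpow_mem (mul_mem (subset_closure (by simp))
    (subset_closure (by simp))) k) x

theorem orbitRep_apply_right (x : α) : orbitRep π t (t x) = orbitRep π t x :=
  orbitRep_apply_of_mem (subset_closure (by simp)) x

theorem sameCycle_orbitRep_or (hπ : IsFreeInvolution π) (ht : IsFreeInvolution t) (x : α) :
    (π * t).SameCycle (orbitRep π t x) x ∨ (π * t).SameCycle (orbitRep π t x) (t x) := by
  obtain ⟨⟨g, hg⟩, hgx⟩ := MulAction.orbitRel_apply.1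
    (Quotient.mk_out (s := MulAction.orbitRel (closure {π, t}) α) x)
  obtain ⟨k, rfl | rfl⟩ := exists_zpow_eq_of_mem_closure_pair hπ.mul_self ht.mul_self hg
  · exact Or.inl (SameCycle.symm ⟨k, hgx⟩)
  · exact Or.inr (SameCycle.symm ⟨k, hgx⟩)

/-- The points of the alternating cycle through `orbitRep π t x` at an even distance from it. -/
def IsEvenPoint (π t : Perm α) (x : α) : Prop :=
  (π * t).SameCycle (orbitRep π t x) x

theorem isEvenPoint_mul_apply_iff {x : α} :
    IsEvenPoint π t ((π * t) x) ↔ IsEvenPoint π t x := by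
  rw [IsEvenPoint, IsEvenPoint, orbitRep_eq_of_sameCycle (sameCycle_apply_right.2 SameCycle.rfl),
    sameCycle_apply_right]

theorem isEvenPoint_apply_right_iff (hπ : IsFreeInvolution π) (ht : IsFreeInvolution t) {x : α} :
    IsEvenPoint π t (t x) ↔ ¬IsEvenPoint π t x := by
  rw [IsEvenPoint, IsEvenPoint, orbitRep_apply_right]
  refine ⟨fun hodd heven ↦ not_sameCycle_apply hπ ht x (heven.symm.trans hodd), fun h ↦ ?_⟩
  exact (sameCycle_orbitRep_or hπ ht x).resolve_left h

theorem isEvenPoint_apply_left_iff (hπ : IsFreeInvolution π) (ht : IsFreeInvolution t) {x : α} :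
    IsEvenPoint π t (π x) ↔ ¬IsEvenPoint π t x := by
  have hπx : π x = (π * t) (t x) := by rw [mul_apply, ht.apply_apply]
  rw [hπx, isEvenPoint_mul_apply_iff, isEvenPoint_apply_right_iff hπ ht]

noncomputable def evenReflect (π t : Perm α) (x : α) : α :=
  cycleReflect (π * t) (orbitRep π t x) x

theorem IsEvenPoint.orbitRep_evenReflect {x : α} (h : IsEvenPoint π t x) :
    orbitRep π t (evenReflect π t x) = orbitRep π t x :=
  orbitRep_eq_of_sameCycle (h.symm.trans (SameCycle.cycleReflect h))

theorem IsEvenPoint.evenReflect {x : α} (h : IsEvenPoint π t x) :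
    IsEvenPoint π t (Perm.evenReflect π t x) := by
  rw [IsEvenPoint, h.orbitRep_evenReflect]
  exact SameCycle.cycleReflect h

theorem IsEvenPoint.evenReflect_evenReflect {x : α} (h : IsEvenPoint π t x) :
    Perm.evenReflect π t (Perm.evenReflect π t x) = x := by
  rw [Perm.evenReflect, h.orbitRep_evenReflect]
  exact cycleReflect_cycleReflect h

theorem IsEvenPoint.evenReflect_mul_apply {x : α} (h : IsEvenPoint π t x) :
    Perm.evenReflect π t ((π * t) x) = (π * t)⁻¹ (Perm.evenReflect π t x) := by
  rw [Perm.evenReflect, orbitRep_eq_of_sameCycle (sameCycle_apply_right.2 SameCycle.rfl),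
    cycleReflect_apply_self h]
  rfl

open Classical in
noncomputable def conjInvolution (π t : Perm α) (x : α) : α :=
  if IsEvenPoint π t x then evenReflect π t x else t (evenReflect π t (π x))

theorem conjInvolution_of_isEvenPoint {x : α} (h : IsEvenPoint π t x) :
    conjInvolution π t x = evenReflect π t x :=
  if_pos h

theorem conjInvolution_of_not_isEvenPoint {x : α} (h : ¬IsEvenPoint π t x) :
    conjInvolution π t x = t (evenReflect π t (π x)) :=
  if_neg h

theorem mul_inv_apply_apply (ht : t * t = 1) (x : α) : (π * t)⁻¹ (π x) = t x := by
  rw [inv_eq_iff_eq, mul_apply, ← mul_apply t t, ht, one_apply]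

theorem conjInvolution_involutive (hπ : IsFreeInvolution π) (ht : IsFreeInvolution t) :
    Function.Involutive (conjInvolution π t) := by
  intro x
  by_cases h : IsEvenPoint π t x
  · rw [conjInvolution_of_isEvenPoint h, conjInvolution_of_isEvenPoint h.evenReflect,
      h.evenReflect_evenReflect]
  · have hπx : IsEvenPoint π t (π x) := (isEvenPoint_apply_left_iff hπ ht).2 h
    have hodd : ¬IsEvenPoint π t (t (evenReflect π t (π x))) :=
      fun h' ↦ (isEvenPoint_apply_right_iff hπ ht).1 h' hπx.evenReflect
    rw [conjInvolution_of_not_isEvenPoint h, conjInvolution_of_not_isEvenPoint hodd,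
      ← mul_apply π t, hπx.evenReflect.evenReflect_mul_apply, hπx.evenReflect_evenReflect,
      mul_inv_apply_apply ht.mul_self, ht.apply_apply]

theorem conjInvolution_apply_conjInvolution (hπ : IsFreeInvolution π)
    (ht : IsFreeInvolution t) (x : α) :
    conjInvolution π t (π (conjInvolution π t x)) = t x := by
  by_cases h : IsEvenPoint π t x
  · have hodd : ¬IsEvenPoint π t (π (evenReflect π t x)) :=
      fun h' ↦ (isEvenPoint_apply_left_iff hπ ht).1 h' h.evenReflect
    rw [conjInvolution_of_isEvenPoint h, conjInvolution_of_not_isEvenPoint hodd,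
      hπ.apply_apply, h.evenReflect_evenReflect]
  · have hπx : IsEvenPoint π t (π x) := (isEvenPoint_apply_left_iff hπ ht).2 h
    have heven : IsEvenPoint π t ((π * t) (evenReflect π t (π x))) :=
      isEvenPoint_mul_apply_iff.2 hπx.evenReflect
    rw [conjInvolution_of_not_isEvenPoint h, ← mul_apply π t,
      conjInvolution_of_isEvenPoint heven, hπx.evenReflect.evenReflect_mul_apply,
      hπx.evenReflect_evenReflect, mul_inv_apply_apply ht.mul_self]

theorem exists_involution_conj_eq (hπ : IsFreeInvolution π) (ht : IsFreeInvolution t) :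
    ∃ g : Perm α, g * g = 1 ∧ g * π * g⁻¹ = t := by
  refine ⟨(conjInvolution_involutive hπ ht).toPerm, ext (conjInvolution_involutive hπ ht), ?_⟩
  rw [mul_inv_eq_iff_eq_mul]
  ext x
  simpa only [mul_apply, Function.Involutive.coe_toPerm, conjInvolution_involutive hπ ht x]
    using conjInvolution_apply_conjInvolution hπ ht (conjInvolution π t x)

end Equiv.Perm

theorem stmt3_general (n : ℕ)
    (π t : Equiv.Perm (Fin (2 * n)))
    (hπ : π * π = 1) (hπfree : ∀ x, π x ≠ x)
    (ht : t * t = 1) (htfree : ∀ x, t x ≠ x) :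
    ∃ g : Equiv.Perm (Fin (2 * n)), g * g = 1 ∧ g * π * g⁻¹ = t :=
  Equiv.Perm.exists_involution_conj_eq ⟨hπ, hπfree⟩ ⟨ht, htfree⟩

/-- Let `n ≥ 1` and let `π` and `t` be two elements of the symmetric
group `S_{2n}` (on `Fin (2*n)`), each of which is a product of `n` disjoint
transpositions, i.e. a fixed-point-free involution.  Then there exists `g ∈ S_{2n}`
with `g² = id` and `g π g⁻¹ = t`. -/
theorem stmt3 (n : ℕ) (hn : 1 ≤ n)
    (π t : Equiv.Perm (Fin (2 * n)))
    (hπ : π * π = 1) (hπfree : ∀ x, π x ≠ x)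
    (ht : t * t = 1) (htfree : ∀ x, t x ≠ x) :
    ∃ g : Equiv.Perm (Fin (2 * n)), g * g = 1 ∧ g * π * g⁻¹ = t :=
  stmt3_general n π t hπ hπfree ht htfree
end

section
/- Let n > 1 be odd. In S_{2n}, set A_i = (2i-1, 2i) for 1 ≤ i ≤ n, π = A_1⋯A_n = (1 2)(3 4)⋯(2n-1 2n), and B_j = (2j-1, 2j+1)(2j, 2j+2) for 1 ≤ j ≤ n-1, so that the centralizer of π in S_{2n} is generated by A_1,…,A_n, B_1,…,B_{n-1}. Let μ ∈ {1, -1} and let ρ be a group homomorphism from the centralizer of π to ℂˣ satisfying ρ(A_i) = -1 for all 1 ≤ i ≤ n and ρ(B_j) = μ for all 1 ≤ j ≤ n-1. Then for all elements t, t' in the conjugacy class of π with t t' = t' t, and all g, g' ∈ S_{2n} with g π g⁻¹ = t and g' π g'⁻¹ = t', the elements g'⁻¹ t g' and g⁻¹ t' g lie in the centralizer of π, ρ(g⁻¹ t g) = -1, and ρ(g'⁻¹ t g') · ρ(g⁻¹ t' g) = 1. (In the paper's terminology: the braided vector space associated to χ_{(n)} ⊗ ε and to χ_{(n)} ⊗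 sgn is negative.) -/
/-!
The centralizer of `π` is the hyperoctahedral group: each of its elements `c` permutes the
`n` blocks `{2i, 2i+1}`, which gives a homomorphism `c ↦ blockPerm c` to `S_n`. Since `ρ` is
determined by its values on the generators, `ρ c = sgn c · μ^[blockPerm c is odd]`. In
particular `ρ π = sgn π = (-1)^n = -1`.

With `h = g⁻¹ g'` the two elements of the last claim are `σ = h⁻¹ π h` and `τ = h π h⁻¹`.
Both are conjugate to `π`, so `sgn σ = sgn τ`. For a fixed-point-free involution `c` commuting
with `π`, `blockPerm c` is an involution moving exactly the blocks on which `c ≠ π`, that is,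
half as many points as `c π` moves; and `σ π = ⁅h⁻¹, π⁆`, `τ π = ⁅h, π⁆` have supports of the
same size, since `⁅h⁻¹, π⁆` is conjugate to `⁅h, π⁆⁻¹`. So `ρ σ = ρ τ` is a sign and
`ρ σ · ρ τ = 1`.
-/

open Equiv Finset
open scoped commutatorElement

theorem Equiv.Perm.sign_eq_neg_one_pow_card_support_div_two {α : Type*} [Fintype α]
    [DecidableEq α] {σ : Perm α} (hσ : σ ^ 2 = 1) : Perm.sign σ = (-1) ^ (#σ.support / 2) := by
  rw [Perm.sign_of_pow_two_eq_one hσ, Perm.card_fixedPoints, Perm.sum_cycleType,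
    Nat.sub_sub_self (card_le_univ σ.support)]

theorem Equiv.Perm.card_support_commutatorElement_inv_left {α : Type*} [Fintype α]
    [DecidableEq α] (h g : Perm α) : #⁅h⁻¹, g⁆.support = #⁅h, g⁆.support := by
  rw [← Perm.card_support_conj (σ := h), ← Perm.support_inv ⁅h, g⁆]
  congr 2
  simp only [commutatorElement_def]
  group

def Int.unitsLift {M : Type*} [Monoid M] (μ : M) (hμ : μ * μ = 1) : ℤˣ →* M where
  toFun s := if s = 1 then 1 else μ
  map_one' := if_pos rfl
  map_mul' s t := by
    rcases Int.units_eq_one_or s with rfl | rfl <;> rcases Int.units_eq_one_or t with rfl | rfl <;>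
      simp [hμ]

@[simp] lemma Int.unitsLift_neg_one {M : Type*} [Monoid M] (μ : M) (hμ : μ * μ = 1) :
    Int.unitsLift μ hμ (-1) = μ :=
  if_neg (t := 1) (show (-1 : ℤˣ) ≠ 1 by decide)

lemma Subgroup.conj_mem_centralizer_conj {G : Type*} [Group G] {a b : G} (hab : a * b = b * a)
    (k : G) : k⁻¹ * a * k ∈ Subgroup.centralizer {k⁻¹ * b * k} := by
  rw [Subgroup.mem_centralizer_singleton_iff]
  simp only [mul_assoc, mul_inv_cancel_left]
  rw [← mul_assoc a, hab, mul_assoc]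

namespace Hyperoctahedral

variable {n : ℕ}

def pairSwap (n : ℕ) : Perm (Fin (2 * n)) :=
  Function.Involutive.toPerm (fun x => ⟨2 * (x / 2) + (x % 2 + 1) % 2, by omega⟩)
    fun x => by ext; dsimp only; omega

lemma pairSwap_val (x : Fin (2 * n)) :
    (pairSwap n x : ℕ) = 2 * (x / 2) + (x % 2 + 1) % 2 := rfl

lemma pairSwap_sq : pairSwap n ^ 2 = 1 := by
  ext x; simp only [sq, Perm.mul_apply, pairSwap_val, Perm.one_apply]; omega

lemma pairSwap_apply_ne (x : Fin (2 * n)) : pairSwap n x ≠ x := by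
  intro h; have := congrArg Fin.val h; rw [pairSwap_val] at this; omega

abbrev hyperoctahedral (n : ℕ) : Subgroup (Perm (Fin (2 * n))) :=
  Subgroup.centralizer {pairSwap n}

lemma apply_pairSwap_of_mem {c : Perm (Fin (2 * n))} (hc : c ∈ hyperoctahedral n)
    (x : Fin (2 * n)) : c (pairSwap n x) = pairSwap n (c x) := by
  rw [← Perm.mul_apply, ← Perm.mul_apply, Subgroup.mem_centralizer_singleton_iff.mp hc]

def block (x : Fin (2 * n)) : Fin n := ⟨x / 2, by omega⟩

def blockStart (i : Fin n) : Fin (2 * n) := ⟨2 * i, by omega⟩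

@[simp] lemma block_blockStart (i : Fin n) : block (blockStart i) = i := by
  ext; simp only [block, blockStart]; omega

lemma block_pairSwap (x : Fin (2 * n)) : block (pairSwap n x) = block x := by
  ext; simp only [block, pairSwap_val]; omega

lemma blockStart_block (x : Fin (2 * n)) :
    blockStart (block x) = x ∨ blockStart (block x) = pairSwap n x := by
  simp only [Fin.ext_iff, blockStart, block, pairSwap_val]; omega

lemma block_apply_blockStart_block {c : Perm (Fin (2 * n))} (hc : c ∈ hyperoctahedral n)
    (x : Fin (2 * n)) : block (c (blockStart (block x))) = block (c x) := by
  rcases blockStart_block x with h | h <;> rw [h]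
  rw [apply_pairSwap_of_mem hc, block_pairSwap]

def blockPerm : hyperoctahedral n →* Perm (Fin n) where
  toFun c :=
    { toFun := fun i => block (c.1 (blockStart i))
      invFun := fun i => block (c.1⁻¹ (blockStart i))
      left_inv := fun i => by
        dsimp only
        rw [block_apply_blockStart_block (inv_mem c.2), ← Perm.mul_apply, inv_mul_cancel,
          Perm.one_apply, block_blockStart]
      right_inv := fun i => by
        dsimp only
        rw [block_apply_blockStart_block c.2, ← Perm.mul_apply, mul_inv_cancel,
          Perm.one_apply, block_blockStart] }
  map_one' := by ext i; simp
  map_mul' c d := by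
    ext i
    exact congrArg Fin.val (block_apply_blockStart_block c.2 (d.1 (blockStart i))).symm

lemma blockPerm_apply_block (c : hyperoctahedral n) (x : Fin (2 * n)) :
    blockPerm c (block x) = block (c.1 x) :=
  block_apply_blockStart_block c.2 x

lemma eq_or_eq_pairSwap_of_block_eq {x y : Fin (2 * n)} (h : block y = block x) :
    y = x ∨ y = pairSwap n x := by
  simp only [Fin.ext_iff, block, pairSwap_val] at h ⊢; omega

lemma card_filter_block_mem (s : Finset (Fin n)) :
    #{x : Fin (2 * n) | block x ∈ s} = 2 * #s := by
  let e : Fin n × Fin 2 ≃ Fin (2 * n) := finProdFinEquiv.trans (finCongr (mul_comm n 2))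
  have : ({x | block x ∈ s} : Finset (Fin (2 * n))) = (s ×ˢ univ).map e.toEmbedding := by
    ext x
    rw [Finset.mem_map_equiv, mem_filter, mem_product]
    have : (e.symm x).1 = block x := Fin.ext (by simp [e, block, Fin.divNat])
    simp [this]
  rw [this, card_map, card_product, card_univ, Fintype.card_fin, mul_comm]

lemma support_mul_pairSwap {c : hyperoctahedral n} (hsq : c.1 ^ 2 = 1)
    (hfix : ∀ x, c.1 x ≠ x) :
    (c.1 * pairSwap n).support = ({x | block x ∈ (blockPerm c).support} : Finset _) := by
  ext x
  simp only [Perm.mem_support, mem_filter, mem_univ, true_and, blockPerm_apply_block,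
    Perm.mul_apply, ne_eq, not_iff_not]
  constructor
  · intro h
    rw [← block_pairSwap, ← apply_pairSwap_of_mem c.2, h]
  · intro h
    have hcc : c.1 (c.1 x) = x := by rw [← Perm.mul_apply, ← sq, hsq, Perm.one_apply]
    rcases eq_or_eq_pairSwap_of_block_eq h with h' | h'
    · exact absurd h' (hfix x)
    · rw [← h', hcc]

lemma sign_blockPerm {c : hyperoctahedral n} (hsq : c.1 ^ 2 = 1) (hfix : ∀ x, c.1 x ≠ x) :
    Perm.sign (blockPerm c) = (-1) ^ (#(c.1 * pairSwap n).support / 4) := by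
  have hsq' : blockPerm c ^ 2 = 1 := by
    rw [← map_pow, show c ^ 2 = 1 from Subtype.ext hsq, map_one]
  rw [Perm.sign_eq_neg_one_pow_card_support_div_two hsq', support_mul_pairSwap hsq hfix,
    card_filter_block_mem]
  congr 1; omega

lemma conj_pairSwap_sq (k : Perm (Fin (2 * n))) : (k⁻¹ * pairSwap n * k) ^ 2 = 1 := by
  rw [sq, show k⁻¹ * pairSwap n * k * (k⁻¹ * pairSwap n * k) = k⁻¹ * pairSwap n ^ 2 * k by
    rw [sq]; group, pairSwap_sq, mul_one, inv_mul_cancel]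

lemma conj_pairSwap_apply_ne (k : Perm (Fin (2 * n))) (x : Fin (2 * n)) :
    (k⁻¹ * pairSwap n * k) x ≠ x := by
  rw [Perm.mul_apply, Perm.mul_apply, Ne, Perm.inv_eq_iff_eq]
  exact pairSwap_apply_ne (k x)

section hyperChar

variable (μ : ℂˣ) (hμ : μ * μ = 1)

def hyperChar : hyperoctahedral n →* ℂˣ :=
  (Int.unitsLift (-1) (by simp)).comp (Perm.sign.comp (hyperoctahedral n).subtype) *
    (Int.unitsLift μ hμ).comp (Perm.sign.comp blockPerm)

lemma hyperChar_apply (c : hyperoctahedral n) :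
    hyperChar μ hμ c =
      Int.unitsLift (-1) (by simp) (Perm.sign c.1) *
        Int.unitsLift μ hμ (Perm.sign (blockPerm c)) :=
  rfl

lemma hyperChar_of_swap_within_block {a : Perm (Fin (2 * n))} {i : ℕ} (hi : i < n)
    (ha : ∀ x : Fin (2 * n),
      (a x : ℕ) = if (x : ℕ) / 2 = i then 2 * i + ((x : ℕ) % 2 + 1) % 2 else (x : ℕ))
    (hc : a ∈ hyperoctahedral n) : hyperChar μ hμ ⟨a, hc⟩ = -1 := by
  have hsign : Perm.sign a = -1 := by
    have hswap : a = swap ⟨2 * i, by omega⟩ ⟨2 * i + 1, by omega⟩ := by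
      ext x
      rw [ha, swap_apply_def]
      split_ifs <;> simp_all [Fin.ext_iff] <;> omega
    rw [hswap, Perm.sign_swap (by simp [Fin.ext_iff])]
  have hblock : blockPerm ⟨a, hc⟩ = 1 := by
    ext k
    have := ha (blockStart k)
    rw [show (blockStart k : ℕ) = 2 * k from rfl] at this
    show (a (blockStart k) : ℕ) / 2 = k
    split_ifs at this <;> omega
  simp [hyperChar_apply, hsign, hblock]

lemma hyperChar_of_swap_adjacent_blocks {b : Perm (Fin (2 * n))} {j : ℕ} (hj : j + 1 < n)
    (hb : ∀ x : Fin (2 * n),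
      (b x : ℕ) = if (x : ℕ) / 2 = j then (x : ℕ) + 2
        else if (x : ℕ) / 2 = j + 1 then (x : ℕ) - 2 else (x : ℕ))
    (hc : b ∈ hyperoctahedral n) : hyperChar μ hμ ⟨b, hc⟩ = μ := by
  have hsign : Perm.sign b = 1 := by
    have hswap : b = swap ⟨2 * j, by omega⟩ ⟨2 * j + 2, by omega⟩ *
        swap ⟨2 * j + 1, by omega⟩ ⟨2 * j + 3, by omega⟩ := by
      ext x
      rw [hb, Perm.mul_apply, swap_apply_def, swap_apply_def]
      split_ifs <;> simp_all [Fin.ext_iff] <;> omega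
    rw [hswap, map_mul, Perm.sign_swap (by simp [Fin.ext_iff]),
      Perm.sign_swap (by simp [Fin.ext_iff]), Int.units_mul_self]
  have hblock : blockPerm ⟨b, hc⟩ = swap ⟨j, by omega⟩ ⟨j + 1, hj⟩ := by
    ext k
    have := hb (blockStart k)
    rw [show (blockStart k : ℕ) = 2 * k from rfl] at this
    show (b (blockStart k) : ℕ) / 2 = _
    rw [swap_apply_def]
    split_ifs at this ⊢ <;> simp_all [Fin.ext_iff]; omega
  have hne : (⟨j, by omega⟩ : Fin n) ≠ ⟨j + 1, hj⟩ := by simp [Fin.ext_iff]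
  simp [hyperChar_apply, hsign, hblock, Perm.sign_swap hne]

lemma eq_hyperChar_of_generators (A B : ℕ → Perm (Fin (2 * n)))
    (hA : ∀ i < n, ∀ x : Fin (2 * n),
      (A i x : ℕ) = if (x : ℕ) / 2 = i then 2 * i + ((x : ℕ) % 2 + 1) % 2 else (x : ℕ))
    (hB : ∀ j, j + 1 < n → ∀ x : Fin (2 * n),
      (B j x : ℕ) = if (x : ℕ) / 2 = j then (x : ℕ) + 2
        else if (x : ℕ) / 2 = j + 1 then (x : ℕ) - 2 else (x : ℕ))
    (hgen : hyperoctahedral n = Subgroup.closure (A '' {i | i < n} ∪ B '' {j | j + 1 < n}))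
    (ρ : hyperoctahedral n →* ℂˣ)
    (hρA : ∀ i (_ : i < n) (h : A i ∈ hyperoctahedral n), ρ ⟨A i, h⟩ = -1)
    (hρB : ∀ j (_ : j + 1 < n) (h : B j ∈ hyperoctahedral n), ρ ⟨B j, h⟩ = μ) :
    ρ = hyperChar μ hμ := by
  refine MonoidHom.eq_of_eqOn_dense (hgen ▸ Subgroup.closure_preimage_eq_top _) ?_
  rintro ⟨c, hc⟩ (⟨i, hi, rfl⟩ | ⟨j, hj, rfl⟩)
  · rw [hρA i hi hc, hyperChar_of_swap_within_block μ hμ hi (hA i hi) hc]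
  · rw [hρB j hj hc, hyperChar_of_swap_adjacent_blocks μ hμ hj (hB j hj) hc]

lemma hyperChar_pairSwap (hn : Odd n) {c : hyperoctahedral n}
    (hc : c.1 = pairSwap n) : hyperChar μ hμ c = -1 := by
  have hsupport : (pairSwap n).support = univ := by
    ext x; simp [pairSwap_apply_ne]
  have hsign : Perm.sign c.1 = -1 := by
    rw [hc, Perm.sign_eq_neg_one_pow_card_support_div_two pairSwap_sq, hsupport, card_univ,
      Fintype.card_fin, Nat.mul_div_cancel_left n two_pos, hn.neg_one_pow]
  have hblock : blockPerm c = 1 := by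
    ext i
    rw [← block_blockStart i, blockPerm_apply_block, hc, block_pairSwap]
    rfl
  simp [hyperChar_apply, hsign, hblock]

lemma hyperChar_mul_hyperChar_of_conj (h : Perm (Fin (2 * n)))
    {σ τ : hyperoctahedral n} (hσ : σ.1 = h⁻¹ * pairSwap n * h)
    (hτ : τ.1 = h * pairSwap n * h⁻¹) : hyperChar μ hμ σ * hyperChar μ hμ τ = 1 := by
  have hτ' : τ.1 = h⁻¹⁻¹ * pairSwap n * h⁻¹ := by rw [hτ, inv_inv]
  have hsign : Perm.sign σ.1 = Perm.sign τ.1 := by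
    simp only [hσ, hτ, map_mul, map_inv, mul_right_comm _ (Perm.sign (pairSwap n)),
      inv_mul_cancel, mul_inv_cancel]
  have hcard : #(σ.1 * pairSwap n).support = #(τ.1 * pairSwap n).support := by
    have hinv : (pairSwap n)⁻¹ = pairSwap n :=
      inv_eq_of_mul_eq_one_left (by rw [← sq, pairSwap_sq])
    simpa only [commutatorElement_def, inv_inv, hσ, hτ, hinv] using
      Perm.card_support_commutatorElement_inv_left h (pairSwap n)
  have hblock : Perm.sign (blockPerm σ) = Perm.sign (blockPerm τ) := by
    rw [sign_blockPerm (hσ ▸ conj_pairSwap_sq h) (hσ ▸ conj_pairSwap_apply_ne h),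
      sign_blockPerm (hτ' ▸ conj_pairSwap_sq h⁻¹) (hτ' ▸ conj_pairSwap_apply_ne h⁻¹),
      hcard]
  rw [hyperChar_apply, hyperChar_apply, hsign, hblock, mul_mul_mul_comm,
    ← map_mul (Int.unitsLift _ _), ← map_mul (Int.unitsLift μ hμ), Int.units_mul_self,
    Int.units_mul_self, map_one, map_one, mul_one]

end hyperChar

end Hyperoctahedral

open Hyperoctahedral

theorem stmt4_general (n : ℕ) (hodd : Odd n)
    (A : ℕ → Equiv.Perm (Fin (2 * n)))
    (hA : ∀ i < n, ∀ x : Fin (2 * n),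
      ((A i x : ℕ)) = if (x : ℕ) / 2 = i then 2 * i + ((x : ℕ) % 2 + 1) % 2 else (x : ℕ))
    (π : Equiv.Perm (Fin (2 * n)))
    (hπ : ∀ x : Fin (2 * n),
      ((π x : ℕ)) = 2 * ((x : ℕ) / 2) + ((x : ℕ) % 2 + 1) % 2)
    (B : ℕ → Equiv.Perm (Fin (2 * n)))
    (hB : ∀ j, j + 1 < n → ∀ x : Fin (2 * n),
      ((B j x : ℕ)) = if (x : ℕ) / 2 = j then (x : ℕ) + 2
        else if (x : ℕ) / 2 = j + 1 then (x : ℕ) - 2 else (x : ℕ))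
    (hgen : Subgroup.centralizer {π} =
      Subgroup.closure (A '' {i | i < n} ∪ B '' {j | j + 1 < n}))
    (μ : ℂˣ) (hμ : μ = 1 ∨ μ = -1)
    (ρ : ↥(Subgroup.centralizer {π}) →* ℂˣ)
    (hρA : ∀ i (_ : i < n) (h : A i ∈ Subgroup.centralizer {π}), ρ ⟨A i, h⟩ = -1)
    (hρB : ∀ j (_ : j + 1 < n) (h : B j ∈ Subgroup.centralizer {π}), ρ ⟨B j, h⟩ = μ)
    (t t' : Equiv.Perm (Fin (2 * n))) (hcomm : t * t' = t' * t)
    (g g' : Equiv.Perm (Fin (2 * n))) (hg : g * π * g⁻¹ = t) (hg' : g' * π * g'⁻¹ = t') :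
    g'⁻¹ * t * g' ∈ Subgroup.centralizer {π} ∧
    g⁻¹ * t' * g ∈ Subgroup.centralizer {π} ∧
    (∀ h : g⁻¹ * t * g ∈ Subgroup.centralizer {π}, ρ ⟨g⁻¹ * t * g, h⟩ = -1) ∧
    (∀ (h1 : g'⁻¹ * t * g' ∈ Subgroup.centralizer {π})
       (h2 : g⁻¹ * t' * g ∈ Subgroup.centralizer {π}),
      ρ ⟨g'⁻¹ * t * g', h1⟩ * ρ ⟨g⁻¹ * t' * g, h2⟩ = 1) := by
  obtain rfl : π = pairSwap n := Equiv.ext fun x => Fin.ext (hπ x)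
  have hμ2 : μ * μ = 1 := by rcases hμ with rfl | rfl <;> simp
  obtain rfl := eq_hyperChar_of_generators μ hμ2 A B hA hB hgen ρ hρA hρB
  subst hg hg'
  have ht : g⁻¹ * (g * pairSwap n * g⁻¹) * g = pairSwap n := by group
  have ht' : g'⁻¹ * (g' * pairSwap n * g'⁻¹) * g' = pairSwap n := by group
  exact ⟨by simpa only [ht'] using Subgroup.conj_mem_centralizer_conj hcomm g',
    by simpa only [ht] using Subgroup.conj_mem_centralizer_conj hcomm.symm g,
    fun _ => hyperChar_pairSwap μ hμ2 hodd ht,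
    fun _ _ => hyperChar_mul_hyperChar_of_conj μ hμ2 (g⁻¹ * g') (by group) (by group)⟩

/-- Let `n > 1` be odd.  In `S_{2n}` (on `Fin (2*n)`, `0`-indexed),
set `A i = (2i, 2i+1)` for `0 ≤ i < n`, `π = A_0 ⋯ A_{n-1}`, and
`B j = (2j, 2j+2)(2j+1, 2j+3)` for `0 ≤ j < n-1`, so that the centralizer of `π` in
`S_{2n}` is generated by the `A i`'s and `B j`'s.  Let `μ ∈ {1,-1}` and let `ρ` be a
homomorphism from the centralizer of `π` to `ℂˣ` with `ρ(A i) = -1` and `ρ(B j) = μ`.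
Then for all commuting `t, t'` in the conjugacy class of `π` and all `g, g'` with
`g π g⁻¹ = t`, `g' π g'⁻¹ = t'`, the elements `g'⁻¹ t g'` and `g⁻¹ t' g` lie in
the centralizer of `π`, `ρ(g⁻¹ t g) = -1` and `ρ(g'⁻¹ t g') · ρ(g⁻¹ t' g) = 1`:
the braided vector space associated to `χ_{(n)} ⊗ ε` or `χ_{(n)} ⊗ sgn` is negative. -/
theorem stmt4 (n : ℕ) (hn : 1 < n) (hodd : Odd n)
    (A : ℕ → Equiv.Perm (Fin (2 * n)))
    (hA : ∀ i < n, ∀ x : Fin (2 * n),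
      ((A i x : ℕ)) = if (x : ℕ) / 2 = i then 2 * i + ((x : ℕ) % 2 + 1) % 2 else (x : ℕ))
    (π : Equiv.Perm (Fin (2 * n)))
    (hπ : ∀ x : Fin (2 * n),
      ((π x : ℕ)) = 2 * ((x : ℕ) / 2) + ((x : ℕ) % 2 + 1) % 2)
    (B : ℕ → Equiv.Perm (Fin (2 * n)))
    (hB : ∀ j, j + 1 < n → ∀ x : Fin (2 * n),
      ((B j x : ℕ)) = if (x : ℕ) / 2 = j then (x : ℕ) + 2
        else if (x : ℕ) / 2 = j + 1 then (x : ℕ) - 2 else (x : ℕ))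
    (hgen : Subgroup.centralizer {π} =
      Subgroup.closure (A '' {i | i < n} ∪ B '' {j | j + 1 < n}))
    (μ : ℂˣ) (hμ : μ = 1 ∨ μ = -1)
    (ρ : ↥(Subgroup.centralizer {π}) →* ℂˣ)
    (hρA : ∀ i (_ : i < n) (h : A i ∈ Subgroup.centralizer {π}), ρ ⟨A i, h⟩ = -1)
    (hρB : ∀ j (_ : j + 1 < n) (h : B j ∈ Subgroup.centralizer {π}), ρ ⟨B j, h⟩ = μ)
    (t t' : Equiv.Perm (Fin (2 * n))) (hcomm : t * t' = t' * t)
    (g g' : Equiv.Perm (Fin (2 * n))) (hg : g * π * g⁻¹ = t) (hg' : g' * π * g'⁻¹ = t') :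
    g'⁻¹ * t * g' ∈ Subgroup.centralizer {π} ∧
    g⁻¹ * t' * g ∈ Subgroup.centralizer {π} ∧
    (∀ h : g⁻¹ * t * g ∈ Subgroup.centralizer {π}, ρ ⟨g⁻¹ * t * g, h⟩ = -1) ∧
    (∀ (h1 : g'⁻¹ * t * g' ∈ Subgroup.centralizer {π})
       (h2 : g⁻¹ * t' * g ∈ Subgroup.centralizer {π}),
      ρ ⟨g'⁻¹ * t * g', h1⟩ * ρ ⟨g⁻¹ * t' * g, h2⟩ = 1) :=
  stmt4_general n hodd A hA π hπ B hB hgen μ hμ ρ hρA hρB t t' hcomm g g' hg hg'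
end

section
/- Let n = 2L with L ≥ 1. In S_{2n}, set A_i = (2i-1, 2i) for 1 ≤ i ≤ n and π = A_1⋯A_n = (1 2)(3 4)⋯(2n-1 2n). For 1 ≤ l ≤ L set σ_l^+ = (4l-2, 4l-1) and σ_l^- = (4l-2, 4l), and let T = {π} ∪ { (σ_{l_k}^{ε_k} ⋯ σ_{l_1}^{ε_1}) π (σ_{l_k}^{ε_k} ⋯ σ_{l_1}^{ε_1})⁻¹ : 1 ≤ k ≤ L, 1 ≤ l_1 < ⋯ < l_k ≤ L, ε_1,…,ε_k ∈ {+,-} }. Then: (i) every element of T lies in the conjugacy class of π and commutes with π; (ii) for every x ∈ T and every σ that is a product σ_{h_M}^{±}⋯σ_{h_1}^{±} with 1 ≤ h_1 < ⋯ < h_M ≤ L, the conjugate σ x σ⁻¹ again lies in T; and (iii) any two elements of T commute with each other. -/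
open Equiv

section Aux
variable {α : Type*} [DecidableEq α]

lemma swapCommute {a b c d : α} (h1 : a ≠ c) (h2 : a ≠ d) (h3 : b ≠ c) (h4 : b ≠ d) :
    Commute (Equiv.swap a b) (Equiv.swap c d) := by
  apply Equiv.Perm.Disjoint.commute
  intro x
  by_cases hc : x = c
  · subst hc; left; exact Equiv.swap_apply_of_ne_of_ne (Ne.symm h1) (Ne.symm h3)
  · by_cases hd : x = d
    · subst hd; left; exact Equiv.swap_apply_of_ne_of_ne (Ne.symm h2) (Ne.symm h4)
    · right; exact Equiv.swap_apply_of_ne_of_ne hc hd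

lemma klein1 {a b c e : α} (hab : a ≠ b) (hac : a ≠ c) (hae : a ≠ e) (hbc : b ≠ c)
    (hbe : b ≠ e) (hce : c ≠ e) :
    Commute (Equiv.swap b c * Equiv.swap a e) (Equiv.swap b e * Equiv.swap a c) := by
  unfold Commute SemiconjBy
  have hba := hab.symm; have hca := hac.symm; have hea := hae.symm
  have hcb := hbc.symm; have heb := hbe.symm; have hec := hce.symm
  ext x
  by_cases hxa : x = a <;> by_cases hxb : x = b <;> by_cases hxc : x = c <;> by_cases hxe : x = e <;>
    simp_all [Equiv.Perm.mul_apply, Equiv.swap_apply_def]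

lemma klein2 {a b c e : α} (hab : a ≠ b) (hac : a ≠ c) (hae : a ≠ e) (hbc : b ≠ c)
    (hbe : b ≠ e) (hce : c ≠ e) :
    Equiv.swap b e * (Equiv.swap b c * Equiv.swap a e) * Equiv.swap b e =
      (Equiv.swap b c * Equiv.swap a e) * (Equiv.swap b e * Equiv.swap a c) := by
  have hba := hab.symm; have hca := hac.symm; have hea := hae.symm
  have hcb := hbc.symm; have heb := hbe.symm; have hec := hce.symm
  ext x
  by_cases hxa : x = a <;> by_cases hxb : x = b <;> by_cases hxc : x = c <;> by_cases hxe : x = e <;>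
    simp_all [Equiv.Perm.mul_apply, Equiv.swap_apply_def]

lemma klein3 {a b c e : α} (hab : a ≠ b) (hac : a ≠ c) (hae : a ≠ e) (hbc : b ≠ c)
    (hbe : b ≠ e) (hce : c ≠ e) :
    Equiv.swap b c * (Equiv.swap b e * Equiv.swap a c) * Equiv.swap b c =
      (Equiv.swap b e * Equiv.swap a c) * (Equiv.swap b c * Equiv.swap a e) := by
  have hba := hab.symm; have hca := hac.symm; have hea := hae.symm
  have hcb := hbc.symm; have heb := hbe.symm; have hec := hce.symm
  ext x
  by_cases hxa : x = a <;> by_cases hxb : x = b <;> by_cases hxc : x = c <;> by_cases hxe : x = e <;>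
    simp_all [Equiv.Perm.mul_apply, Equiv.swap_apply_def]

lemma commute_swaps4 {a b a' b' : α} (h : ∀ x y : α, (x = a ∨ x = b) → (y = a' ∨ y = b') → x ≠ y) :
    Commute (Equiv.swap a b) (Equiv.swap a' b') :=
  swapCommute (h a a' (Or.inl rfl) (Or.inl rfl)) (h a b' (Or.inl rfl) (Or.inr rfl))
    (h b a' (Or.inr rfl) (Or.inl rfl)) (h b b' (Or.inr rfl) (Or.inr rfl))

lemma sq_swapswap {a b c d : α} (h1 : a ≠ c) (h2 : a ≠ d) (h3 : b ≠ c) (h4 : b ≠ d) :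
    (Equiv.swap a b * Equiv.swap c d) * (Equiv.swap a b * Equiv.swap c d) = 1 := by
  have h := swapCommute h1 h2 h3 h4
  rw [mul_assoc, ← mul_assoc (Equiv.swap c d), ← h.eq, mul_assoc, Equiv.swap_mul_self, mul_one,
    Equiv.swap_mul_self]

lemma conj_fix {G : Type*} [Group G] {s t : G} (hs : s * s = 1) (h : Commute s t) :
    s * (s * t) * s⁻¹ = s * t := by
  have hinv : s⁻¹ = s := inv_eq_of_mul_eq_one_right hs
  rw [hinv, ← mul_assoc s s t, hs, one_mul, ← h.eq]

end Aux

/-- Let `n = 2L`, `L ≥ 1`.  In `S_{2n}` (on `Fin (2*(2*L))`,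
`0`-indexed), let `π = (0 1)(2 3)⋯(2n-2 2n-1)`.  For `0 ≤ l < L` set
`σ_l^+ = (4l+1, 4l+2)` and `σ_l^- = (4l+1, 4l+3)` (these are the `1`-indexed
transpositions `(4l-2, 4l-1)` and `(4l-2, 4l)` of the paper), encoded as
`σ l true` and `σ l false`.  Let
`T = {π} ∪ { s π s⁻¹ : s = σ_{l_k}^{ε_k} ⋯ σ_{l_1}^{ε_1}, 1 ≤ k ≤ L, l_1 < ⋯ < l_k < L }`.
Then: (i) every element of `T` lies in the conjugacy class of `π` and commutes with
`π`; (ii) `T` is stable under conjugation by any product `σ_{h_M}^± ⋯ σ_{h_1}^±` with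
strictly increasing `h`'s; (iii) any two elements of `T` commute. -/
theorem stmt6 (L : ℕ) (hL : 1 ≤ L)
    (π : Equiv.Perm (Fin (2 * (2 * L))))
    (hπ : ∀ x : Fin (2 * (2 * L)),
      ((π x : ℕ)) = 2 * ((x : ℕ) / 2) + ((x : ℕ) % 2 + 1) % 2)
    (σ : ℕ → Bool → Equiv.Perm (Fin (2 * (2 * L))))
    (hσ : ∀ l (hl : l < L),
      σ l true = Equiv.swap ⟨4 * l + 1, by omega⟩ ⟨4 * l + 2, by omega⟩ ∧
      σ l false = Equiv.swap ⟨4 * l + 1, by omega⟩ ⟨4 * l + 3, by omega⟩)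
    (T : Set (Equiv.Perm (Fin (2 * (2 * L)))))
    (hT : T = insert π
      {x | ∃ (m : ℕ) (_ : 1 ≤ m) (_ : m ≤ L) (l : Fin m → ℕ) (ε : Fin m → Bool),
        StrictMono l ∧ (∀ i, l i < L) ∧
        x = (List.ofFn fun i : Fin m => σ (l i) (ε i)).prod * π *
          ((List.ofFn fun i : Fin m => σ (l i) (ε i)).prod)⁻¹}) :
    (∀ x ∈ T, IsConj π x ∧ Commute π x) ∧
    (∀ x ∈ T, ∀ (M : ℕ), 1 ≤ M → ∀ (h : Fin M → ℕ) (ε : Fin M → Bool),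
      StrictMono h → (∀ i, h i < L) →
      (List.ofFn fun i : Fin M => σ (h i) (ε i)).prod * x *
        ((List.ofFn fun i : Fin M => σ (h i) (ε i)).prod)⁻¹ ∈ T) ∧
    (∀ x ∈ T, ∀ y ∈ T, Commute x y) := by
  subst hT
  -- basic facts about π
  have hπ2 : π * π = 1 := by
    ext x
    have h1 := hπ x
    have h2 := hπ (π x)
    simp only [Equiv.Perm.mul_apply, Equiv.Perm.one_apply]
    omega
  have hπinv : π⁻¹ = π := inv_eq_of_mul_eq_one_right hπ2
  have hπa : ∀ l (hl : l < L), π ⟨4 * l, by omega⟩ = ⟨4 * l + 1, by omega⟩ := by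
    intro l hl
    have h1 := hπ ⟨4 * l, by omega⟩
    simp only [Fin.val_mk] at h1
    apply Fin.ext
    simp only [Fin.val_mk]
    omega
  have hπb : ∀ l (hl : l < L), π ⟨4 * l + 1, by omega⟩ = ⟨4 * l, by omega⟩ := by
    intro l hl
    have h1 := hπ ⟨4 * l + 1, by omega⟩
    simp only [Fin.val_mk] at h1
    apply Fin.ext
    simp only [Fin.val_mk]
    omega
  have hπc : ∀ l (hl : l < L), π ⟨4 * l + 2, by omega⟩ = ⟨4 * l + 3, by omega⟩ := by
    intro l hl
    have h1 := hπ ⟨4 * l + 2, by omega⟩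
    simp only [Fin.val_mk] at h1
    apply Fin.ext
    simp only [Fin.val_mk]
    omega
  have hπe : ∀ l (hl : l < L), π ⟨4 * l + 3, by omega⟩ = ⟨4 * l + 2, by omega⟩ := by
    intro l hl
    have h1 := hπ ⟨4 * l + 3, by omega⟩
    simp only [Fin.val_mk] at h1
    apply Fin.ext
    simp only [Fin.val_mk]
    omega
  have hconj : ∀ u v : Fin (2 * (2 * L)), π * Equiv.swap u v * π⁻¹ = Equiv.swap (π u) (π v) :=
    fun u v => (Equiv.swap_apply_apply π u v).symm
  obtain ⟨d, hd⟩ : ∃ d : ℕ → Bool → Equiv.Perm (Fin (2 * (2 * L))),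
      ∀ l ε, d l ε = σ l ε * π * (σ l ε)⁻¹ * π⁻¹ := ⟨_, fun _ _ => rfl⟩
  have hdt : ∀ l (hl : l < L), d l true =
      Equiv.swap (⟨4 * l + 1, by omega⟩ : Fin (2 * (2 * L))) ⟨4 * l + 2, by omega⟩ *
        Equiv.swap (⟨4 * l, by omega⟩ : Fin (2 * (2 * L))) ⟨4 * l + 3, by omega⟩ := by
    intro l hl
    rw [hd, (hσ l hl).1, Equiv.swap_inv, mul_assoc, mul_assoc, ← mul_assoc π, hconj,
      hπb l hl, hπc l hl, Equiv.swap_comm]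
  have hdf : ∀ l (hl : l < L), d l false =
      Equiv.swap (⟨4 * l + 1, by omega⟩ : Fin (2 * (2 * L))) ⟨4 * l + 3, by omega⟩ *
        Equiv.swap (⟨4 * l, by omega⟩ : Fin (2 * (2 * L))) ⟨4 * l + 2, by omega⟩ := by
    intro l hl
    rw [hd, (hσ l hl).2, Equiv.swap_inv, mul_assoc, mul_assoc, ← mul_assoc π, hconj,
      hπb l hl, hπe l hl, Equiv.swap_comm]
  have mkne : ∀ {p q : ℕ} {hp' : p < 2 * (2 * L)} {hq' : q < 2 * (2 * L)}, p ≠ q →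
      (⟨p, hp'⟩ : Fin (2 * (2 * L))) ≠ ⟨q, hq'⟩ := fun h => Fin.ne_of_val_ne h
  have comm_of_conj : ∀ x y : Equiv.Perm (Fin (2 * (2 * L))), x * y * x⁻¹ = y → Commute x y :=
    fun x y hh => mul_inv_eq_iff_eq_mul.mp hh
  have expand : ∀ x y : Equiv.Perm (Fin (2 * (2 * L))),
      π * (x * y) * π⁻¹ = (π * x * π⁻¹) * (π * y * π⁻¹) := by intro x y; group
  -- C1 : π commutes with each d
  have hC1 : ∀ b (hb : b < L) ε, Commute π (d b ε) := by
    intro b hb ε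
    apply comm_of_conj
    cases ε
    · rw [hdf b hb, expand, hconj, hconj, hπb b hb, hπe b hb, hπa b hb, hπc b hb]
      exact ((swapCommute (mkne (by omega)) (mkne (by omega)) (mkne (by omega))
        (mkne (by omega))).eq)
    · rw [hdt b hb, expand, hconj, hconj, hπb b hb, hπc b hb, hπa b hb, hπe b hb]
      exact ((swapCommute (mkne (by omega)) (mkne (by omega)) (mkne (by omega))
        (mkne (by omega))).eq)
  -- C2 : the d's pairwise commute
  have hC2 : ∀ b b', b < L → b' < L → ∀ ε ε', Commute (d b ε) (d b' ε') := by
    intro b b' hb hb' ε ε'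
    rcases eq_or_ne b b' with rfl | hne
    · cases ε <;> cases ε'
      · exact Commute.refl _
      · rw [hdf b hb, hdt b hb]
        exact (klein1 (mkne (by omega)) (mkne (by omega)) (mkne (by omega)) (mkne (by omega))
          (mkne (by omega)) (mkne (by omega))).symm
      · rw [hdt b hb, hdf b hb]
        exact klein1 (mkne (by omega)) (mkne (by omega)) (mkne (by omega)) (mkne (by omega))
          (mkne (by omega)) (mkne (by omega))
      · exact Commute.refl _
    · cases ε <;> cases ε'
      · rw [hdf b hb, hdf b' hb']
        refine Commute.mul_left ?_ ?_ <;> refine Commute.mul_right ?_ ?_ <;>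
          refine swapCommute ?_ ?_ ?_ ?_ <;> exact mkne (by omega)
      · rw [hdf b hb, hdt b' hb']
        refine Commute.mul_left ?_ ?_ <;> refine Commute.mul_right ?_ ?_ <;>
          refine swapCommute ?_ ?_ ?_ ?_ <;> exact mkne (by omega)
      · rw [hdt b hb, hdf b' hb']
        refine Commute.mul_left ?_ ?_ <;> refine Commute.mul_right ?_ ?_ <;>
          refine swapCommute ?_ ?_ ?_ ?_ <;> exact mkne (by omega)
      · rw [hdt b hb, hdt b' hb']
        refine Commute.mul_left ?_ ?_ <;> refine Commute.mul_right ?_ ?_ <;>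
          refine swapCommute ?_ ?_ ?_ ?_ <;> exact mkne (by omega)
  -- C3 : σ at block h' commutes with d at a different block b
  have hC3 : ∀ h' b, h' < L → b < L → h' ≠ b → ∀ ε' ε, Commute (σ h' ε') (d b ε) := by
    intro h' b hh hb hne ε' ε
    cases ε' <;> cases ε
    · rw [(hσ h' hh).2, hdf b hb]
      refine Commute.mul_right ?_ ?_ <;> refine swapCommute ?_ ?_ ?_ ?_ <;> exact mkne (by omega)
    · rw [(hσ h' hh).2, hdt b hb]
      refine Commute.mul_right ?_ ?_ <;> refine swapCommute ?_ ?_ ?_ ?_ <;> exact mkne (by omega)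
    · rw [(hσ h' hh).1, hdf b hb]
      refine Commute.mul_right ?_ ?_ <;> refine swapCommute ?_ ?_ ?_ ?_ <;> exact mkne (by omega)
    · rw [(hσ h' hh).1, hdt b hb]
      refine Commute.mul_right ?_ ?_ <;> refine swapCommute ?_ ?_ ?_ ?_ <;> exact mkne (by omega)
  -- C7 : each d is an involution
  have hC7 : ∀ b (hb : b < L) ε, d b ε * d b ε = 1 := by
    intro b hb ε
    cases ε
    · rw [hdf b hb]
      exact sq_swapswap (mkne (by omega)) (mkne (by omega)) (mkne (by omega)) (mkne (by omega))
    · rw [hdt b hb]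
      exact sq_swapswap (mkne (by omega)) (mkne (by omega)) (mkne (by omega)) (mkne (by omega))
  -- C5 : conjugating d by its own σ fixes it
  have hC5 : ∀ b (hb : b < L) ε, σ b ε * d b ε * (σ b ε)⁻¹ = d b ε := by
    intro b hb ε
    cases ε
    · rw [(hσ b hb).2, hdf b hb]
      exact conj_fix (Equiv.swap_mul_self _ _)
        (swapCommute (mkne (by omega)) (mkne (by omega)) (mkne (by omega)) (mkne (by omega)))
    · rw [(hσ b hb).1, hdt b hb]
      exact conj_fix (Equiv.swap_mul_self _ _)
        (swapCommute (mkne (by omega)) (mkne (by omega)) (mkne (by omega)) (mkne (by omega)))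
  -- C6 : conjugating the other d by σ multiplies by its d
  have hC6 : ∀ b (hb : b < L),
      (σ b true * d b false * (σ b true)⁻¹ = d b false * d b true) ∧
      (σ b false * d b true * (σ b false)⁻¹ = d b true * d b false) := by
    intro b hb
    constructor
    · rw [(hσ b hb).1, hdf b hb, hdt b hb, Equiv.swap_inv]
      exact klein3 (mkne (by omega)) (mkne (by omega)) (mkne (by omega)) (mkne (by omega))
        (mkne (by omega)) (mkne (by omega))
    · rw [(hσ b hb).2, hdt b hb, hdf b hb, Equiv.swap_inv]
      exact klein2 (mkne (by omega)) (mkne (by omega)) (mkne (by omega)) (mkne (by omega))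
        (mkne (by omega)) (mkne (by omega))
  have hC4 : ∀ l ε, σ l ε * π * (σ l ε)⁻¹ = d l ε * π := by
    intro l ε; rw [hd]; group
  obtain ⟨dd, hddn, hdds⟩ : ∃ dd : ℕ → Option Bool → Equiv.Perm (Fin (2 * (2 * L))),
      (∀ l, dd l none = 1) ∧ (∀ l ε, dd l (some ε) = d l ε) :=
    ⟨fun l o => o.elim 1 (d l), fun _ => rfl, fun _ _ => rfl⟩
  have hC1dd : ∀ b, b < L → ∀ o, Commute π (dd b o) := by
    intro b hb o
    cases o with
    | none => rw [hddn]; exact Commute.one_right _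
    | some ε => rw [hdds]; exact hC1 b hb ε
  have hC2dd : ∀ b b', b < L → b' < L → ∀ o o', Commute (dd b o) (dd b' o') := by
    intro b b' hb hb' o o'
    cases o with
    | none => rw [hddn]; exact Commute.one_left _
    | some ε =>
      cases o' with
      | none => rw [hddn]; exact Commute.one_right _
      | some ε' => rw [hdds, hdds]; exact hC2 b b' hb hb' ε ε'
  have hC3dd : ∀ h' b, h' < L → b < L → h' ≠ b → ∀ ε' o, Commute (σ h' ε') (dd b o) := by
    intro h' b hh hb hne ε' o
    cases o with
    | none => rw [hddn]; exact Commute.one_right _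
    | some ε => rw [hdds]; exact hC3 h' b hh hb hne ε' ε
  have hcommg : ∀ g : ℕ → Option Bool,
      ((Finset.range L : Finset ℕ) : Set ℕ).Pairwise
        (fun x y => Commute (dd x (g x)) (dd y (g y))) :=
    fun g x hx y hy _ => hC2dd x y (Finset.mem_range.mp hx) (Finset.mem_range.mp hy) _ _
  have hcommg' : ∀ (g : ℕ → Option Bool) (h' : ℕ),
      ((((Finset.range L).erase h') : Finset ℕ) : Set ℕ).Pairwise
        (fun x y => Commute (dd x (g x)) (dd y (g y))) :=
    fun g h' => (hcommg g).mono (Finset.coe_subset.mpr (Finset.erase_subset _ _))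
  obtain ⟨D, hD⟩ : ∃ D : (ℕ → Option Bool) → Equiv.Perm (Fin (2 * (2 * L))),
      ∀ g, D g = (Finset.range L).noncommProd (fun b => dd b (g b)) (hcommg g) :=
    ⟨_, fun _ => rfl⟩
  obtain ⟨P, hP⟩ : ∃ P : (ℕ → Option Bool) → ℕ → Equiv.Perm (Fin (2 * (2 * L))),
      ∀ g h', P g h' =
        ((Finset.range L).erase h').noncommProd (fun b => dd b (g b)) (hcommg' g h') :=
    ⟨_, fun _ _ => rfl⟩
  have hDcongr : ∀ g g', (∀ b, b < L → g b = g' b) → D g = D g' := by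
    intro g g' hgg
    rw [hD, hD]
    exact Finset.noncommProd_congr rfl
      (fun x hx => by rw [hgg x (Finset.mem_range.mp hx)]) (hcommg g)
  have hD1 : ∀ g, (∀ b, b < L → g b = none) → D g = 1 := by
    intro g hg
    rw [hD, Finset.noncommProd_eq_pow_card _ _ _ 1
      (fun x hx => by rw [hg x (Finset.mem_range.mp hx), hddn]), one_pow]
  have hDsplit : ∀ g h', h' < L → D g = dd h' (g h') * P g h' := by
    intro g h' hh
    rw [hD, hP]
    exact (Finset.mul_noncommProd_erase _ (Finset.mem_range.mpr hh) _ (hcommg g)).symm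
  have hPcongr : ∀ g g' h', (∀ b, b < L → b ≠ h' → g b = g' b) → P g h' = P g' h' := by
    intro g g' h' hgg
    rw [hP, hP]
    refine Finset.noncommProd_congr rfl (fun x hx => ?_) (hcommg' g h')
    obtain ⟨hx1, hx2⟩ := Finset.mem_erase.mp hx
    rw [hgg x (Finset.mem_range.mp hx2) hx1]
  have hPcomm : ∀ (g : ℕ → Option Bool) (h' : ℕ) (y : Equiv.Perm (Fin (2 * (2 * L)))),
      (∀ b, b < L → b ≠ h' → Commute y (dd b (g b))) → Commute y (P g h') := by
    intro g h' y hy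
    rw [hP]
    refine Finset.noncommProd_commute _ _ _ _ (fun x hx => ?_)
    obtain ⟨hx1, hx2⟩ := Finset.mem_erase.mp hx
    exact hy x (Finset.mem_range.mp hx2) hx1
  have hDcomm : ∀ (g : ℕ → Option Bool) (y : Equiv.Perm (Fin (2 * (2 * L)))),
      (∀ b, b < L → Commute y (dd b (g b))) → Commute y (D g) := by
    intro g y hy
    rw [hD]
    exact Finset.noncommProd_commute _ _ _ _ (fun x hx => hy x (Finset.mem_range.mp hx))
  -- KL0 : a product of d's over distinct blocks equals a canonical D-product
  have hKL0 : ∀ m (l : Fin m → ℕ) (ε : Fin m → Bool), Function.Injective l → (∀ i, l i < L) →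
      ∀ g : ℕ → Option Bool, (∀ i, g (l i) = some (ε i)) → (∀ b, (∀ i, l i ≠ b) → g b = none) →
      (List.ofFn fun i => d (l i) (ε i)).prod = D g := by
    intro m
    induction m with
    | zero =>
      intro l ε _ _ g hg1 hg2
      rw [List.ofFn_zero, List.prod_nil, hD1 g (fun b _ => hg2 b (fun i => i.elim0))]
    | succ m ih =>
      intro l ε hinj hlt g hg1 hg2
      rw [List.ofFn_succ, List.prod_cons]
      have h0L : l 0 < L := hlt 0
      have hne0 : ∀ i : Fin m, l i.succ ≠ l 0 := fun i h => (Fin.succ_ne_zero i) (hinj h)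
      have hall : ∀ b, (∀ i : Fin m, l i.succ ≠ b) → b ≠ l 0 → g b = none := by
        intro b hb hb0
        apply hg2 b
        intro i
        induction i using Fin.cases with
        | zero => exact fun hh => hb0 hh.symm
        | succ j => exact hb j
      have htail : (List.ofFn fun i : Fin m => d (l i.succ) (ε i.succ)).prod =
          D (Function.update g (l 0) none) := by
        apply ih (fun i => l i.succ) (fun i => ε i.succ)
          (fun i j hij => Fin.succ_injective _ (hinj hij)) (fun i => hlt i.succ)
        · intro i
          rw [Function.update_of_ne (hne0 i), hg1]
        · intro b hb
          by_cases hb0 : b = l 0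
          · subst hb0; rw [Function.update_self]
          · rw [Function.update_of_ne hb0]
            exact hall b hb hb0
      rw [htail, hDsplit g (l 0) h0L, hDsplit (Function.update g (l 0) none) (l 0) h0L,
        Function.update_self, hddn, one_mul, hg1, hdds,
        hPcongr (Function.update g (l 0) none) g (l 0)
          (fun b _ hbne => Function.update_of_ne hbne _ _)]
  -- KL1 : conjugating π by a product of σ's over distinct blocks
  have hKL1 : ∀ m (l : Fin m → ℕ) (ε : Fin m → Bool), Function.Injective l → (∀ i, l i < L) →
      (List.ofFn fun i => σ (l i) (ε i)).prod * π * ((List.ofFn fun i => σ (l i) (ε i)).prod)⁻¹ =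
      (List.ofFn fun i => d (l i) (ε i)).prod * π := by
    intro m
    induction m with
    | zero => intro l ε _ _; simp
    | succ m ih =>
      intro l ε hinj hlt
      rw [List.ofFn_succ (f := fun i => σ (l i) (ε i)), List.prod_cons,
        List.ofFn_succ (f := fun i => d (l i) (ε i)), List.prod_cons]
      set s' := (List.ofFn fun i : Fin m => σ (l i.succ) (ε i.succ)).prod with hs'
      set D' := (List.ofFn fun i : Fin m => d (l i.succ) (ε i.succ)).prod with hD'
      have hih : s' * π * s'⁻¹ = D' * π :=
        ih _ _ (fun i j hij => Fin.succ_injective _ (hinj hij)) (fun i => hlt i.succ)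
      have hmemD' : ∀ y ∈ (List.ofFn fun i : Fin m => d (l i.succ) (ε i.succ)), ∃ i : Fin m,
          d (l i.succ) (ε i.succ) = y := by
        intro y hy
        rw [List.mem_ofFn] at hy
        obtain ⟨i, hi⟩ := hy
        exact ⟨i, hi⟩
      have hcσD : Commute (σ (l 0) (ε 0)) D' := by
        rw [hD']
        refine Commute.list_prod_right _ _ (fun y hy => ?_)
        obtain ⟨i, rfl⟩ := hmemD' y hy
        exact hC3 (l 0) (l i.succ) (hlt 0) (hlt i.succ)
          (fun hh => (Fin.succ_ne_zero i) (hinj hh.symm)) _ _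
      have hcdD : Commute (d (l 0) (ε 0)) D' := by
        rw [hD']
        refine Commute.list_prod_right _ _ (fun y hy => ?_)
        obtain ⟨i, rfl⟩ := hmemD' y hy
        exact hC2 (l 0) (l i.succ) (hlt 0) (hlt i.succ) _ _
      calc σ (l 0) (ε 0) * s' * π * (σ (l 0) (ε 0) * s')⁻¹
          = σ (l 0) (ε 0) * (s' * π * s'⁻¹) * (σ (l 0) (ε 0))⁻¹ := by group
        _ = σ (l 0) (ε 0) * (D' * π) * (σ (l 0) (ε 0))⁻¹ := by rw [hih]
        _ = (σ (l 0) (ε 0) * D') * (π * (σ (l 0) (ε 0))⁻¹) := by group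
        _ = (D' * σ (l 0) (ε 0)) * (π * (σ (l 0) (ε 0))⁻¹) := by rw [hcσD.eq]
        _ = D' * (σ (l 0) (ε 0) * π * (σ (l 0) (ε 0))⁻¹) := by group
        _ = D' * (d (l 0) (ε 0) * π) := by rw [hC4]
        _ = (D' * d (l 0) (ε 0)) * π := by group
        _ = (d (l 0) (ε 0) * D') * π := by rw [← hcdD.eq]
        _ = d (l 0) (ε 0) * D' * π := by group
  -- KL3 : every element of T has the canonical form
  have hKL3 : ∀ x ∈ (insert π
      {x | ∃ (m : ℕ) (_ : 1 ≤ m) (_ : m ≤ L) (l : Fin m → ℕ) (ε : Fin m → Bool),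
        StrictMono l ∧ (∀ i, l i < L) ∧
        x = (List.ofFn fun i : Fin m => σ (l i) (ε i)).prod * π *
          ((List.ofFn fun i : Fin m => σ (l i) (ε i)).prod)⁻¹} :
        Set (Equiv.Perm (Fin (2 * (2 * L))))), ∃ g, x = D g * π := by
    intro x hx
    rcases Set.mem_insert_iff.mp hx with rfl | hx'
    · exact ⟨fun _ => none, by rw [hD1 _ (fun b _ => rfl), one_mul]⟩
    · obtain ⟨m, hm1, hm2, l, ε, hmono, hlt, rfl⟩ := hx'
      refine ⟨fun b => if h : ∃ i, l i = b then some (ε h.choose) else none, ?_⟩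
      rw [hKL1 m l ε hmono.injective hlt, hKL0 m l ε hmono.injective hlt _ ?_ ?_]
      · intro i
        have hex : ∃ j, l j = l i := ⟨i, rfl⟩
        rw [dif_pos hex]
        exact congrArg some (congrArg ε (hmono.injective hex.choose_spec))
      · intro b hb
        rw [dif_neg]
        rintro ⟨i, hi⟩
        exact hb i hi
  -- KL2 : every canonical form element is in T
  have hKL2 : ∀ g : ℕ → Option Bool, D g * π ∈ (insert π
      {x | ∃ (m : ℕ) (_ : 1 ≤ m) (_ : m ≤ L) (l : Fin m → ℕ) (ε : Fin m → Bool),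
        StrictMono l ∧ (∀ i, l i < L) ∧
        x = (List.ofFn fun i : Fin m => σ (l i) (ε i)).prod * π *
          ((List.ofFn fun i : Fin m => σ (l i) (ε i)).prod)⁻¹} :
        Set (Equiv.Perm (Fin (2 * (2 * L))))) := by
    intro g
    set g1 : ℕ → Option Bool := fun b => if b < L then g b else none with hg1def
    have hDg : D g = D g1 := hDcongr _ _ (fun b hb => (if_pos hb).symm)
    set S := (Finset.range L).filter (fun b => (g1 b).isSome) with hSdef
    by_cases hS : S = ∅
    · apply Set.mem_insert_iff.mpr
      left
      have hnone : ∀ b, b < L → g1 b = none := by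
        intro b hb
        by_contra hcon
        have h1 : (g1 b).isSome := Option.ne_none_iff_isSome.mp hcon
        have h2 : b ∈ S := Finset.mem_filter.mpr ⟨Finset.mem_range.mpr hb, h1⟩
        rw [hS] at h2
        exact absurd h2 (Finset.notMem_empty b)
      rw [hDg, hD1 _ hnone, one_mul]
    · have hSne : S.Nonempty := Finset.nonempty_of_ne_empty hS
      apply Set.mem_insert_iff.mpr
      right
      have hmemS : ∀ i : Fin S.card, (S.orderEmbOfFin rfl) i ∈ S :=
        fun i => Finset.orderEmbOfFin_mem S rfl i
      have hsome : ∀ i, (g1 ((S.orderEmbOfFin rfl) i)).isSome :=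
        fun i => (Finset.mem_filter.mp (hmemS i)).2
      have hcard : S.card ≤ L := by
        have h1 := Finset.card_filter_le (Finset.range L) (fun b => (g1 b).isSome = true)
        rw [Finset.card_range] at h1
        exact le_trans (le_of_eq (by rw [hSdef])) h1
      refine ⟨S.card, Finset.card_pos.mpr hSne, hcard,
        fun i => (S.orderEmbOfFin rfl) i,
        fun i => (g1 ((S.orderEmbOfFin rfl) i)).get (hsome i),
        (S.orderEmbOfFin rfl).strictMono,
        fun i => Finset.mem_range.mp (Finset.mem_filter.mp (hmemS i)).1, ?_⟩
      rw [hKL1 _ _ _ (S.orderEmbOfFin rfl).injective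
        (fun i => Finset.mem_range.mp (Finset.mem_filter.mp (hmemS i)).1),
        hKL0 _ _ _ (S.orderEmbOfFin rfl).injective
          (fun i => Finset.mem_range.mp (Finset.mem_filter.mp (hmemS i)).1) g1
          (fun i => (Option.some_get (hsome i)).symm) ?_, hDg]
      intro b hb
      by_cases hbL : b < L
      · by_contra hcon
        have h1 : (g1 b).isSome := Option.ne_none_iff_isSome.mp hcon
        have h2 : b ∈ S := Finset.mem_filter.mpr ⟨Finset.mem_range.mpr hbL, h1⟩
        have h3 : b ∈ Set.range (S.orderEmbOfFin rfl) := by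
          rw [Finset.range_orderEmbOfFin]
          exact h2
        obtain ⟨i, hi⟩ := h3
        exact hb i hi
      · exact if_neg hbL
  -- KL4 : single conjugation step
  have hKL4 : ∀ (g : ℕ → Option Bool) (h' : ℕ) (ε' : Bool), h' < L →
      ∃ g', σ h' ε' * (D g * π) * (σ h' ε')⁻¹ = D g' * π := by
    intro g h' ε' hh
    have hcσP : Commute (σ h' ε') (P g h') :=
      hPcomm g h' _ (fun b hb hbne => hC3dd h' b hh hb (fun hh2 => hbne hh2.symm) ε' _)
    have hcdP : Commute (d h' ε') (P g h') := by
      refine hPcomm g h' _ (fun b hb hbne => ?_)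
      rw [← hdds h' ε']
      exact hC2dd h' b hh hb _ _
    have hσPσ : σ h' ε' * P g h' * (σ h' ε')⁻¹ = P g h' := by
      rw [hcσP.eq, mul_inv_cancel_right]
    have main : ∀ Y, σ h' ε' * dd h' (g h') * (σ h' ε')⁻¹ * d h' ε' = Y →
        σ h' ε' * (D g * π) * (σ h' ε')⁻¹ = Y * P g h' * π := by
      intro Y hY
      rw [hDsplit g h' hh]
      calc σ h' ε' * (dd h' (g h') * P g h' * π) * (σ h' ε')⁻¹
          = (σ h' ε' * dd h' (g h') * (σ h' ε')⁻¹) * (σ h' ε' * P g h' * (σ h' ε')⁻¹) *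
            (σ h' ε' * π * (σ h' ε')⁻¹) := by group
        _ = (σ h' ε' * dd h' (g h') * (σ h' ε')⁻¹) * P g h' * (d h' ε' * π) := by
            rw [hσPσ, hC4]
        _ = (σ h' ε' * dd h' (g h') * (σ h' ε')⁻¹) * (P g h' * d h' ε') * π := by group
        _ = (σ h' ε' * dd h' (g h') * (σ h' ε')⁻¹) * (d h' ε' * P g h') * π := by
            rw [← hcdP.eq]
        _ = (σ h' ε' * dd h' (g h') * (σ h' ε')⁻¹ * d h' ε') * P g h' * π := by group
        _ = Y * P g h' * π := by rw [hY]
    rcases hgh : g h' with _ | ε''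
    · refine ⟨Function.update g h' (some ε'), ?_⟩
      rw [main (d h' ε') (by rw [hgh, hddn]; group),
        hDsplit (Function.update g h' (some ε')) h' hh, Function.update_self, hdds,
        hPcongr (Function.update g h' (some ε')) g h'
          (fun b _ hbne => Function.update_of_ne hbne _ _)]
    · rcases eq_or_ne ε'' ε' with rfl | hne
      · refine ⟨Function.update g h' none, ?_⟩
        rw [main 1 (by rw [hgh, hdds, hC5 h' hh, hC7 h' hh]),
          hDsplit (Function.update g h' none) h' hh, Function.update_self, hddn,
          hPcongr (Function.update g h' none) g h'
            (fun b _ hbne => Function.update_of_ne hbne _ _), one_mul]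
      · refine ⟨Function.update g h' (some ε''), ?_⟩
        have hY : σ h' ε' * dd h' (g h') * (σ h' ε')⁻¹ * d h' ε' = d h' ε'' := by
          rw [hgh, hdds]
          revert hne
          cases ε' <;> cases ε'' <;> intro hne
          · exact absurd rfl hne
          · rw [(hC6 h' hh).2, mul_assoc, hC7 h' hh, mul_one]
          · rw [(hC6 h' hh).1, mul_assoc, hC7 h' hh, mul_one]
          · exact absurd rfl hne
        rw [main (d h' ε'') hY,
          hDsplit (Function.update g h' (some ε'')) h' hh, Function.update_self, hdds,
          hPcongr (Function.update g h' (some ε'')) g h'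
            (fun b _ hbne => Function.update_of_ne hbne _ _)]
  -- KL5 : conjugation by an arbitrary product of σ's
  have hKL5 : ∀ (M : ℕ) (hs : Fin M → ℕ) (εs : Fin M → Bool), (∀ i, hs i < L) →
      ∀ g, ∃ g', (List.ofFn fun i => σ (hs i) (εs i)).prod * (D g * π) *
        ((List.ofFn fun i => σ (hs i) (εs i)).prod)⁻¹ = D g' * π := by
    intro M
    induction M with
    | zero => intro hs εs _ g; exact ⟨g, by simp⟩
    | succ M ih =>
      intro hs εs hlt g
      obtain ⟨g1, hg1⟩ := ih (fun i => hs i.succ) (fun i => εs i.succ) (fun i => hlt i.succ) g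
      obtain ⟨g2, hg2⟩ := hKL4 g1 (hs 0) (εs 0) (hlt 0)
      refine ⟨g2, ?_⟩
      rw [List.ofFn_succ, List.prod_cons]
      set t' := (List.ofFn fun i : Fin M => σ (hs i.succ) (εs i.succ)).prod with ht'
      calc (σ (hs 0) (εs 0) * t') * (D g * π) * (σ (hs 0) (εs 0) * t')⁻¹
          = σ (hs 0) (εs 0) * (t' * (D g * π) * t'⁻¹) * (σ (hs 0) (εs 0))⁻¹ := by group
        _ = σ (hs 0) (εs 0) * (D g1 * π) * (σ (hs 0) (εs 0))⁻¹ := by rw [hg1]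
        _ = D g2 * π := hg2
  -- assembly
  refine ⟨?_, ?_, ?_⟩
  · intro x hx
    constructor
    · rcases Set.mem_insert_iff.mp hx with rfl | hx'
      · exact isConj_iff.mpr ⟨1, by group⟩
      · obtain ⟨m, hm1, hm2, l, ε, hmono, hlt, rfl⟩ := hx'
        exact isConj_iff.mpr ⟨_, rfl⟩
    · obtain ⟨g, rfl⟩ := hKL3 x hx
      exact Commute.mul_right (hDcomm g π (fun b hb => hC1dd b hb _)) (Commute.refl π)
  · intro x hx M hM hs εs hmono hlt
    obtain ⟨g, rfl⟩ := hKL3 x hx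
    obtain ⟨g', hgeq⟩ := hKL5 M hs εs hlt g
    rw [hgeq]
    exact hKL2 g'
  · intro x hx y hy
    obtain ⟨g, rfl⟩ := hKL3 x hx
    obtain ⟨g', rfl⟩ := hKL3 y hy
    have hDD : Commute (D g) (D g') :=
      hDcomm g' (D g) (fun b hb =>
        (hDcomm g (dd b (g' b)) (fun b' hb' => hC2dd b b' hb hb' _ _)).symm)
    have hπg' : Commute π (D g') := hDcomm g' π (fun b hb => hC1dd b hb _)
    have hgπ : Commute (D g) π := (hDcomm g π (fun b hb => hC1dd b hb _)).symm
    exact Commute.mul_left (Commute.mul_right hDD hgπ)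
      (Commute.mul_right hπg' (Commute.refl π))
end

section
/- Let r ≥ 2 and n ≥ 2. In S_{2rn}, for 1 ≤ j ≤ n let A_j be the 2r-cycle (2r(j-1)+1, …, 2rj), let π = A_1⋯A_n, and for 1 ≤ i ≤ n-1 let B_i = ∏_{m=1}^{2r}(2r(i-1)+m, 2ri+m). For 1 ≤ i < j ≤ n define B_{ij} = B_i if j = i+1 and B_{ij} = B_i B_{i+1}⋯B_{j-1}⋯B_{i+1} B_i if j > i+1, and set π_{(i,j)} = π B_{ij}. Then there exists an involution σ ∈ S_{2rn} (σ² = id) with σ π σ = π_{(i,j)}; in particular, π_{(i,j)} lies in the conjugacy class of π. -/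
private lemma aux_div (R b p : ℕ) (hR : 0 < R) (hp : p < R) :
    (R * b + p) / R = b := by
  rw [Nat.mul_add_div hR, Nat.div_eq_of_lt hp, Nat.add_zero]

private lemma aux_mod (R b p : ℕ) (hp : p < R) :
    (R * b + p) % R = p := by
  rw [Nat.mul_add_mod, Nat.mod_eq_of_lt hp]

private lemma aux_par (r b p : ℕ) : (2 * r * b + p) % 2 = p % 2 := by
  rw [show 2 * r * b = 2 * (r * b) by ring, Nat.mul_add_mod]

private def fswap (N R i j e : ℕ)
    (hb : ∀ x : Fin N, (x : ℕ) / R = i → (x : ℕ) % 2 = 1 → (x : ℕ) + R * e < N) :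
    Fin N → Fin N :=
  fun x =>
    if h : (x : ℕ) / R = i ∧ (x : ℕ) % 2 = 1 then ⟨(x : ℕ) + R * e, hb x h.1 h.2⟩
    else if (x : ℕ) / R = j ∧ (x : ℕ) % 2 = 1 then
      ⟨(x : ℕ) - R * e, lt_of_le_of_lt (Nat.sub_le _ _) x.isLt⟩
    else x

private lemma fswap_val (N R i j e : ℕ) (hb : _) (x : Fin N) :
    ((fswap N R i j e hb x : ℕ)) =
      if (x : ℕ) / R = i ∧ (x : ℕ) % 2 = 1 then (x : ℕ) + R * e
      else if (x : ℕ) / R = j ∧ (x : ℕ) % 2 = 1 then (x : ℕ) - R * e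
      else (x : ℕ) := by
  unfold fswap
  split_ifs <;> rfl

/-- Let `r ≥ 2`, `n ≥ 2`.  In `S_{2rn}` (on `Fin (2*r*n)`,
`0`-indexed), for `0 ≤ j < n` let `A j` be the `2r`-cycle on the `j`-th block of size
`2r`, let `π = A_0 ⋯ A_{n-1}`, and for `0 ≤ i < n-1` let `B i` swap blocks `i` and
`i+1` position-by-position.  For `0 ≤ i < j < n` define `Bij i j = B i` if `j = i+1`
and `Bij i j = B i · Bij (i+1) j · B i` (that is,
`B_i B_{i+1} ⋯ B_{j-1} ⋯ B_{i+1} B_i`) otherwise, and set `π_{(i,j)} = π · Bij i j`.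
Then there exists an involution `s` with `s π s = π_{(i,j)}`; in particular
`π_{(i,j)}` lies in the conjugacy class of `π`. -/
theorem stmt7 (r n : ℕ) (hr : 2 ≤ r) (hn : 2 ≤ n)
    (A : ℕ → Equiv.Perm (Fin (2 * r * n)))
    (hA : ∀ j < n, ∀ x : Fin (2 * r * n),
      ((A j x : ℕ)) = if (x : ℕ) / (2 * r) = j
        then 2 * r * j + ((x : ℕ) % (2 * r) + 1) % (2 * r) else (x : ℕ))
    (π : Equiv.Perm (Fin (2 * r * n)))
    (hπ : ∀ x : Fin (2 * r * n),
      ((π x : ℕ)) = 2 * r * ((x : ℕ) / (2 * r)) + ((x : ℕ) % (2 * r) + 1) % (2 * r))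
    (B : ℕ → Equiv.Perm (Fin (2 * r * n)))
    (hB : ∀ i, i + 1 < n → ∀ x : Fin (2 * r * n),
      ((B i x : ℕ)) = if (x : ℕ) / (2 * r) = i then (x : ℕ) + 2 * r
        else if (x : ℕ) / (2 * r) = i + 1 then (x : ℕ) - 2 * r else (x : ℕ))
    (Bij : ℕ → ℕ → Equiv.Perm (Fin (2 * r * n)))
    (hBij1 : ∀ i, Bij i (i + 1) = B i)
    (hBij2 : ∀ i j, i + 1 < j → Bij i j = B i * Bij (i + 1) j * B i)
    (i j : ℕ) (hij : i < j) (hjn : j < n) :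
    ∃ s : Equiv.Perm (Fin (2 * r * n)),
      s * s = 1 ∧ s * π * s = π * Bij i j ∧ IsConj π (π * Bij i j) := by
  have hR : 0 < 2 * r := by omega
  have decomp : ∀ x : Fin (2 * r * n), ∃ b p, b < n ∧ p < 2 * r ∧ (x : ℕ) = 2 * r * b + p := by
    intro x
    refine ⟨(x : ℕ) / (2 * r), (x : ℕ) % (2 * r), ?_, Nat.mod_lt _ hR,
      (Nat.div_add_mod _ _).symm⟩
    have hx := x.isLt
    exact Nat.div_lt_of_lt_mul (by omega)
  have hπ' : ∀ (x : Fin (2 * r * n)) (b p : ℕ), p < 2 * r → (x : ℕ) = 2 * r * b + p →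
      ((π x : ℕ)) = 2 * r * b + (p + 1) % (2 * r) := by
    intro x b p hp hx
    rw [hπ, hx, aux_div _ _ _ hR hp, aux_mod _ _ _ hp]
  -- value of Bij i' j' : block swap i' <-> j'
  have hBijval : ∀ d i' j', j' = i' + d + 1 → j' < n → ∀ (x : Fin (2 * r * n)) (b p : ℕ),
      p < 2 * r → (x : ℕ) = 2 * r * b + p →
      ((Bij i' j' x : ℕ)) =
        if b = i' then 2 * r * j' + p else if b = j' then 2 * r * i' + p else 2 * r * b + p := by
    intro d
    induction d with
    | zero =>
      intro i' j' hj' hj'n x b p hp hx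
      have hj'' : j' = i' + 1 := by omega
      subst hj''
      rw [hBij1, hB i' hj'n, hx, aux_div _ _ _ hR hp]
      by_cases hbi : b = i'
      · rw [if_pos hbi, if_pos hbi, hbi]; ring
      · rw [if_neg hbi, if_neg hbi]
        by_cases hbi1 : b = i' + 1
        · rw [if_pos hbi1, if_pos hbi1, hbi1]
          have : 2 * r * (i' + 1) = 2 * r * i' + 2 * r := by ring
          omega
        · rw [if_neg hbi1, if_neg hbi1]
    | succ d ih =>
      intro i' j' hj' hj'n x b p hp hx
      have hi'n : i' + 1 < n := by omega
      have hi'j' : i' + 1 < j' := by omega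
      rw [hBij2 i' j' hi'j']
      have hmul : ((B i' * Bij (i' + 1) j' * B i') x : ℕ) =
          ((B i' (Bij (i' + 1) j' (B i' x)) : ℕ)) := rfl
      rw [hmul]
      set y := B i' x with hy
      set z := Bij (i' + 1) j' y with hz
      by_cases hbi : b = i'
      · rw [hbi] at hx
        have hyv : (y : ℕ) = 2 * r * (i' + 1) + p := by
          rw [hy, hB _ hi'n, hx, aux_div _ _ _ hR hp, if_pos rfl]; ring
        have h2 := ih (i' + 1) j' (by omega) hj'n y (i' + 1) p hp hyv
        have hzv : (z : ℕ) = 2 * r * j' + p := by rw [hz, h2, if_pos rfl]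
        have h3 : ((B i' z : ℕ)) = 2 * r * j' + p := by
          rw [hB _ hi'n, hzv, aux_div _ _ _ hR hp, if_neg (by omega), if_neg (by omega)]
        rw [h3, if_pos hbi]
      · by_cases hbj : b = j'
        · rw [hbj] at hx
          have hyv : (y : ℕ) = 2 * r * j' + p := by
            rw [hy, hB _ hi'n, hx, aux_div _ _ _ hR hp, if_neg (by omega), if_neg (by omega)]
          have h2 := ih (i' + 1) j' (by omega) hj'n y j' p hp hyv
          have hzv : (z : ℕ) = 2 * r * (i' + 1) + p := by
            rw [hz, h2, if_neg (by omega), if_pos rfl]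
          have h3 : ((B i' z : ℕ)) = 2 * r * i' + p := by
            rw [hB _ hi'n, hzv, aux_div _ _ _ hR hp, if_neg (by omega), if_pos rfl]
            have : 2 * r * (i' + 1) = 2 * r * i' + 2 * r := by ring
            omega
          rw [h3, if_neg hbi, if_pos hbj]
        · by_cases hbi1 : b = i' + 1
          · rw [hbi1] at hx
            have hyv : (y : ℕ) = 2 * r * i' + p := by
              rw [hy, hB _ hi'n, hx, aux_div _ _ _ hR hp, if_neg (by omega), if_pos rfl]
              have : 2 * r * (i' + 1) = 2 * r * i' + 2 * r := by ring
              omega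
            have h2 := ih (i' + 1) j' (by omega) hj'n y i' p hp hyv
            have hzv : (z : ℕ) = 2 * r * i' + p := by
              rw [hz, h2, if_neg (by omega), if_neg (by omega)]
            have h3 : ((B i' z : ℕ)) = 2 * r * (i' + 1) + p := by
              rw [hB _ hi'n, hzv, aux_div _ _ _ hR hp, if_pos rfl]; ring
            rw [h3, if_neg hbi, if_neg hbj, hbi1]
          · have hyv : (y : ℕ) = 2 * r * b + p := by
              rw [hy, hB _ hi'n, hx, aux_div _ _ _ hR hp, if_neg hbi, if_neg hbi1]
            have h2 := ih (i' + 1) j' (by omega) hj'n y b p hp hyv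
            have hzv : (z : ℕ) = 2 * r * b + p := by
              rw [hz, h2, if_neg hbi1, if_neg hbj]
            have h3 : ((B i' z : ℕ)) = 2 * r * b + p := by
              rw [hB _ hi'n, hzv, aux_div _ _ _ hR hp, if_neg hbi, if_neg hbi1]
            rw [h3, if_neg hbi, if_neg hbj]
  -- the involution
  set e := j - i with he
  have hje : j = i + e := by omega
  have hb : ∀ x : Fin (2 * r * n), (x : ℕ) / (2 * r) = i → (x : ℕ) % 2 = 1 →
      (x : ℕ) + 2 * r * e < 2 * r * n := by
    intro x hx _
    have h1 : (x : ℕ) = 2 * r * i + (x : ℕ) % (2 * r) := by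
      conv_lhs => rw [← Nat.div_add_mod (x : ℕ) (2 * r), hx]
    have h2 : (x : ℕ) % (2 * r) < 2 * r := Nat.mod_lt _ hR
    have h3 : 2 * r * i + 2 * r * e = 2 * r * j := by rw [hje]; ring
    have h4 : 2 * r * (j + 1) ≤ 2 * r * n := Nat.mul_le_mul_left _ (by omega)
    have h5 : 2 * r * (j + 1) = 2 * r * j + 2 * r := by ring
    omega
  set f := fswap (2 * r * n) (2 * r) i j e hb with hf
  have hadd : 2 * r * i + 2 * r * e = 2 * r * j := by rw [hje]; ring
  have hf' : ∀ (x : Fin (2 * r * n)) (b p : ℕ), p < 2 * r → (x : ℕ) = 2 * r * b + p →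
      ((f x : ℕ)) = if b = i ∧ p % 2 = 1 then 2 * r * j + p
        else if b = j ∧ p % 2 = 1 then 2 * r * i + p else 2 * r * b + p := by
    intro x b p hp hx
    rw [hf, fswap_val, hx, aux_div _ _ _ hR hp, aux_par]
    by_cases hbi : b = i
    · rw [hbi]
      split_ifs with h h2 <;> omega
    · by_cases hbj : b = j
      · rw [hbj]
        split_ifs with h h2 <;> omega
      · split_ifs with h h2 <;> omega
  have hinv : Function.Involutive f := by
    intro x
    obtain ⟨b, p, hbn, hp, hx⟩ := decomp x
    apply Fin.val_injective
    by_cases hbi : b = i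
    · rw [hbi] at hx
      by_cases hpar : p % 2 = 1
      · have h1 : ((f x : ℕ)) = 2 * r * j + p := by
          rw [hf' x i p hp hx, if_pos ⟨rfl, hpar⟩]
        have h2 : ((f (f x) : ℕ)) = 2 * r * i + p := by
          rw [hf' (f x) j p hp h1, if_neg (by omega), if_pos ⟨rfl, hpar⟩]
        rw [h2, hx]
      · have h1 : ((f x : ℕ)) = 2 * r * i + p := by
          rw [hf' x i p hp hx]; split_ifs with h h2 <;> omega
        have h2 : ((f (f x) : ℕ)) = 2 * r * i + p := by
          rw [hf' (f x) i p hp h1]; split_ifs with h h2 <;> omega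
        rw [h2, hx]
    · by_cases hbj : b = j
      · rw [hbj] at hx
        by_cases hpar : p % 2 = 1
        · have h1 : ((f x : ℕ)) = 2 * r * i + p := by
            rw [hf' x j p hp hx, if_neg (by omega), if_pos ⟨rfl, hpar⟩]
          have h2 : ((f (f x) : ℕ)) = 2 * r * j + p := by
            rw [hf' (f x) i p hp h1, if_pos ⟨rfl, hpar⟩]
          rw [h2, hx]
        · have h1 : ((f x : ℕ)) = 2 * r * j + p := by
            rw [hf' x j p hp hx]; split_ifs with h h2 <;> omega
          have h2 : ((f (f x) : ℕ)) = 2 * r * j + p := by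
            rw [hf' (f x) j p hp h1]; split_ifs with h h2 <;> omega
          rw [h2, hx]
      · have h1 : ((f x : ℕ)) = 2 * r * b + p := by
          rw [hf' x b p hp hx]; split_ifs with h h2 <;> omega
        have h2 : ((f (f x) : ℕ)) = 2 * r * b + p := by
          rw [hf' (f x) b p hp h1]; split_ifs with h h2 <;> omega
        rw [h2, hx]
  have hss : hinv.toPerm f * hinv.toPerm f = 1 := by
    ext x
    simp [Equiv.Perm.mul_apply, Function.Involutive.coe_toPerm, hinv x]
  have hconj : hinv.toPerm f * π * hinv.toPerm f = π * Bij i j := by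
    ext x
    show ((hinv.toPerm f) (π ((hinv.toPerm f) x)) : ℕ) = ((π (Bij i j x) : ℕ))
    have hs : ∀ y : Fin (2 * r * n), hinv.toPerm f y = f y := fun y => rfl
    rw [hs, hs]
    obtain ⟨b, p, hbn, hp, hx⟩ := decomp x
    have hBv := hBijval (j - i - 1) i j (by omega) hjn x b p hp hx
    set q := (p + 1) % (2 * r) with hq
    have hqlt : q < 2 * r := Nat.mod_lt _ hR
    have hq2 : q % 2 = (p + 1) % 2 := by
      rcases Nat.lt_or_ge (p + 1) (2 * r) with h | h
      · rw [hq, Nat.mod_eq_of_lt h]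
      · have h' : p + 1 = 2 * r := by omega
        rw [hq, h', Nat.mod_self]; omega
    by_cases hc1 : b = i
    · rw [hc1] at hx
      by_cases hpar : p % 2 = 1
      · have h1 : ((f x : ℕ)) = 2 * r * j + p := by
          rw [hf' x i p hp hx, if_pos ⟨rfl, hpar⟩]
        have h2 : ((π (f x) : ℕ)) = 2 * r * j + q := hπ' _ j p hp h1
        have h3 : ((f (π (f x)) : ℕ)) = 2 * r * j + q := by
          rw [hf' _ j q hqlt h2]; split_ifs with h h2 <;> omega
        have h4 : ((Bij i j x : ℕ)) = 2 * r * j + p := by rw [hBv, if_pos hc1]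
        have h5 : ((π (Bij i j x) : ℕ)) = 2 * r * j + q := hπ' _ j p hp h4
        rw [h3, h5]
      · have h1 : ((f x : ℕ)) = 2 * r * i + p := by
          rw [hf' x i p hp hx]; split_ifs with h h2 <;> omega
        have h2 : ((π (f x) : ℕ)) = 2 * r * i + q := hπ' _ i p hp h1
        have h3 : ((f (π (f x)) : ℕ)) = 2 * r * j + q := by
          rw [hf' _ i q hqlt h2, if_pos ⟨rfl, by omega⟩]
        have h4 : ((Bij i j x : ℕ)) = 2 * r * j + p := by rw [hBv, if_pos hc1]
        have h5 : ((π (Bij i j x) : ℕ)) = 2 * r * j + q := hπ' _ j p hp h4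
        rw [h3, h5]
    · by_cases hc2 : b = j
      · rw [hc2] at hx
        by_cases hpar : p % 2 = 1
        · have h1 : ((f x : ℕ)) = 2 * r * i + p := by
            rw [hf' x j p hp hx, if_neg (by omega), if_pos ⟨rfl, hpar⟩]
          have h2 : ((π (f x) : ℕ)) = 2 * r * i + q := hπ' _ i p hp h1
          have h3 : ((f (π (f x)) : ℕ)) = 2 * r * i + q := by
            rw [hf' _ i q hqlt h2]; split_ifs with h h2 <;> omega
          have h4 : ((Bij i j x : ℕ)) = 2 * r * i + p := by
            rw [hBv, if_neg (by omega), if_pos hc2]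
          have h5 : ((π (Bij i j x) : ℕ)) = 2 * r * i + q := hπ' _ i p hp h4
          rw [h3, h5]
        · have h1 : ((f x : ℕ)) = 2 * r * j + p := by
            rw [hf' x j p hp hx]; split_ifs with h h2 <;> omega
          have h2 : ((π (f x) : ℕ)) = 2 * r * j + q := hπ' _ j p hp h1
          have h3 : ((f (π (f x)) : ℕ)) = 2 * r * i + q := by
            rw [hf' _ j q hqlt h2, if_neg (by omega), if_pos ⟨rfl, by omega⟩]
          have h4 : ((Bij i j x : ℕ)) = 2 * r * i + p := by
            rw [hBv, if_neg (by omega), if_pos hc2]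
          have h5 : ((π (Bij i j x) : ℕ)) = 2 * r * i + q := hπ' _ i p hp h4
          rw [h3, h5]
      · have h1 : ((f x : ℕ)) = 2 * r * b + p := by
          rw [hf' x b p hp hx]; split_ifs with h h2 <;> omega
        have h2 : ((π (f x) : ℕ)) = 2 * r * b + q := hπ' _ b p hp h1
        have h3 : ((f (π (f x)) : ℕ)) = 2 * r * b + q := by
          rw [hf' _ b q hqlt h2]; split_ifs with h h2 <;> omega
        have h4 : ((Bij i j x : ℕ)) = 2 * r * b + p := by
          rw [hBv, if_neg hc1, if_neg hc2]
        have h5 : ((π (Bij i j x) : ℕ)) = 2 * r * b + q := hπ' _ b p hp h4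
        rw [h3, h5]
  exact ⟨hinv.toPerm f, hss, hconj, isConj_iff.mpr
    ⟨hinv.toPerm f, by rw [inv_eq_of_mul_eq_one_right hss, hconj]⟩⟩
end

section
/- Let r ≥ 2 and n ≥ 2. In S_{2rn}, for 1 ≤ j ≤ n let A_j be the 2r-cycle (2r(j-1)+1, …, 2rj), let π = A_1⋯A_n, and for 1 ≤ i ≤ n-1 let B_i = ∏_{m=1}^{2r}(2r(i-1)+m, 2ri+m). For 1 ≤ i < j ≤ n define B_{ij} = B_i if j = i+1 and B_{ij} = B_i B_{i+1}⋯B_{j-1}⋯B_{i+1} B_i if j > i+1, and set π_{(i,j)} = π B_{ij}. Then there exist involutions σ and σ̃ in S_{2rn} such that σ π σ = π⁻¹ and σ̃ π σ̃ = π_{(i,j)}⁻¹. -/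
namespace Stmt8

/-- negation of an offset mod `2r` -/
def mv (r m : ℕ) : ℕ := (2*r - m) % (2*r)

/-- block swap `i ↔ j` -/
def sw (i j b : ℕ) : ℕ := if b = i then j else if b = j then i else b

/-- the block map of `s'` : swap blocks `i ↔ j` exactly on odd offsets `c` -/
def tb (i j c q : ℕ) : ℕ := if c % 2 = 1 then sw i j q else q

lemma mv_lt {r : ℕ} (hr : 0 < r) (m : ℕ) : mv r m < 2*r := Nat.mod_lt _ (by omega)

lemma mv_invol {r m : ℕ} (hr : 0 < r) (hm : m < 2*r) : mv r (mv r m) = m := by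
  unfold mv
  rcases Nat.eq_zero_or_pos m with h | h
  · subst h; simp
  · have h1 : (2*r - m) % (2*r) = 2*r - m := Nat.mod_eq_of_lt (by omega)
    rw [h1]
    have h2 : 2*r - (2*r - m) = m := by omega
    rw [h2, Nat.mod_eq_of_lt hm]

lemma mv_parity {r m : ℕ} (hm : m < 2*r) : mv r m % 2 = m % 2 := by
  unfold mv
  rcases Nat.eq_zero_or_pos m with h | h
  · subst h; simp
  · rw [Nat.mod_eq_of_lt (show 2*r - m < 2*r by omega)]; omega

lemma K1 {r m : ℕ} (hr : 0 < r) (hm : m < 2*r) :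
    (mv r ((mv r m + 1) % (2*r)) + 1) % (2*r) = m := by
  unfold mv
  rcases Nat.eq_zero_or_pos m with h0 | h0
  · subst h0
    rw [Nat.sub_zero, Nat.mod_self]
    rw [Nat.mod_eq_of_lt (show 0 + 1 < 2*r by omega)]
    rw [Nat.mod_eq_of_lt (show 2*r - (0+1) < 2*r by omega)]
    have e : 2*r - (0+1) + 1 = 2*r := by omega
    rw [e, Nat.mod_self]
  · rw [Nat.mod_eq_of_lt (show 2*r - m < 2*r by omega)]
    rcases Nat.lt_or_ge m 2 with h1 | h1
    · have hm1 : m = 1 := by omega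
      subst hm1
      have e : 2*r - 1 + 1 = 2*r := by omega
      rw [e, Nat.mod_self, Nat.sub_zero, Nat.mod_self]
      exact Nat.mod_eq_of_lt (by omega)
    · rw [Nat.mod_eq_of_lt (show 2*r - m + 1 < 2*r by omega)]
      have e : 2*r - (2*r - m + 1) = m - 1 := by omega
      rw [e, Nat.mod_eq_of_lt (show m - 1 < 2*r by omega)]
      have e2 : m - 1 + 1 = m := by omega
      rw [e2, Nat.mod_eq_of_lt hm]

lemma K2 {r m : ℕ} (hr : 0 < r) (hm : m < 2*r) :
    ((mv r m + 1) % (2*r)) % 2 = 1 - m % 2 := by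
  unfold mv
  rcases Nat.eq_zero_or_pos m with h0 | h0
  · subst h0
    rw [Nat.sub_zero, Nat.mod_self, Nat.mod_eq_of_lt (show 0 + 1 < 2*r by omega)]
  · rw [Nat.mod_eq_of_lt (show 2*r - m < 2*r by omega)]
    rcases Nat.lt_or_ge m 2 with h1 | h1
    · have hm1 : m = 1 := by omega
      subst hm1
      have e : 2*r - 1 + 1 = 2*r := by omega
      rw [e, Nat.mod_self]
    · rw [Nat.mod_eq_of_lt (show 2*r - m + 1 < 2*r by omega)]
      omega

lemma sw_lt {n i j b : ℕ} (hi : i < n) (hj : j < n) (hb : b < n) : sw i j b < n := by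
  unfold sw; split_ifs <;> omega

lemma sw_sw {i j b : ℕ} : sw i j (sw i j b) = b := by
  unfold sw; split_ifs <;> omega

lemma tb_lt {n i j c q : ℕ} (hi : i < n) (hj : j < n) (hq : q < n) : tb i j c q < n := by
  unfold tb; split_ifs
  · exact sw_lt hi hj hq
  · exact hq

lemma tb_step {r i j c q : ℕ} (hr : 0 < r) (hc : c < 2*r) :
    tb i j ((mv r c + 1) % (2*r)) (tb i j c q) = sw i j q := by
  unfold tb
  rw [K2 hr hc]
  rcases Nat.mod_two_eq_zero_or_one c with h | h <;> rw [h] <;> simp [sw_sw]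

lemma tb_invol {r i j c q : ℕ} (hr : 0 < r) (hc : c < 2*r) :
    tb i j (mv r c) (tb i j c q) = q := by
  unfold tb
  rw [mv_parity hc]
  split_ifs with h
  · exact sw_sw
  · rfl

lemma dm1 {r m : ℕ} (hr : 0 < r) (q : ℕ) (hm : m < 2*r) : (2*r*q + m)/(2*r) = q := by
  rw [Nat.mul_add_div (by omega), Nat.div_eq_of_lt hm]; omega

lemma dm2 {r m : ℕ} (hr : 0 < r) (q : ℕ) (hm : m < 2*r) : (2*r*q + m) % (2*r) = m := by
  rw [Nat.mul_add_mod, Nat.mod_eq_of_lt hm]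

lemma blt {r n b c : ℕ} (hr : 0 < r) (hb : b < n) (hc : c < 2*r) : 2*r*b + c < 2*r*n := by
  have h1 : 2*r*(b+1) ≤ 2*r*n := Nat.mul_le_mul le_rfl (by omega)
  have h2 : 2*r*(b+1) = 2*r*b + 2*r := by ring
  omega

lemma qlt {r n x : ℕ} (hr : 0 < r) (hx : x < 2*r*n) : x/(2*r) < n := by
  apply (Nat.div_lt_iff_lt_mul (by omega)).mpr
  rw [mul_comm]; exact hx

end Stmt8


namespace Stmt8T
open Stmt8

/-- within-block reversal -/
def sF (r n : ℕ) (hr : 0 < r) (x : Fin (2*r*n)) : Fin (2*r*n) :=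
  ⟨2*r*((x : ℕ)/(2*r)) + Stmt8.mv r ((x : ℕ) % (2*r)),
   Stmt8.blt hr (Stmt8.qlt hr x.2) (Stmt8.mv_lt hr _)⟩

lemma sF_val (r n : ℕ) (hr : 0 < r) (x : Fin (2*r*n)) :
    (sF r n hr x : ℕ) = 2*r*((x : ℕ)/(2*r)) + Stmt8.mv r ((x : ℕ) % (2*r)) := rfl

lemma sF_invol (r n : ℕ) (hr : 0 < r) : Function.Involutive (sF r n hr) := by
  intro x
  apply Fin.ext
  rw [sF_val, sF_val]
  have hc : (x : ℕ) % (2*r) < 2*r := Nat.mod_lt _ (by omega)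
  rw [Stmt8.dm1 hr _ (Stmt8.mv_lt hr _), Stmt8.dm2 hr _ (Stmt8.mv_lt hr _),
    Stmt8.mv_invol hr hc, Nat.div_add_mod]

def sP (r n : ℕ) (hr : 0 < r) : Equiv.Perm (Fin (2*r*n)) :=
  ⟨sF r n hr, sF r n hr, sF_invol r n hr, sF_invol r n hr⟩

/-- block-swapping reversal -/
def tF (r n i j : ℕ) (hr : 0 < r) (hi : i < n) (hj : j < n) (x : Fin (2*r*n)) :
    Fin (2*r*n) :=
  ⟨2*r*(Stmt8.tb i j ((x : ℕ) % (2*r)) ((x : ℕ)/(2*r))) + Stmt8.mv r ((x : ℕ) % (2*r)),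
   Stmt8.blt hr (Stmt8.tb_lt hi hj (Stmt8.qlt hr x.2)) (Stmt8.mv_lt hr _)⟩

lemma tF_val (r n i j : ℕ) (hr : 0 < r) (hi : i < n) (hj : j < n) (x : Fin (2*r*n)) :
    (tF r n i j hr hi hj x : ℕ) =
      2*r*(Stmt8.tb i j ((x : ℕ) % (2*r)) ((x : ℕ)/(2*r))) + Stmt8.mv r ((x : ℕ) % (2*r)) := rfl

lemma tF_invol (r n i j : ℕ) (hr : 0 < r) (hi : i < n) (hj : j < n) :
    Function.Involutive (tF r n i j hr hi hj) := by
  intro x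
  apply Fin.ext
  rw [tF_val, tF_val]
  have hc : (x : ℕ) % (2*r) < 2*r := Nat.mod_lt _ (by omega)
  rw [Stmt8.dm1 hr _ (Stmt8.mv_lt hr _), Stmt8.dm2 hr _ (Stmt8.mv_lt hr _),
    Stmt8.mv_invol hr hc, Stmt8.tb_invol hr hc, Nat.div_add_mod]

def tP (r n i j : ℕ) (hr : 0 < r) (hi : i < n) (hj : j < n) : Equiv.Perm (Fin (2*r*n)) :=
  ⟨tF r n i j hr hi hj, tF r n i j hr hi hj, tF_invol r n i j hr hi hj, tF_invol r n i j hr hi hj⟩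

lemma sP_val (r n : ℕ) (hr : 0 < r) (x : Fin (2*r*n)) :
    (sP r n hr x : ℕ) = 2*r*((x : ℕ)/(2*r)) + Stmt8.mv r ((x : ℕ) % (2*r)) := rfl

lemma tP_val (r n i j : ℕ) (hr : 0 < r) (hi : i < n) (hj : j < n) (x : Fin (2*r*n)) :
    (tP r n i j hr hi hj x : ℕ) =
      2*r*(Stmt8.tb i j ((x : ℕ) % (2*r)) ((x : ℕ)/(2*r))) + Stmt8.mv r ((x : ℕ) % (2*r)) := rfl

end Stmt8T


/-- Let `r ≥ 2`, `n ≥ 2`.  In `S_{2rn}` (on `Fin (2*r*n)`,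
`0`-indexed), for `0 ≤ j < n` let `A j` be the `2r`-cycle on the `j`-th block of size
`2r`, let `π = A_0 ⋯ A_{n-1}`, and for `0 ≤ i < n-1` let `B i` swap blocks `i` and
`i+1` position-by-position.  For `0 ≤ i < j < n` define `Bij i j = B i` if `j = i+1`
and `Bij i j = B i · Bij (i+1) j · B i` (that is,
`B_i B_{i+1} ⋯ B_{j-1} ⋯ B_{i+1} B_i`) otherwise, and set `π_{(i,j)} = π · Bij i j`.
Then there exist involutions `s` and `s'` in `S_{2rn}` such that `s π s = π⁻¹` and
`s' π s' = π_{(i,j)}⁻¹`. -/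
theorem stmt8 (r n : ℕ) (hr : 2 ≤ r) (hn : 2 ≤ n)
    (A : ℕ → Equiv.Perm (Fin (2 * r * n)))
    (hA : ∀ j < n, ∀ x : Fin (2 * r * n),
      ((A j x : ℕ)) = if (x : ℕ) / (2 * r) = j
        then 2 * r * j + ((x : ℕ) % (2 * r) + 1) % (2 * r) else (x : ℕ))
    (π : Equiv.Perm (Fin (2 * r * n)))
    (hπ : ∀ x : Fin (2 * r * n),
      ((π x : ℕ)) = 2 * r * ((x : ℕ) / (2 * r)) + ((x : ℕ) % (2 * r) + 1) % (2 * r))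
    (B : ℕ → Equiv.Perm (Fin (2 * r * n)))
    (hB : ∀ i, i + 1 < n → ∀ x : Fin (2 * r * n),
      ((B i x : ℕ)) = if (x : ℕ) / (2 * r) = i then (x : ℕ) + 2 * r
        else if (x : ℕ) / (2 * r) = i + 1 then (x : ℕ) - 2 * r else (x : ℕ))
    (Bij : ℕ → ℕ → Equiv.Perm (Fin (2 * r * n)))
    (hBij1 : ∀ i, Bij i (i + 1) = B i)
    (hBij2 : ∀ i j, i + 1 < j → Bij i j = B i * Bij (i + 1) j * B i)
    (i j : ℕ) (hij : i < j) (hjn : j < n) :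
    ∃ s s' : Equiv.Perm (Fin (2 * r * n)),
      s * s = 1 ∧ s' * s' = 1 ∧ s * π * s = π⁻¹ ∧ s' * π * s' = (π * Bij i j)⁻¹ := by
  have hr0 : 0 < r := by omega
  have hin : i < n := lt_trans hij hjn
  -- step lemmas
  have stepπ : ∀ (y : Fin (2*r*n)) (b c : ℕ), c < 2*r → (y : ℕ) = 2*r*b + c →
      ((π y : ℕ)) = 2*r*b + (c+1) % (2*r) := by
    intro y b c hc hy
    rw [hπ y, hy, Stmt8.dm1 hr0 _ hc, Stmt8.dm2 hr0 _ hc]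
  have stepS : ∀ (y : Fin (2*r*n)) (b c : ℕ), c < 2*r → (y : ℕ) = 2*r*b + c →
      ((Stmt8T.sP r n hr0 y : ℕ)) = 2*r*b + Stmt8.mv r c := by
    intro y b c hc hy
    rw [Stmt8T.sP_val, hy, Stmt8.dm1 hr0 _ hc, Stmt8.dm2 hr0 _ hc]
  have stepT : ∀ (y : Fin (2*r*n)) (b c : ℕ), c < 2*r → (y : ℕ) = 2*r*b + c →
      ((Stmt8T.tP r n i j hr0 hin hjn y : ℕ)) = 2*r*(Stmt8.tb i j c b) + Stmt8.mv r c := by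
    intro y b c hc hy
    rw [Stmt8T.tP_val, hy, Stmt8.dm1 hr0 _ hc, Stmt8.dm2 hr0 _ hc]
  have stepB : ∀ k : ℕ, k + 1 < n → ∀ (y : Fin (2*r*n)) (b c : ℕ), c < 2*r →
      (y : ℕ) = 2*r*b + c →
      ((B k y : ℕ)) = 2*r*(if b = k then k+1 else if b = k+1 then k else b) + c := by
    intro k hk y b c hc hy
    rw [hB k hk y, hy, Stmt8.dm1 hr0 _ hc]
    split_ifs with h1 h2
    · subst h1; ring
    · subst h2
      have e : 2*r*(k+1) = 2*r*k + 2*r := by ring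
      omega
    · rfl
  have stepBij : ∀ d : ℕ, 1 ≤ d → ∀ a : ℕ, a + d < n →
      ∀ (y : Fin (2*r*n)) (b c : ℕ), b < n → c < 2*r → (y : ℕ) = 2*r*b + c →
      ((Bij a (a+d) y : ℕ)) = 2*r*(Stmt8.sw a (a+d) b) + c := by
    intro d hd
    induction d, hd using Nat.le_induction with
    | base =>
      intro a ha y b c hb hc hy
      rw [hBij1 a, stepB a ha y b c hc hy]
      rfl
    | succ d hd ih =>
      intro a ha y b c hb hc hy
      rw [hBij2 a (a + (d+1)) (by omega)]
      simp only [Equiv.Perm.mul_apply]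
      have e : a + (d + 1) = (a + 1) + d := by omega
      rw [e]
      have h1 := stepB a (by omega) y b c hc hy
      set b1 := if b = a then a + 1 else if b = a + 1 then a else b with hb1
      have hb1n : b1 < n := by rw [hb1]; split_ifs <;> omega
      have h2 := ih (a+1) (by omega) (B a y) b1 c hb1n hc h1
      set b2 := Stmt8.sw (a+1) (a+1+d) b1 with hb2
      have hb2n : b2 < n := Stmt8.sw_lt (by omega) (by omega) hb1n
      have h3 := stepB a (by omega) (Bij (a+1) (a+1+d) (B a y)) b2 c hc h2
      rw [h3]
      have key : (if b2 = a then a + 1 else if b2 = a + 1 then a else b2)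
          = Stmt8.sw a (a+1+d) b := by
        rw [hb2, hb1]; unfold Stmt8.sw; split_ifs <;> omega
      rw [key]
  have stepBij' : ∀ (y : Fin (2*r*n)) (b c : ℕ), b < n → c < 2*r → (y : ℕ) = 2*r*b + c →
      ((Bij i j y : ℕ)) = 2*r*(Stmt8.sw i j b) + c := by
    have h := stepBij (j - i) (by omega) i (by omega)
    rw [show i + (j - i) = j from by omega] at h
    exact h
  refine ⟨Stmt8T.sP r n hr0, Stmt8T.tP r n i j hr0 hin hjn, ?_, ?_, ?_, ?_⟩
  · apply Equiv.ext; intro x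
    simp only [Equiv.Perm.mul_apply, Equiv.Perm.one_apply]
    exact Stmt8T.sF_invol r n hr0 x
  · apply Equiv.ext; intro x
    simp only [Equiv.Perm.mul_apply, Equiv.Perm.one_apply]
    exact Stmt8T.tF_invol r n i j hr0 hin hjn x
  · refine eq_inv_of_mul_eq_one_right ?_
    apply Equiv.ext; intro x
    simp only [Equiv.Perm.mul_apply, Equiv.Perm.one_apply]
    have hc : (x : ℕ) % (2*r) < 2*r := Nat.mod_lt _ (by omega)
    have hx : (x : ℕ) = 2*r*((x : ℕ)/(2*r)) + (x : ℕ) % (2*r) := (Nat.div_add_mod _ _).symm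
    have h1 := stepS x _ _ hc hx
    have h2 := stepπ _ _ _ (Stmt8.mv_lt hr0 _) h1
    have h3 := stepS _ _ _ (Nat.mod_lt _ (by omega : 0 < 2*r)) h2
    have h4 := stepπ _ _ _ (Stmt8.mv_lt hr0 _) h3
    apply Fin.ext
    rw [h4, Stmt8.K1 hr0 hc]
    exact hx.symm
  · refine eq_inv_of_mul_eq_one_right ?_
    apply Equiv.ext; intro x
    simp only [Equiv.Perm.mul_apply, Equiv.Perm.one_apply]
    have hc : (x : ℕ) % (2*r) < 2*r := Nat.mod_lt _ (by omega)
    have hq : (x : ℕ)/(2*r) < n := Stmt8.qlt hr0 x.2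
    have hx : (x : ℕ) = 2*r*((x : ℕ)/(2*r)) + (x : ℕ) % (2*r) := (Nat.div_add_mod _ _).symm
    have h1 := stepT x _ _ hc hx
    have h2 := stepπ _ _ _ (Stmt8.mv_lt hr0 _) h1
    have h3 := stepT _ _ _ (Nat.mod_lt _ (by omega : 0 < 2*r)) h2
    rw [Stmt8.tb_step hr0 hc] at h3
    have h4 := stepBij' _ _ _ (Stmt8.sw_lt hin hjn hq) (Stmt8.mv_lt hr0 _) h3
    rw [Stmt8.sw_sw] at h4
    have h5 := stepπ _ _ _ (Stmt8.mv_lt hr0 _) h4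
    apply Fin.ext
    rw [h5, Stmt8.K1 hr0 hc]
    exact hx.symm
end

section
/- Let r ≥ 2 and n ≥ 2. In S_{2rn}, for 1 ≤ j ≤ n let A_j be the 2r-cycle (2r(j-1)+1, …, 2rj), let π = A_1⋯A_n, and let 𝔸_j = {2r(j-1)+1, …, 2rj} be the support of A_j. Every element x of the centralizer of π in S_{2rn} permutes the sets 𝔸_1,…,𝔸_n; let τ_x ∈ S_n denote the induced permutation determined by x(𝔸_j) = 𝔸_{τ_x(j)}. Let g ∈ S_{2rn} be such that g π g⁻¹ commutes with π. Then both g π g⁻¹ and g⁻¹ π g lie in the centralizer of π, and the permutations τ_{g π g⁻¹} and τ_{g⁻¹ π g} have the same cycle type (equivalently, they are conjugate in S_n). -/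
/-!
Write `c = g π g⁻¹` and `c' = g⁻¹ π g`. Both commute with `π`, so they permute the blocks (the
cycles of `π`), inducing `τ` and `τ'`; the block of `x` is fixed by `τ ^ k` iff `c ^ k x` lies in
the `π`-orbit of `x`. As `π` and `c` commute and all their cycles have length `orderOf π`, this
happens iff `π ^ k x` lies in the `c`-orbit of `x`, i.e. (conjugating by `g⁻¹`) iff `c' ^ k (g⁻¹ x)`
lies in the `π`-orbit of `g⁻¹ x`. So `g⁻¹` maps the blocks fixed by `τ ^ k` onto those fixed by
`τ' ^ k`, and `τ ^ k`, `τ' ^ k` have equally many fixed points for every `k`. By Möbius inversion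
these counts determine the cycle type, hence `τ` and `τ'` are conjugate.
-/

open Equiv Finset MulAction

theorem Multiset.sum_filter_dvd_eq_sum_divisors (M : Multiset ℕ) {k : ℕ} (hk : k ≠ 0) :
    (M.filter (· ∣ k)).sum = ∑ d ∈ k.divisors, M.count d * d := by
  rw [Finset.sum_multiset_count_of_subset _ k.divisors fun d hd => by
    rw [Multiset.mem_toFinset, Multiset.mem_filter] at hd
    exact Nat.mem_divisors.2 ⟨hd.2, hk⟩]
  refine Finset.sum_congr rfl fun d hd => ?_
  rw [Multiset.count_filter_of_pos (p := (· ∣ k)) (Nat.dvd_of_mem_divisors hd), smul_eq_mul]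

open ArithmeticFunction in
theorem Multiset.eq_of_sum_filter_dvd_eq {M N : Multiset ℕ} (hM : 0 ∉ M) (hN : 0 ∉ N)
    (h : ∀ k ≠ 0, (M.filter (· ∣ k)).sum = (N.filter (· ∣ k)).sum) : M = N := by
  have inversion (L : Multiset ℕ) {d : ℕ} (hd : 0 < d) :
      ((L.count d * d : ℕ) : ℤ) =
        ∑ x ∈ d.divisorsAntidiagonal, moebius x.1 • ((L.filter (· ∣ x.2)).sum : ℤ) :=
    ((sum_eq_iff_sum_smul_moebius_eq (f := fun d => ((L.count d * d : ℕ) : ℤ))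
      (g := fun k => ((L.filter (· ∣ k)).sum : ℤ))).1 (fun k hk => by
        rw [L.sum_filter_dvd_eq_sum_divisors hk.ne', Nat.cast_sum]) d hd).symm
  ext d
  rcases Nat.eq_zero_or_pos d with rfl | hd
  · rw [Multiset.count_eq_zero_of_notMem hM, Multiset.count_eq_zero_of_notMem hN]
  · have hcount : ((M.count d * d : ℕ) : ℤ) = ((N.count d * d : ℕ) : ℤ) := by
      rw [inversion M hd, inversion N hd]
      refine Finset.sum_congr rfl fun x hx => ?_
      rw [h x.2 (Nat.pos_of_mem_divisors (Nat.snd_mem_divisors_of_mem_antidiagonal hx)).ne']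
    exact Nat.eq_of_mul_eq_mul_right hd (by exact_mod_cast hcount)

namespace Equiv.Perm

variable {α : Type*} [Fintype α] [DecidableEq α]

theorem card_support_pow (σ : Perm α) (k : ℕ) :
    #(σ ^ k).support = (σ.cycleType.filter (¬ · ∣ k)).sum := by
  induction σ using cycle_induction_on with
  | base_one => simp
  | base_cycles σ hσ =>
    rw [hσ.cycleType, Multiset.filter_singleton]
    by_cases hdvd : #σ.support ∣ k
    · rw [if_neg (not_not.2 hdvd), orderOf_dvd_iff_pow_eq_one.1 (hσ.orderOf ▸ hdvd)]
      simp
    · rw [if_pos hdvd, Multiset.sum_singleton, hσ.support_pow_eq_iff.2 (hσ.orderOf ▸ hdvd)]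
  | induction_disjoint σ τ hd _ hσ hτ =>
    rw [hd.commute.mul_pow, (hd.pow_disjoint_pow k k).card_support_mul, hd.cycleType_mul,
      Multiset.filter_add, Multiset.sum_add, hσ, hτ]

theorem sum_filter_dvd_cycleType (σ : Perm α) (k : ℕ) :
    (σ.cycleType.filter (· ∣ k)).sum = #σ.support - #(σ ^ k).support := by
  have hsplit := congrArg Multiset.sum (Multiset.filter_add_not (· ∣ k) σ.cycleType)
  rw [Multiset.sum_add, sum_cycleType] at hsplit
  rw [card_support_pow]
  omega

theorem cycleType_eq_of_card_fixed_pow_eq {σ τ : Perm α}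
    (h : ∀ k : ℕ, #{x | (σ ^ k) x = x} = #{x | (τ ^ k) x = x}) :
    σ.cycleType = τ.cycleType := by
  have hsupp (k : ℕ) : #(σ ^ k).support = #(τ ^ k).support := by
    have hcompl (ρ : Perm α) : #{x | (ρ ^ k) x = x} + #(ρ ^ k).support = Fintype.card α :=
      Finset.card_filter_add_card_filter_not _
    have := hcompl σ
    have := hcompl τ
    have := h k
    omega
  refine Multiset.eq_of_sum_filter_dvd_eq (fun h0 => by simpa using two_le_of_mem_cycleType h0)
    (fun h0 => by simpa using two_le_of_mem_cycleType h0) fun k _ => ?_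
  rw [sum_filter_dvd_cycleType, sum_filter_dvd_cycleType, hsupp k]
  simpa using congrArg (· - #(τ ^ k).support) (hsupp 1)

end Equiv.Perm

namespace Commute

variable {G α : Type*} [Group G] [MulAction G α] {a b : G}

theorem zpow_mul_smul_eq (hab : Commute a b) {x : α} {i k : ℤ} (h : a ^ i • x = b ^ k • x)
    (s : ℤ) : a ^ (i * s) • x = b ^ (k * s) • x := by
  have hu : (b ^ (-k) * a ^ i) ∈ stabilizer G x := by
    rw [mem_stabilizer_iff, mul_smul, h, ← mul_smul, ← zpow_add, neg_add_cancel, zpow_zero,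
      one_smul]
  have hus := (stabilizer G x).zpow_mem hu s
  rw [(hab.symm.zpow_zpow (-k) i).mul_zpow, mem_stabilizer_iff, ← zpow_mul, ← zpow_mul, mul_smul,
    ← eq_inv_smul_iff, ← zpow_neg, neg_mul, neg_neg] at hus
  exact hus

theorem exists_zpow_smul_eq (hab : Commute a b) (ha : IsOfFinOrder a) {x : α}
    (hdvd : orderOf a ∣ period b x) {i k : ℤ} (h : a ^ i • x = b ^ k • x) :
    ∃ j : ℤ, a ^ k • x = b ^ j • x := by
  -- With `d = gcd i (orderOf a)`: `a ^ (i * (orderOf a / d)) = 1` forces `d ∣ k`, and then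
  -- `a ^ k` is a power of `a ^ i` by Bézout.
  obtain ⟨i₁, hi₁⟩ := Int.gcd_dvd_left i (orderOf a)
  obtain ⟨m₁, hm₁⟩ := Int.gcd_dvd_right i (orderOf a)
  have hm₁ne : m₁ ≠ 0 := by
    rintro rfl
    exact ha.orderOf_pos.ne' (by simpa using hm₁)
  have hgcd_dvd_k : (i.gcd (orderOf a) : ℤ) ∣ k := by
    have hfix : b ^ (k * m₁) • x = x := by
      rw [← hab.zpow_mul_smul_eq h, orderOf_dvd_iff_zpow_eq_one.1, one_smul]
      exact ⟨i₁, by rw [hi₁]; nth_rewrite 2 [hm₁]; ring⟩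
    have := (Int.natCast_dvd_natCast.2 hdvd).trans (zpow_smul_eq_iff_period_dvd.1 hfix)
    rw [hm₁] at this
    exact Int.dvd_of_mul_dvd_mul_right hm₁ne this
  obtain ⟨v, hv⟩ := hgcd_dvd_k
  refine ⟨k * (i.gcdA (orderOf a) * v), ?_⟩
  rw [← hab.zpow_mul_smul_eq h, zpow_eq_zpow_iff_modEq.2 (Int.modEq_iff_dvd.2 ?_)]
  exact ⟨-i.gcdB (orderOf a) * v, by rw [hv, Int.gcd_eq_gcd_ab]; ring⟩

theorem inv_conj_of_conj {g : G} (h : Commute (g * a * g⁻¹) a) : Commute (g⁻¹ * a * g) a := by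
  simpa [mul_assoc] using (Commute.conj_iff g⁻¹).2 h.symm

end Commute

theorem MulAction.period_conj {G α : Type*} [Group G] [MulAction G α] (g a : G) (x : α) :
    period (g * a * g⁻¹) x = period a (g⁻¹ • x) := by
  refine Nat.dvd_right_iff_eq.1 fun n => ?_
  rw [← pow_smul_eq_iff_period_dvd, ← pow_smul_eq_iff_period_dvd, conj_pow, mul_smul, mul_smul,
    smul_eq_iff_eq_inv_smul]

theorem Equiv.Perm.sameCycle_inv_conj_pow_of_commute {α : Type*} [Finite α]
    {π g : Perm α} (hπ : ∀ x : α, period π x = orderOf π) (hcomm : Commute (g * π * g⁻¹) π)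
    {k : ℕ} {x : α}
    (hx : π.SameCycle x (((g * π * g⁻¹) ^ k) x)) :
    π.SameCycle (g⁻¹ x) (((g⁻¹ * π * g) ^ k) (g⁻¹ x)) := by
  obtain ⟨i, hi⟩ := hx
  obtain ⟨j, hj⟩ := hcomm.symm.exists_zpow_smul_eq (isOfFinOrder_of_finite π)
    (x := x) (by rw [period_conj, hπ]) (i := i) (k := k) (by simpa using hi)
  have hconj : (g⁻¹ * π * g) ^ k = g⁻¹ * π ^ k * g := by
    simpa using conj_pow (a := g⁻¹) (b := π) (i := k)
  rw [conj_zpow, Perm.smul_def, Perm.smul_def, zpow_natCast] at hj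
  exact ⟨j, by simp [hconj, hj]⟩

section Blocks

variable {α ι : Type*} {π : Perm α} {blk : α → ι}
  (hblk : ∀ x y, blk x = blk y ↔ π.SameCycle x y)
include hblk

theorem apply_eq_apply_of_commute {e : Perm α} (he : Commute e π) {x y : α}
    (hxy : blk x = blk y) : blk (e x) = blk (e y) := by
  obtain ⟨i, rfl⟩ := (hblk x y).1 hxy
  rw [← Perm.mul_apply, (he.zpow_right i).eq, Perm.mul_apply]
  exact (hblk _ _).2 ⟨i, rfl⟩

theorem exists_semiconj_of_commute [Finite ι] (hsurj : blk.Surjective) {e : Perm α}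
    (he : Commute e π) : ∃ τ : Perm ι, Function.Semiconj blk e τ := by
  set τ : ι → ι := fun j => blk (e (Function.surjInv hsurj j))
  have hτ : Function.Semiconj blk e τ := fun x =>
    apply_eq_apply_of_commute hblk he (Function.surjInv_eq hsurj (blk x)).symm
  have hinj : τ.Injective := by
    intro j j' hjj'
    rw [← Function.surjInv_eq hsurj j, ← Function.surjInv_eq hsurj j']
    simpa using apply_eq_apply_of_commute hblk he.inv_left hjj'
  exact ⟨Equiv.ofBijective τ (Finite.injective_iff_bijective.1 hinj), hτ⟩

theorem pow_apply_eq_self_iff_sameCycle {e : Perm α} {τ : Perm ι}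
    (h : Function.Semiconj blk e τ) (k : ℕ) (x : α) :
    (τ ^ k) (blk x) = blk x ↔ π.SameCycle x ((e ^ k) x) := by
  rw [Perm.coe_pow, ← (h.iterate_right k) x, ← Perm.coe_pow, eq_comm, hblk]

theorem card_fixed_pow_eq_of_semiconj [Fintype α] [DecidableEq ι]
    (hπ : ∀ x : α, period π x = orderOf π) {g : Perm α} (hcomm : Commute (g * π * g⁻¹) π)
    {τ τ' : Perm ι} (hτ : Function.Semiconj blk (g * π * g⁻¹) τ)
    (hτ' : Function.Semiconj blk (g⁻¹ * π * g) τ') (k : ℕ) :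
    #{x | (τ ^ k) (blk x) = blk x} = #{x | (τ' ^ k) (blk x) = blk x} := by
  refine Finset.card_equiv g⁻¹ fun x => ?_
  simp only [mem_filter, mem_univ, true_and, pow_apply_eq_self_iff_sameCycle hblk hτ,
    pow_apply_eq_self_iff_sameCycle hblk hτ']
  refine ⟨Perm.sameCycle_inv_conj_pow_of_commute hπ hcomm, fun h => ?_⟩
  simpa using Perm.sameCycle_inv_conj_pow_of_commute hπ (g := g⁻¹)
    (by simpa using hcomm.inv_conj_of_conj) h

end Blocks

namespace BlockRotation

variable {m n : ℕ}

def block (x : Fin (m * n)) : Fin n := ⟨x / m, Nat.div_lt_of_lt_mul x.2⟩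

theorem block_surjective (hm : 0 < m) : (block : Fin (m * n) → Fin n).Surjective := fun j =>
  ⟨⟨m * j, (Nat.mul_lt_mul_left hm).2 j.2⟩, Fin.ext (Nat.mul_div_cancel_left _ hm)⟩

theorem card_filter_block (P : Fin n → Prop) [DecidablePred P] :
    #{x : Fin (m * n) | P (block x)} = m * #{j | P j} := by
  rw [Finset.card_equiv ((finCongr (mul_comm m n)).trans finProdFinEquiv.symm)
    (t := univ.filter fun p => P p.1) fun x => by simp only [mem_filter, mem_univ, true_and]; rfl]
  rw [← univ_product_univ, filter_product_left, card_product, card_univ, Fintype.card_fin,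
    mul_comm]

variable {π : Perm (Fin (m * n))}
  (hπ : ∀ x : Fin (m * n), (π x : ℕ) = m * (x / m) + (x % m + 1) % m)
include hπ

theorem val_pow_apply (hm : 0 < m) (k : ℕ) (x : Fin (m * n)) :
    ((π ^ k) x : ℕ) = m * (x / m) + (x % m + k) % m := by
  induction k with
  | zero => simp [Nat.div_add_mod]
  | succ k ih =>
    have hlt : (x % m + k) % m < m := Nat.mod_lt _ hm
    rw [pow_succ', Perm.mul_apply, hπ, ih, Nat.mul_add_div hm, Nat.div_eq_of_lt hlt, add_zero,
      Nat.mul_add_mod, Nat.mod_mod, Nat.mod_add_mod, add_assoc]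

theorem pow_apply_eq_self_iff (hm : 0 < m) (k : ℕ) (x : Fin (m * n)) :
    (π ^ k) x = x ↔ m ∣ k := by
  rw [Fin.ext_iff, val_pow_apply hπ hm, ← Nat.add_modEq_left_iff (a := (x : ℕ) % m),
    Nat.ModEq, Nat.mod_mod]
  have := Nat.div_add_mod (x : ℕ) m
  omega

theorem period_eq_orderOf (hm : 0 < m) (x : Fin (m * n)) :
    period π x = orderOf π := by
  have hperiod : period π x = m := Nat.dvd_right_iff_eq.1 fun k => by
    rw [← pow_smul_eq_iff_period_dvd, Perm.smul_def, pow_apply_eq_self_iff hπ hm]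
  refine Nat.dvd_antisymm (period_dvd_orderOf π x) ?_
  rw [hperiod]
  exact orderOf_dvd_of_pow_eq_one (Perm.ext fun y => (pow_apply_eq_self_iff hπ hm m y).2 dvd_rfl)

theorem block_eq_block_iff (hm : 0 < m) (x y : Fin (m * n)) :
    block x = block y ↔ π.SameCycle x y := by
  have hpow (k : ℕ) (x : Fin (m * n)) : block ((π ^ k) x) = block x := by
    refine Fin.ext ?_
    rw [block, block, Fin.val_mk, Fin.val_mk, val_pow_apply hπ hm, Nat.mul_add_div hm,
      Nat.div_eq_of_lt (Nat.mod_lt _ hm), add_zero]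
  constructor
  · intro hxy
    have hdiv : (x : ℕ) / m = y / m := congrArg Fin.val hxy
    refine ⟨(m + y % m - x % m : ℕ), Fin.ext ?_⟩
    have hsum : (x : ℕ) % m + (m + y % m - x % m) = m + y % m := by
      have := Nat.mod_lt (x : ℕ) hm
      omega
    rw [zpow_natCast, val_pow_apply hπ hm, hsum, Nat.add_mod_left, Nat.mod_mod, hdiv,
      Nat.div_add_mod]
  · intro hxy
    obtain ⟨k, -, rfl⟩ := hxy.exists_pow_eq'
    rw [hpow]

end BlockRotation

theorem stmt9_general (r n : ℕ) (hr : 2 ≤ r)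
    (π : Equiv.Perm (Fin (2 * r * n)))
    (hπ : ∀ x : Fin (2 * r * n),
      ((π x : ℕ)) = 2 * r * ((x : ℕ) / (2 * r)) + ((x : ℕ) % (2 * r) + 1) % (2 * r))
    (g : Equiv.Perm (Fin (2 * r * n)))
    (hcomm : Commute (g * π * g⁻¹) π) :
    g * π * g⁻¹ ∈ Subgroup.centralizer {π} ∧
    g⁻¹ * π * g ∈ Subgroup.centralizer {π} ∧
    ∃ τ τ' : Equiv.Perm (Fin n),
      (∀ (x : Fin (2 * r * n)) (j : Fin n), (x : ℕ) / (2 * r) = (j : ℕ) →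
        (((g * π * g⁻¹) x : ℕ)) / (2 * r) = ((τ j : ℕ))) ∧
      (∀ (x : Fin (2 * r * n)) (j : Fin n), (x : ℕ) / (2 * r) = (j : ℕ) →
        (((g⁻¹ * π * g) x : ℕ)) / (2 * r) = ((τ' j : ℕ))) ∧
      IsConj τ τ' := by
  have hm : 0 < 2 * r := by omega
  have hblk := BlockRotation.block_eq_block_iff hπ hm
  have hcomm' := hcomm.inv_conj_of_conj
  obtain ⟨τ, hτ⟩ := exists_semiconj_of_commute hblk (BlockRotation.block_surjective hm) hcomm
  obtain ⟨τ', hτ'⟩ := exists_semiconj_of_commute hblk (BlockRotation.block_surjective hm) hcomm'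
  have hfixed (k : ℕ) : #{j | (τ ^ k) j = j} = #{j | (τ' ^ k) j = j} := by
    refine Nat.eq_of_mul_eq_mul_left hm ?_
    rw [← BlockRotation.card_filter_block, ← BlockRotation.card_filter_block]
    exact card_fixed_pow_eq_of_semiconj hblk (BlockRotation.period_eq_orderOf hπ hm) hcomm
      hτ hτ' k
  refine ⟨Subgroup.mem_centralizer_singleton_iff.2 hcomm.eq,
    Subgroup.mem_centralizer_singleton_iff.2 hcomm'.eq, τ, τ', fun x j hxj => ?_,
    fun x j hxj => ?_,
    Perm.isConj_iff_cycleType_eq.2 (Perm.cycleType_eq_of_card_fixed_pow_eq hfixed)⟩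
  · exact congrArg Fin.val ((hτ x).trans (congrArg τ (Fin.ext hxj)))
  · exact congrArg Fin.val ((hτ' x).trans (congrArg τ' (Fin.ext hxj)))

/-- Let `r ≥ 2`, `n ≥ 2`.  In `S_{2rn}` (on `Fin (2*r*n)`,
`0`-indexed), for `0 ≤ j < n` let `A j` be the `2r`-cycle on the `j`-th block
`𝔸_j = {2rj, …, 2rj + 2r - 1}` and let `π = A_0 ⋯ A_{n-1}`.  Every element of the
centralizer of `π` permutes the blocks `𝔸_0, …, 𝔸_{n-1}`; the induced permutation
`τ_x ∈ S_n` is determined by the condition that `x` maps block `j` onto block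
`τ_x j`.  Let `g ∈ S_{2rn}` be such that `g π g⁻¹` commutes with `π`.  Then both
`g π g⁻¹` and `g⁻¹ π g` lie in the centralizer of `π`, and the induced permutations
`τ_{g π g⁻¹}` and `τ_{g⁻¹ π g}` of the blocks are conjugate in `S_n`
(equivalently, they have the same cycle type). -/
theorem stmt9 (r n : ℕ) (hr : 2 ≤ r) (hn : 2 ≤ n)
    (A : ℕ → Equiv.Perm (Fin (2 * r * n)))
    (hA : ∀ j < n, ∀ x : Fin (2 * r * n),
      ((A j x : ℕ)) = if (x : ℕ) / (2 * r) = j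
        then 2 * r * j + ((x : ℕ) % (2 * r) + 1) % (2 * r) else (x : ℕ))
    (π : Equiv.Perm (Fin (2 * r * n)))
    (hπ : ∀ x : Fin (2 * r * n),
      ((π x : ℕ)) = 2 * r * ((x : ℕ) / (2 * r)) + ((x : ℕ) % (2 * r) + 1) % (2 * r))
    (g : Equiv.Perm (Fin (2 * r * n)))
    (hcomm : Commute (g * π * g⁻¹) π) :
    g * π * g⁻¹ ∈ Subgroup.centralizer {π} ∧
    g⁻¹ * π * g ∈ Subgroup.centralizer {π} ∧
    ∃ τ τ' : Equiv.Perm (Fin n),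
      (∀ (x : Fin (2 * r * n)) (j : Fin n), (x : ℕ) / (2 * r) = (j : ℕ) →
        (((g * π * g⁻¹) x : ℕ)) / (2 * r) = ((τ j : ℕ))) ∧
      (∀ (x : Fin (2 * r * n)) (j : Fin n), (x : ℕ) / (2 * r) = (j : ℕ) →
        (((g⁻¹ * π * g) x : ℕ)) / (2 * r) = ((τ' j : ℕ))) ∧
      IsConj τ τ' :=
  stmt9_general r n hr π hπ g hcomm
end

section
/- Let r ≥ 2 and let n ≥ 2 be odd. In S_{2rn}, for 1 ≤ j ≤ n let A_j be the 2r-cycle (2r(j-1)+1, …, 2rj), let π = A_1⋯A_n, and for 1 ≤ i ≤ n-1 let B_i = ∏_{m=1}^{2r}(2r(i-1)+m, 2ri+m). Let g ∈ S_{2rn} be such that g π g⁻¹ commutes with π, and suppose g π g⁻¹ = A_1^{d_1}⋯A_n^{d_n}·B and g⁻¹ π g = A_1^{e_1}⋯A_n^{e_n}·B', where d_1,…,d_n, e_1,…,e_n are integers and B, B' lie in the subgroup generated by B_1,…,B_{n-1}. Then ∑_{j=1}^n (e_j + d_j) is even. -/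
/-!
Conjugate permutations have the same sign, so `sign π = sign (g π g⁻¹) = sign (g⁻¹ π g)`.
Each `A_j` is a cycle of even length `2r`, hence odd, while each `B_i` is the `2r`-th power of the
`4r`-cycle running through blocks `i` and `i + 1`, hence even. Therefore
`sign π = (-1) ^ ∑ d_j = (-1) ^ ∑ e_j`, and `(-1) ^ ∑ (e_j + d_j) = (sign π) ^ 2 = 1`.
-/

open Equiv Equiv.Perm

theorem Nat.div_eq_iff_mul_le_and_lt {k x j : ℕ} (hk : 0 < k) :
    x / k = j ↔ k * j ≤ x ∧ x < k * j + k := by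
  rw [Nat.div_eq_iff hk, Nat.mul_comm j]
  omega

theorem Int.negOnePow_sum {ι : Type*} (s : Finset ι) (f : ι → ℤ) :
    (∑ i ∈ s, f i).negOnePow = ∏ i ∈ s, (f i).negOnePow := by
  classical
  induction s using Finset.induction_on with
  | empty => rfl
  | insert i s hi ih => rw [Finset.sum_insert hi, Finset.prod_insert hi, Int.negOnePow_add, ih]

theorem MonoidHom.map_prod_ofFn_zpow_of_eq_neg_one {G : Type*} [Group G] {n : ℕ} (φ : G →* ℤˣ)
    {a : Fin n → G} (ha : ∀ j, φ (a j) = -1) (f : Fin n → ℤ) :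
    φ (List.ofFn fun j => a j ^ f j).prod = (∑ j, f j).negOnePow := by
  rw [map_list_prod, List.map_ofFn, List.prod_ofFn, Int.negOnePow_sum]
  simp only [Function.comp_apply, map_zpow, ha, Int.negOnePow_def]

namespace Equiv.Perm

def blockRotate {N : ℕ} (b k : ℕ) (h : b + k ≤ N) : Perm (Fin N) :=
  (finRotate k).viaFintypeEmbedding ((Fin.natAddEmb b).trans (Fin.castLEEmb h))

section BlockRotate

variable {N b k : ℕ} (h : b + k ≤ N)

theorem val_blockRotate_apply (x : Fin N) :
    (blockRotate b k h x : ℕ) = if b ≤ x ∧ x < b + k then b + (x - b + 1) % k else x := by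
  split_ifs with hx
  · obtain ⟨k, rfl⟩ : ∃ k', k = k' + 1 := Nat.exists_eq_add_one.2 (by omega)
    have hx' : x = (Fin.natAddEmb b).trans (Fin.castLEEmb h) ⟨x - b, by omega⟩ := by
      ext; simp; omega
    conv_lhs => rw [hx', blockRotate, viaFintypeEmbedding_apply_image]
    simp only [Function.Embedding.trans_apply, Fin.natAddEmb_apply, Fin.castLEEmb_apply,
      Fin.val_castLE, Fin.val_natAdd, coe_finRotate, Fin.ext_iff, Fin.val_last]
    split_ifs with hlast
    · rw [hlast, Nat.mod_self]
    · rw [Nat.mod_eq_of_lt (by omega)]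
  · rw [blockRotate, viaFintypeEmbedding_apply_notMem_range]
    rintro ⟨y, rfl⟩
    exact hx ⟨by simp, by simp [y.isLt]⟩

theorem val_blockRotate_pow_apply (m : ℕ) (x : Fin N) :
    ((blockRotate b k h ^ m) x : ℕ) =
      if b ≤ x ∧ x < b + k then b + (x - b + m) % k else x := by
  induction m with
  | zero =>
    split_ifs with hx
    · rw [Nat.add_zero, Nat.mod_eq_of_lt (by omega)]
      simp only [pow_zero, one_apply]
      omega
    · rfl
  | succ m ih =>
    rw [pow_succ', mul_apply, val_blockRotate_apply, ih]
    split_ifs with hx hx' <;> try omega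
    · rw [Nat.add_sub_cancel_left, Nat.mod_add_mod, Nat.add_assoc]
    · have := Nat.mod_lt (x - b + m) (show 0 < k by omega)
      omega

theorem sign_blockRotate : sign (blockRotate b k h) = (-1) ^ (k - 1) := by
  rw [blockRotate, viaFintypeEmbedding_sign, sign_finRotate]

end BlockRotate

section Blocks

variable {k n : ℕ} (hk : 0 < k) {σ : Perm (Fin (k * n))}
include hk

theorem sign_of_rotates_block {j : ℕ} (hj : j < n)
    (hσ : ∀ x : Fin (k * n), (σ x : ℕ) = if (x : ℕ) / k = j
      then k * j + ((x : ℕ) % k + 1) % k else (x : ℕ)) :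
    sign σ = (-1) ^ (k - 1) := by
  have hb : k * j + k ≤ k * n := by nlinarith
  suffices σ = blockRotate (k * j) k hb by rw [this, sign_blockRotate]
  ext x
  rw [hσ, val_blockRotate_apply]
  simp only [← Nat.div_eq_iff_mul_le_and_lt hk]
  split_ifs with hx
  · rw [← hx, ← Nat.mod_eq_sub_mul_div]
  · rfl

theorem sign_of_swaps_blocks {i : ℕ} (hi : i + 1 < n)
    (hσ : ∀ x : Fin (k * n), (σ x : ℕ) = if (x : ℕ) / k = i then (x : ℕ) + k
      else if (x : ℕ) / k = i + 1 then (x : ℕ) - k else (x : ℕ)) :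
    sign σ = (-1) ^ k := by
  have hb : k * i + 2 * k ≤ k * n := by nlinarith
  suffices σ = blockRotate (k * i) (2 * k) hb ^ k by
    rw [this, map_pow, sign_blockRotate, Odd.neg_one_pow ⟨k - 1, by omega⟩]
  ext x
  rw [hσ, val_blockRotate_pow_apply]
  simp only [Nat.div_eq_iff_mul_le_and_lt hk, Nat.mul_add, Nat.mul_one]
  split_ifs <;> try omega
  · rw [Nat.mod_eq_of_lt (by omega)]
    omega
  · rw [Nat.mod_eq_sub_mod (by omega), Nat.mod_eq_of_lt (by omega)]
    omega

end Blocks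

end Equiv.Perm

theorem stmt10_general (r n : ℕ) (hr : 2 ≤ r)
    (A : ℕ → Equiv.Perm (Fin (2 * r * n)))
    (hA : ∀ j < n, ∀ x : Fin (2 * r * n),
      ((A j x : ℕ)) = if (x : ℕ) / (2 * r) = j
        then 2 * r * j + ((x : ℕ) % (2 * r) + 1) % (2 * r) else (x : ℕ))
    (π : Equiv.Perm (Fin (2 * r * n)))
    (B : ℕ → Equiv.Perm (Fin (2 * r * n)))
    (hB : ∀ i, i + 1 < n → ∀ x : Fin (2 * r * n),
      ((B i x : ℕ)) = if (x : ℕ) / (2 * r) = i then (x : ℕ) + 2 * r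
        else if (x : ℕ) / (2 * r) = i + 1 then (x : ℕ) - 2 * r else (x : ℕ))
    (g : Equiv.Perm (Fin (2 * r * n)))
    (d e : Fin n → ℤ) (B₀ B₀' : Equiv.Perm (Fin (2 * r * n)))
    (hB₀ : B₀ ∈ Subgroup.closure (B '' {i | i + 1 < n}))
    (hB₀' : B₀' ∈ Subgroup.closure (B '' {i | i + 1 < n}))
    (hd : g * π * g⁻¹ = (List.ofFn fun j : Fin n => A (j : ℕ) ^ d j).prod * B₀)
    (he : g⁻¹ * π * g = (List.ofFn fun j : Fin n => A (j : ℕ) ^ e j).prod * B₀') :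
    Even (∑ j : Fin n, (e j + d j)) := by
  have hk : 0 < 2 * r := by omega
  have hA_odd : ∀ j : Fin n, sign (A j) = -1 := fun j => by
    rw [sign_of_rotates_block hk j.isLt (hA j j.isLt), Odd.neg_one_pow ⟨r - 1, by omega⟩]
  have hB_even : B '' {i | i + 1 < n} ⊆ alternatingGroup (Fin (2 * r * n)) := by
    rintro _ ⟨i, hi, rfl⟩
    rw [SetLike.mem_coe, mem_alternatingGroup, sign_of_swaps_blocks hk hi (hB i hi),
      Even.neg_one_pow ⟨r, two_mul r⟩]
  have sign_π : ∀ (h : Perm (Fin (2 * r * n))) (f : Fin n → ℤ) (C : Perm (Fin (2 * r * n))),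
      C ∈ Subgroup.closure (B '' {i | i + 1 < n}) →
      h * π * h⁻¹ = (List.ofFn fun j : Fin n => A (j : ℕ) ^ f j).prod * C →
      sign π = (∑ j, f j).negOnePow := fun h f C hC hconj =>
    calc sign π = sign (h * π * h⁻¹) := by rw [map_mul, map_mul, map_inv, mul_inv_cancel_comm]
      _ = (∑ j, f j).negOnePow := by
        rw [hconj, map_mul, mem_alternatingGroup.1 ((Subgroup.closure_le _).2 hB_even hC),
          mul_one, sign.map_prod_ofFn_zpow_of_eq_neg_one hA_odd]
  rw [← Int.negOnePow_eq_one_iff, Finset.sum_add_distrib, Int.negOnePow_add,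
    ← sign_π g⁻¹ e B₀' hB₀' (by rwa [inv_inv]), ← sign_π g d B₀ hB₀ hd, Int.units_mul_self]

/-- Let `r ≥ 2` and let `n ≥ 2` be odd.  In `S_{2rn}` (on
`Fin (2*r*n)`, `0`-indexed), for `0 ≤ j < n` let `A j` be the `2r`-cycle on the
`j`-th block of size `2r`, `π = A_0 ⋯ A_{n-1}`, and for `0 ≤ i < n-1` let `B i`
swap blocks `i` and `i+1` position-by-position.  Let `g` be such that `g π g⁻¹`
commutes with `π`, and suppose `g π g⁻¹ = A_0^{d_0} ⋯ A_{n-1}^{d_{n-1}} · B₀` and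
`g⁻¹ π g = A_0^{e_0} ⋯ A_{n-1}^{e_{n-1}} · B₀'` with integers `d_j, e_j` and
`B₀, B₀'` in the subgroup generated by the `B i`'s.  Then `∑_j (e_j + d_j)` is
even. -/
theorem stmt10 (r n : ℕ) (hr : 2 ≤ r) (hn : 2 ≤ n) (hodd : Odd n)
    (A : ℕ → Equiv.Perm (Fin (2 * r * n)))
    (hA : ∀ j < n, ∀ x : Fin (2 * r * n),
      ((A j x : ℕ)) = if (x : ℕ) / (2 * r) = j
        then 2 * r * j + ((x : ℕ) % (2 * r) + 1) % (2 * r) else (x : ℕ))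
    (π : Equiv.Perm (Fin (2 * r * n)))
    (hπ : ∀ x : Fin (2 * r * n),
      ((π x : ℕ)) = 2 * r * ((x : ℕ) / (2 * r)) + ((x : ℕ) % (2 * r) + 1) % (2 * r))
    (B : ℕ → Equiv.Perm (Fin (2 * r * n)))
    (hB : ∀ i, i + 1 < n → ∀ x : Fin (2 * r * n),
      ((B i x : ℕ)) = if (x : ℕ) / (2 * r) = i then (x : ℕ) + 2 * r
        else if (x : ℕ) / (2 * r) = i + 1 then (x : ℕ) - 2 * r else (x : ℕ))
    (g : Equiv.Perm (Fin (2 * r * n)))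
    (hcomm : Commute (g * π * g⁻¹) π)
    (d e : Fin n → ℤ) (B₀ B₀' : Equiv.Perm (Fin (2 * r * n)))
    (hB₀ : B₀ ∈ Subgroup.closure (B '' {i | i + 1 < n}))
    (hB₀' : B₀' ∈ Subgroup.closure (B '' {i | i + 1 < n}))
    (hd : g * π * g⁻¹ = (List.ofFn fun j : Fin n => A (j : ℕ) ^ d j).prod * B₀)
    (he : g⁻¹ * π * g = (List.ofFn fun j : Fin n => A (j : ℕ) ^ e j).prod * B₀') :
    Even (∑ j : Fin n, (e j + d j)) :=
  stmt10_general r n hr A hA π B hB g d e B₀ B₀' hB₀ hB₀' hd he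
end

section
/- Let r ≥ 2 be odd and n ≥ 2. In S_{2rn}, for 1 ≤ j ≤ n let A_j be the 2r-cycle (2r(j-1)+1, …, 2rj), let π = A_1⋯A_n, and for 1 ≤ i ≤ n-1 let B_i = ∏_{m=1}^{2r}(2r(i-1)+m, 2ri+m), so that the centralizer of π in S_{2rn} is generated by A_1,…,A_n, B_1,…,B_{n-1}. Let μ ∈ {1,-1} and let ρ be a group homomorphism from the centralizer of π to ℂˣ with ρ(A_j) = -1 for all 1 ≤ j ≤ n and ρ(B_i) = μ for all 1 ≤ i ≤ n-1, and assume ρ(π) = -1. Then for all elements t, t' in the conjugacy class of π with t t' = t' t, and all g, g' ∈ S_{2rn} with g π g⁻¹ = t and g' π g'⁻¹ = t', the elements g'⁻¹ t g' and g⁻¹ t' g lie in the centralizer of π, ρ(g⁻¹ t g) = -1, and ρ(g'⁻¹ t g') · ρ(g⁻¹ t' g) = 1. (In the paper's terminology: for r odd and ρ = χ_{r,…,r} ⊗ μ with ρ(π) = -1, the braiding is negative.) -/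
/-!
A permutation `c` commuting with `σ` permutes the cycles of `σ`; write `c̄` for the induced
permutation of the set of cycles. The orbits of `⟨σ, c⟩` are exactly the preimages of the cycles
of `c̄`, so the number of cycles of `c̄` (fixed points included) is symmetric in `σ` and `c`
and invariant under simultaneous conjugation. Since `h • (σ, h⁻¹σh) = (hσh⁻¹, σ)`, the
permutations induced by `h⁻¹σh` and by `hσh⁻¹` have the same number of cycles, hence the same
sign; and `h⁻¹σh`, `hσh⁻¹` themselves have the same sign.

For `π = A₀ ⋯ A_{n-1}`, the generator `Aⱼ` is a `2r`-cycle (odd) moving no block, and `Bᵢ` is a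
product of `2r` transpositions (even) swapping two blocks. Hence `ρ(c) = χ(sign c, sign c̄)` for
a character `χ` of `ℤˣ × ℤˣ`, and with `h = g⁻¹g'` the braiding product is
`ρ(h⁻¹πh) ρ(hπh⁻¹) = χ(x)² = χ(x²) = 1`.
-/

open Equiv Function

theorem Setoid.card_quotient_comap {β γ : Type*} {f : β → γ} (hf : Surjective f)
    (r : Setoid γ) : Nat.card (Quotient (r.comap f)) = Nat.card (Quotient r) :=
  Nat.card_congr <| (Quotient.congrRight (Setoid.ext_iff.1 Setoid.comap_eq)).trans <|
    Setoid.quotientKerEquivOfSurjective _ (Quotient.mk''_surjective.comp hf)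

theorem Subgroup.monoidHom_ext_of_eq_closure {G M : Type*} [Group G] [Monoid M]
    {H : Subgroup G} {s : Set G} (hH : H = Subgroup.closure s) {f f' : H →* M}
    (h : ∀ x (hx : x ∈ H), x ∈ s → f ⟨x, hx⟩ = f' ⟨x, hx⟩) : f = f' := by
  subst hH
  exact MonoidHom.eq_of_eqOn_dense Subgroup.closure_closure_coe_preimage fun x hx => h x x.2 hx

theorem Fin.val_finRotate {k : ℕ} (m : Fin k) : (finRotate k m : ℕ) = (m + 1) % k := by
  rw [finRotate_apply, Fin.val_add, Fin.val_one', Nat.add_mod_mod]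

theorem Subgroup.conj_mem_centralizer_conj_s12 {G : Type*} [Group G] {t t' : G} (h : Commute t t')
    (g : G) : g⁻¹ * t * g ∈ Subgroup.centralizer {g⁻¹ * t' * g} :=
  mem_centralizer_singleton_iff.2 (by simp only [mul_assoc, mul_inv_cancel_left, h.left_comm])

namespace Equiv.Perm

variable {α : Type*}

section Centralizer

variable (σ : Perm α)

theorem sameCycle_apply_iff_of_mem_centralizer {c : Perm α} (hc : c ∈ Subgroup.centralizer {σ})
    {x y : α} : σ.SameCycle (c x) (c y) ↔ σ.SameCycle x y := by
  have hσ : c⁻¹ * σ * c = σ := by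
    rw [mul_assoc, ← Subgroup.mem_centralizer_singleton_iff.1 hc, inv_mul_cancel_left]
  simpa [hσ] using (sameCycle_conj (g := c⁻¹) (f := σ) (x := x) (y := y)).symm

def toPermCycles : Subgroup.centralizer {σ} →* Perm (Quotient (SameCycle.setoid σ)) where
  toFun c := Quotient.congr c fun _ _ => (sameCycle_apply_iff_of_mem_centralizer σ c.2).symm
  map_one' := by ext q; induction q using Quotient.ind; rfl
  map_mul' _ _ := by ext q; induction q using Quotient.ind; rfl

@[simp]
theorem toPermCycles_mk (c : Subgroup.centralizer {σ}) (x : α) :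
    toPermCycles σ c ⟦x⟧ = ⟦(c : Perm α) x⟧ := rfl

theorem sameCycle_toPermCycles_mk_iff {τ : Perm α} (hτ : τ ∈ Subgroup.centralizer {σ})
    {x y : α} :
    (toPermCycles σ ⟨τ, hτ⟩).SameCycle ⟦x⟧ ⟦y⟧ ↔ ∃ a b : ℤ, (σ ^ a * τ ^ b) x = y := by
  simp only [SameCycle, ← map_zpow, toPermCycles_mk, Quotient.eq, SubgroupClass.coe_zpow]
  exact exists_comm

end Centralizer

/-- Fixed points count as cycles of length one. -/
noncomputable def numCycles (σ : Perm α) : ℕ := Nat.card (Quotient (SameCycle.setoid σ))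

theorem numCycles_toPermCycles_comm {σ τ : Perm α} (hτ : τ ∈ Subgroup.centralizer {σ})
    (hσ : σ ∈ Subgroup.centralizer {τ}) :
    numCycles (toPermCycles σ ⟨τ, hτ⟩) = numCycles (toPermCycles τ ⟨σ, hσ⟩) := by
  rw [numCycles, numCycles, ← Setoid.card_quotient_comap Quotient.mk_surjective,
    ← Setoid.card_quotient_comap Quotient.mk_surjective]
  congr 2
  ext x y
  change (toPermCycles σ _).SameCycle _ _ ↔ (toPermCycles τ _).SameCycle _ _
  rw [sameCycle_toPermCycles_mk_iff, sameCycle_toPermCycles_mk_iff, exists_comm]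
  have hστ : Commute σ τ := (Subgroup.mem_centralizer_singleton_iff.1 hτ).symm
  simp only [(hστ.zpow_zpow _ _).eq]

theorem numCycles_toPermCycles_conj {σ τ σ' τ' : Perm α} (g : Perm α) (hσ' : g * σ * g⁻¹ = σ')
    (hτ' : g * τ * g⁻¹ = τ') (hτ : τ ∈ Subgroup.centralizer {σ})
    (hτ'mem : τ' ∈ Subgroup.centralizer {σ'}) :
    numCycles (toPermCycles σ' ⟨τ', hτ'mem⟩) = numCycles (toPermCycles σ ⟨τ, hτ⟩) := by
  subst hσ' hτ'
  rw [numCycles, numCycles,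
    ← Setoid.card_quotient_comap (Quotient.mk_surjective.comp g.surjective),
    ← Setoid.card_quotient_comap Quotient.mk_surjective]
  congr 2
  ext x y
  change (toPermCycles _ _).SameCycle _ _ ↔ (toPermCycles σ _).SameCycle _ _
  simp only [comp_apply, sameCycle_toPermCycles_mk_iff, conj_zpow]
  simp [mul_apply]

theorem sameCycle_iff_fst_eq {κ F : Type*} [Finite α] [Finite F] {σ : Perm α} {τ : Perm F}
    (e : α ≃ κ × F) (hσ : ∀ x, e (σ x) = ((e x).1, τ (e x).2))
    (hτ : ∀ b b', τ.SameCycle b b') (x y : α) : σ.SameCycle x y ↔ (e x).1 = (e y).1 := by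
  have hpow (k : ℕ) : e ((σ ^ k) x) = ((e x).1, (τ ^ k) (e x).2) := by
    induction k with
    | zero => rfl
    | succ k ih => rw [pow_succ', mul_apply, hσ, ih, pow_succ', mul_apply]
  constructor
  · intro h
    obtain ⟨k, -, rfl⟩ := h.exists_pow_eq'
    rw [hpow]
  · intro h
    obtain ⟨k, -, hk⟩ := (hτ (e x).2 (e y).2).exists_pow_eq'
    exact ⟨k, e.injective (by rw [zpow_natCast, hpow, hk, h])⟩

section Finite

variable [Fintype α] [DecidableEq α]

theorem numCycles_eq (σ : Perm α) :
    numCycles σ = σ.cycleFactorsFinset.card + Fintype.card (fixedPoints σ) := by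
  obtain ⟨a⟩ := Basis.nonempty σ
  let F : σ.cycleFactorsFinset ⊕ fixedPoints σ → Quotient (SameCycle.setoid σ) :=
    Sum.elim (fun c => ⟦a c⟧) (fun x => ⟦x.1⟧)
  have moved (c : σ.cycleFactorsFinset) : ¬ IsFixedPt σ (a c) := fun h =>
    mem_support.1 (mem_cycleFactorsFinset_support_le c.2 (a.mem_support_self c)) h
  have hF : Bijective F := by
    refine ⟨?_, fun q => q.inductionOn fun x => ?_⟩
    · rintro (c | ⟨x, hx⟩) (d | ⟨y, hy⟩) h <;> replace h := Quotient.exact h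
      · have := (h : σ.SameCycle _ _).cycleOf_eq
        rw [a.cycleOf_eq, a.cycleOf_eq] at this
        exact congrArg Sum.inl (Subtype.ext this)
      · exact absurd (h.eq_of_right hy ▸ hy) (moved c)
      · exact absurd (h.eq_of_left hx ▸ hx) (moved d)
      · exact congrArg Sum.inr (Subtype.ext ((h : σ.SameCycle x y).eq_of_left hx))
    · rcases a.mem_fixedPoints_or_exists_zpow_eq x with hx | ⟨c, -, m, hm⟩
      · exact ⟨Sum.inr ⟨x, hx⟩, rfl⟩
      · exact ⟨Sum.inl c, Quotient.sound ⟨m, hm⟩⟩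
  rw [numCycles, ← Nat.card_eq_of_bijective F hF, Nat.card_sum, Nat.card_eq_fintype_card,
    Fintype.card_coe, Nat.card_eq_fintype_card]

theorem sign_eq_neg_one_pow_numCycles (σ : Perm α) :
    sign σ = (-1) ^ (Fintype.card α + numCycles σ) := by
  have hcard : Multiset.card σ.cycleType = σ.cycleFactorsFinset.card := by
    simp [cycleType]
  have hle := σ.sum_cycleType_le
  rw [sign_of_cycleType, numCycles_eq, card_fixedPoints, ← hcard,
    show Fintype.card α + (Multiset.card σ.cycleType + (Fintype.card α - σ.cycleType.sum)) =
      σ.cycleType.sum + Multiset.card σ.cycleType + 2 * (Fintype.card α - σ.cycleType.sum) by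
      omega, pow_add _ _ (2 * _), pow_mul, neg_one_sq, one_pow, mul_one]

open scoped Classical in
noncomputable def signPair (σ : Perm α) : Subgroup.centralizer {σ} →* ℤˣ × ℤˣ :=
  (sign.comp (Subgroup.centralizer {σ}).subtype).prod (sign.comp (toPermCycles σ))

theorem signPair_conj_eq (σ g : Perm α) (hc : g⁻¹ * σ * g ∈ Subgroup.centralizer {σ})
    (hc' : g * σ * g⁻¹ ∈ Subgroup.centralizer {σ}) :
    signPair σ ⟨g⁻¹ * σ * g, hc⟩ = signPair σ ⟨g * σ * g⁻¹, hc'⟩ := by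
  have hσ : σ ∈ Subgroup.centralizer {g * σ * g⁻¹} :=
    Subgroup.mem_centralizer_singleton_iff.2 (Subgroup.mem_centralizer_singleton_iff.1 hc').symm
  have hcycles : numCycles (toPermCycles σ ⟨g⁻¹ * σ * g, hc⟩) =
      numCycles (toPermCycles σ ⟨g * σ * g⁻¹, hc'⟩) := by
    rw [numCycles_toPermCycles_comm hc' hσ, numCycles_toPermCycles_conj g rfl (by group) hc]
  refine Prod.ext ?_ ?_
  · simp [signPair, mul_comm]
  · simp only [signPair, MonoidHom.prod_apply, MonoidHom.comp_apply,
      sign_eq_neg_one_pow_numCycles, hcycles]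

theorem map_signPair_conj_mul_map_signPair_conj {M : Type*} [Monoid M] (χ : ℤˣ × ℤˣ →* M)
    {σ c c' : Perm α} (g : Perm α) (hc : g⁻¹ * σ * g = c) (hc' : g * σ * g⁻¹ = c')
    (hcmem : c ∈ Subgroup.centralizer {σ}) (hc'mem : c' ∈ Subgroup.centralizer {σ}) :
    χ (signPair σ ⟨c, hcmem⟩) * χ (signPair σ ⟨c', hc'mem⟩) = 1 := by
  subst hc hc'
  rw [signPair_conj_eq σ g hcmem hc'mem, ← map_mul, ← map_one χ]
  exact congrArg χ (Prod.ext (Int.units_mul_self _) (Int.units_mul_self _))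

theorem snd_signPair_eq_sign {κ : Type*} [Fintype κ] [DecidableEq κ] {σ : Perm α} (f : α → κ)
    (hf : Surjective f) (hσf : ∀ x y, σ.SameCycle x y ↔ f x = f y)
    (c : Subgroup.centralizer {σ}) (β : Perm κ) (hcf : ∀ x, f ((c : Perm α) x) = β (f x)) :
    (signPair σ c).2 = sign β := by
  classical
  let E : Quotient (SameCycle.setoid σ) ≃ κ :=
    Equiv.ofBijective (Quotient.lift f fun x y h => (hσf x y).1 h)
      ⟨fun p q => Quotient.inductionOn₂ p q fun x y h => Quotient.sound ((hσf x y).2 h),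
        fun k => (hf k).imp' (Quotient.mk _) fun _ hx => hx⟩
  have hE (x : α) : E.symm (f x) = ⟦x⟧ := E.symm_apply_eq.2 rfl
  have hconj : E.permCongr (toPermCycles σ c) = β := by
    ext k
    obtain ⟨x, rfl⟩ := hf k
    simp only [permCongr_apply, hE, toPermCycles_mk]
    exact hcf x
  rw [← hconj, sign_permCongr]
  rfl

end Finite

end Equiv.Perm

open Equiv.Perm

section Blocks

variable {r n : ℕ}

/-- `x ↦ (x / 2r, x % 2r)`: block and position within the block. -/
def blockEquiv (r n : ℕ) : Fin (2 * r * n) ≃ Fin n × Fin (2 * r) :=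
  (finCongr (Nat.mul_comm _ _)).trans finProdFinEquiv.symm

theorem blockEquiv_eq_iff {x : Fin (2 * r * n)} {p : Fin n × Fin (2 * r)} :
    blockEquiv r n x = p ↔ (x : ℕ) / (2 * r) = p.1 ∧ (x : ℕ) % (2 * r) = p.2 := by
  simp only [Prod.ext_iff, Fin.ext_iff]
  rfl

theorem blockEquiv_eq_of_val_eq (hr : 0 < r) {x : Fin (2 * r * n)} {p : Fin n × Fin (2 * r)}
    (hx : (x : ℕ) = 2 * r * p.1 + p.2) : blockEquiv r n x = p := by
  have hp := p.2.isLt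
  rw [blockEquiv_eq_iff, hx, Nat.mul_add_div (by omega), Nat.div_eq_of_lt hp, Nat.mul_add_mod,
    Nat.mod_eq_of_lt hp, add_zero]
  exact ⟨rfl, rfl⟩

theorem val_eq_of_blockEquiv (x : Fin (2 * r * n)) :
    (x : ℕ) = 2 * r * (blockEquiv r n x).1 + (blockEquiv r n x).2 :=
  (Nat.div_add_mod _ _).symm

theorem blockEquiv_of_cycle (hr : 0 < r) {π : Perm (Fin (2 * r * n))}
    (hπ : ∀ x : Fin (2 * r * n),
      ((π x : ℕ)) = 2 * r * ((x : ℕ) / (2 * r)) + ((x : ℕ) % (2 * r) + 1) % (2 * r))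
    (x : Fin (2 * r * n)) :
    blockEquiv r n (π x) = ((blockEquiv r n x).1, finRotate _ (blockEquiv r n x).2) :=
  blockEquiv_eq_of_val_eq hr (by rw [hπ, Fin.val_finRotate]; rfl)

theorem blockEquiv_of_blockCycle (hr : 0 < r) {j : ℕ} (hj : j < n) {A : Perm (Fin (2 * r * n))}
    (hA : ∀ x : Fin (2 * r * n),
      ((A x : ℕ)) = if (x : ℕ) / (2 * r) = j
        then 2 * r * j + ((x : ℕ) % (2 * r) + 1) % (2 * r) else (x : ℕ))
    (x : Fin (2 * r * n)) :
    blockEquiv r n (A x) = prodExtendRight ⟨j, hj⟩ (finRotate _) (blockEquiv r n x) := by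
  apply blockEquiv_eq_of_val_eq hr
  by_cases hx : (x : ℕ) / (2 * r) = j
  · have hex : blockEquiv r n x = (⟨j, hj⟩, (blockEquiv r n x).2) := Prod.ext (Fin.ext hx) rfl
    rw [hex, prodExtendRight_apply_eq, hA, if_pos hx, Fin.val_finRotate]
    rfl
  · have hex : blockEquiv r n x = ((blockEquiv r n x).1, (blockEquiv r n x).2) := rfl
    rw [hex, prodExtendRight_apply_ne _ (fun h => hx (congrArg Fin.val h)), hA, if_neg hx]
    exact val_eq_of_blockEquiv x

theorem blockEquiv_of_blockSwap (hr : 0 < r) {i : ℕ} (hi : i + 1 < n)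
    {B : Perm (Fin (2 * r * n))}
    (hB : ∀ x : Fin (2 * r * n),
      ((B x : ℕ)) = if (x : ℕ) / (2 * r) = i then (x : ℕ) + 2 * r
        else if (x : ℕ) / (2 * r) = i + 1 then (x : ℕ) - 2 * r else (x : ℕ))
    (x : Fin (2 * r * n)) :
    blockEquiv r n (B x) =
      prodCongrLeft (fun _ => swap ⟨i, by omega⟩ ⟨i + 1, hi⟩) (blockEquiv r n x) := by
  apply blockEquiv_eq_of_val_eq hr
  have hex : blockEquiv r n x = ((blockEquiv r n x).1, (blockEquiv r n x).2) := rfl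
  have hx := val_eq_of_blockEquiv x
  have hk : (x : ℕ) / (2 * r) = (blockEquiv r n x).1 := rfl
  rw [hex, prodCongrLeft_apply, hB, hk]
  generalize (blockEquiv r n x).1 = k, (blockEquiv r n x).2 = m at hx
  by_cases h1 : (k : ℕ) = i
  · rw [if_pos h1, show k = ⟨i, by omega⟩ from Fin.ext h1, swap_apply_left, hx, h1]
    ring
  by_cases h2 : (k : ℕ) = i + 1
  · rw [if_neg h1, if_pos h2, show k = ⟨i + 1, hi⟩ from Fin.ext h2, swap_apply_right, hx, h2]
    exact Nat.sub_eq_of_eq_add (by ring)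
  · rw [if_neg h1, if_neg h2, swap_apply_of_ne_of_ne (fun h => h1 (congrArg Fin.val h))
      (fun h => h2 (congrArg Fin.val h)), hx]

section

variable (hr : 0 < r) {π : Perm (Fin (2 * r * n))}
  (hπ : ∀ x : Fin (2 * r * n),
    ((π x : ℕ)) = 2 * r * ((x : ℕ) / (2 * r)) + ((x : ℕ) % (2 * r) + 1) % (2 * r))
include hr hπ

theorem sameCycle_iff_block_eq (x y : Fin (2 * r * n)) :
    π.SameCycle x y ↔ (blockEquiv r n x).1 = (blockEquiv r n y).1 := by
  have h2r : 2 ≤ 2 * r := by omega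
  have hrot (b : Fin (2 * r)) : finRotate _ b ≠ b :=
    mem_support.1 (support_finRotate_of_le h2r ▸ Finset.mem_univ b)
  exact sameCycle_iff_fst_eq _ (blockEquiv_of_cycle hr hπ)
    (fun b b' => (isCycle_finRotate_of_le h2r).sameCycle (hrot b) (hrot b')) x y

theorem snd_signPair_eq_sign_of_blocks (c : Subgroup.centralizer {π}) (β : Perm (Fin n))
    (hc : ∀ x, (blockEquiv r n ((c : Perm _) x)).1 = β (blockEquiv r n x).1) :
    (signPair π c).2 = sign β :=
  snd_signPair_eq_sign _ (fun k => ⟨(blockEquiv r n).symm (k, ⟨0, by omega⟩), by simp⟩)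
    (sameCycle_iff_block_eq hr hπ) c β hc

theorem signPair_blockCycle {j : ℕ} (hj : j < n) {A : Perm (Fin (2 * r * n))}
    (hA : ∀ x : Fin (2 * r * n),
      ((A x : ℕ)) = if (x : ℕ) / (2 * r) = j
        then 2 * r * j + ((x : ℕ) % (2 * r) + 1) % (2 * r) else (x : ℕ))
    (hmem : A ∈ Subgroup.centralizer {π}) : signPair π ⟨A, hmem⟩ = (-1, 1) := by
  refine Prod.ext ?_ ((snd_signPair_eq_sign_of_blocks hr hπ _ 1 fun x => ?_).trans sign_one)
  · change sign A = -1
    rw [sign_eq_sign_of_equiv _ _ _ (blockEquiv_of_blockCycle hr hj hA), sign_prodExtendRight,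
      sign_finRotate]
    exact Odd.neg_one_pow ⟨r - 1, by omega⟩
  · rw [blockEquiv_of_blockCycle hr hj hA, fst_prodExtendRight]
    rfl

theorem signPair_blockSwap {i : ℕ} (hi : i + 1 < n) {B : Perm (Fin (2 * r * n))}
    (hB : ∀ x : Fin (2 * r * n),
      ((B x : ℕ)) = if (x : ℕ) / (2 * r) = i then (x : ℕ) + 2 * r
        else if (x : ℕ) / (2 * r) = i + 1 then (x : ℕ) - 2 * r else (x : ℕ))
    (hmem : B ∈ Subgroup.centralizer {π}) : signPair π ⟨B, hmem⟩ = (1, -1) := by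
  have hne : (⟨i, by omega⟩ : Fin n) ≠ ⟨i + 1, hi⟩ := by simp [Fin.ext_iff]
  refine Prod.ext ?_ ((snd_signPair_eq_sign_of_blocks hr hπ _ _ fun x => ?_).trans
    (sign_swap hne))
  · change sign B = 1
    rw [sign_eq_sign_of_equiv _ _ _ (blockEquiv_of_blockSwap hr hi hB), sign_prodCongrLeft,
      Finset.prod_const, Finset.card_univ, Fintype.card_fin, sign_swap hne]
    exact Even.neg_one_pow ⟨r, by ring⟩
  · rw [blockEquiv_of_blockSwap hr hi hB]
    rfl

end

end Blocks

theorem eq_coprod_comp_signPair {r n : ℕ} (hr : 0 < r)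
    {A B : ℕ → Perm (Fin (2 * r * n))}
    (hA : ∀ j < n, ∀ x : Fin (2 * r * n),
      ((A j x : ℕ)) = if (x : ℕ) / (2 * r) = j
        then 2 * r * j + ((x : ℕ) % (2 * r) + 1) % (2 * r) else (x : ℕ))
    {π : Perm (Fin (2 * r * n))}
    (hπ : ∀ x : Fin (2 * r * n),
      ((π x : ℕ)) = 2 * r * ((x : ℕ) / (2 * r)) + ((x : ℕ) % (2 * r) + 1) % (2 * r))
    (hB : ∀ i, i + 1 < n → ∀ x : Fin (2 * r * n),
      ((B i x : ℕ)) = if (x : ℕ) / (2 * r) = i then (x : ℕ) + 2 * r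
        else if (x : ℕ) / (2 * r) = i + 1 then (x : ℕ) - 2 * r else (x : ℕ))
    (hgen : Subgroup.centralizer {π} =
      Subgroup.closure (A '' {j | j < n} ∪ B '' {i | i + 1 < n}))
    {μ : ℂˣ} (ε ψ : ℤˣ →* ℂˣ) (hε : ε (-1) = -1) (hψ : ψ (-1) = μ)
    {ρ : Subgroup.centralizer {π} →* ℂˣ}
    (hρA : ∀ j (_ : j < n) (h : A j ∈ Subgroup.centralizer {π}), ρ ⟨A j, h⟩ = -1)
    (hρB : ∀ i (_ : i + 1 < n) (h : B i ∈ Subgroup.centralizer {π}), ρ ⟨B i, h⟩ = μ) :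
    ρ = (ε.coprod ψ).comp (signPair π) := by
  refine Subgroup.monoidHom_ext_of_eq_closure hgen ?_
  rintro _ hmem (⟨j, hj, rfl⟩ | ⟨i, hi, rfl⟩)
  · rw [hρA j hj hmem, MonoidHom.comp_apply, signPair_blockCycle hr hπ hj (hA j hj),
      MonoidHom.coprod_apply, map_one, mul_one, hε]
  · rw [hρB i hi hmem, MonoidHom.comp_apply, signPair_blockSwap hr hπ hi (hB i hi),
      MonoidHom.coprod_apply, map_one, one_mul, hψ]

theorem stmt12_general (r n : ℕ) (hr : 2 ≤ r)
    (A : ℕ → Equiv.Perm (Fin (2 * r * n)))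
    (hA : ∀ j < n, ∀ x : Fin (2 * r * n),
      ((A j x : ℕ)) = if (x : ℕ) / (2 * r) = j
        then 2 * r * j + ((x : ℕ) % (2 * r) + 1) % (2 * r) else (x : ℕ))
    (π : Equiv.Perm (Fin (2 * r * n)))
    (hπ : ∀ x : Fin (2 * r * n),
      ((π x : ℕ)) = 2 * r * ((x : ℕ) / (2 * r)) + ((x : ℕ) % (2 * r) + 1) % (2 * r))
    (B : ℕ → Equiv.Perm (Fin (2 * r * n)))
    (hB : ∀ i, i + 1 < n → ∀ x : Fin (2 * r * n),
      ((B i x : ℕ)) = if (x : ℕ) / (2 * r) = i then (x : ℕ) + 2 * r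
        else if (x : ℕ) / (2 * r) = i + 1 then (x : ℕ) - 2 * r else (x : ℕ))
    (hgen : Subgroup.centralizer {π} =
      Subgroup.closure (A '' {j | j < n} ∪ B '' {i | i + 1 < n}))
    (μ : ℂˣ) (hμ : μ = 1 ∨ μ = -1)
    (ρ : ↥(Subgroup.centralizer {π}) →* ℂˣ)
    (hρA : ∀ j (_ : j < n) (h : A j ∈ Subgroup.centralizer {π}), ρ ⟨A j, h⟩ = -1)
    (hρB : ∀ i (_ : i + 1 < n) (h : B i ∈ Subgroup.centralizer {π}), ρ ⟨B i, h⟩ = μ)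
    (hρπ : ∀ h : π ∈ Subgroup.centralizer {π}, ρ ⟨π, h⟩ = -1)
    (t t' : Equiv.Perm (Fin (2 * r * n))) (hcomm : t * t' = t' * t)
    (g g' : Equiv.Perm (Fin (2 * r * n))) (hg : g * π * g⁻¹ = t) (hg' : g' * π * g'⁻¹ = t') :
    g'⁻¹ * t * g' ∈ Subgroup.centralizer {π} ∧
    g⁻¹ * t' * g ∈ Subgroup.centralizer {π} ∧
    (∀ h : g⁻¹ * t * g ∈ Subgroup.centralizer {π}, ρ ⟨g⁻¹ * t * g, h⟩ = -1) ∧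
    (∀ (h1 : g'⁻¹ * t * g' ∈ Subgroup.centralizer {π})
       (h2 : g⁻¹ * t' * g ∈ Subgroup.centralizer {π}),
      ρ ⟨g'⁻¹ * t * g', h1⟩ * ρ ⟨g⁻¹ * t' * g, h2⟩ = 1) := by
  have hπt : g⁻¹ * t * g = π := by rw [← hg]; group
  have hπt' : g'⁻¹ * t' * g' = π := by rw [← hg']; group
  obtain ⟨ε, hε⟩ : ∃ ε : ℤˣ →* ℂˣ, ε (-1) = -1 :=
    ⟨Units.map (Int.castRingHom ℂ : ℤ →* ℂ), by ext; simp⟩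
  obtain ⟨ψ, hψ⟩ : ∃ ψ : ℤˣ →* ℂˣ, ψ (-1) = μ := by
    rcases hμ with rfl | rfl
    exacts [⟨1, rfl⟩, ⟨ε, hε⟩]
  have hρ := eq_coprod_comp_signPair (by omega) hA hπ hB hgen ε ψ hε hψ hρA hρB
  refine ⟨hπt' ▸ Subgroup.conj_mem_centralizer_conj_s12 hcomm g',
    hπt ▸ Subgroup.conj_mem_centralizer_conj_s12 hcomm.symm g, fun h => ?_, fun h1 h2 => ?_⟩
  · rw [← hρπ (hπt ▸ h)]
    congr 2
  · rw [hρ]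
    exact map_signPair_conj_mul_map_signPair_conj (ε.coprod ψ) (g⁻¹ * g') (by rw [← hg]; group)
      (by rw [← hg']; group) h1 h2

/-- Let `r ≥ 2` be odd, `n ≥ 2`.  In `S_{2rn}` (on `Fin (2*r*n)`,
`0`-indexed), for `0 ≤ j < n` let `A j` be the `2r`-cycle on the `j`-th block of size
`2r`, `π = A_0 ⋯ A_{n-1}`, and for `0 ≤ i < n-1` let `B i` swap blocks `i` and `i+1`
position-by-position, so that the centralizer of `π` is generated by the `A j`'s and
`B i`'s.  Let `μ ∈ {1,-1}` and let `ρ` be a homomorphism from the centralizer of `π`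
to `ℂˣ` with `ρ(A j) = -1`, `ρ(B i) = μ`, and `ρ(π) = -1`.  Then for all commuting
`t, t'` in the conjugacy class of `π` and all `g, g'` with `g π g⁻¹ = t`,
`g' π g'⁻¹ = t'`, the elements `g'⁻¹ t g'` and `g⁻¹ t' g` lie in the centralizer of
`π`, `ρ(g⁻¹ t g) = -1` and `ρ(g'⁻¹ t g') · ρ(g⁻¹ t' g) = 1`: for `r` odd and
`ρ = χ_{r,…,r} ⊗ μ` with `ρ(π) = -1`, the braiding is negative. -/
theorem stmt12 (r n : ℕ) (hr : 2 ≤ r) (hrodd : Odd r) (hn : 2 ≤ n)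
    (A : ℕ → Equiv.Perm (Fin (2 * r * n)))
    (hA : ∀ j < n, ∀ x : Fin (2 * r * n),
      ((A j x : ℕ)) = if (x : ℕ) / (2 * r) = j
        then 2 * r * j + ((x : ℕ) % (2 * r) + 1) % (2 * r) else (x : ℕ))
    (π : Equiv.Perm (Fin (2 * r * n)))
    (hπ : ∀ x : Fin (2 * r * n),
      ((π x : ℕ)) = 2 * r * ((x : ℕ) / (2 * r)) + ((x : ℕ) % (2 * r) + 1) % (2 * r))
    (B : ℕ → Equiv.Perm (Fin (2 * r * n)))
    (hB : ∀ i, i + 1 < n → ∀ x : Fin (2 * r * n),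
      ((B i x : ℕ)) = if (x : ℕ) / (2 * r) = i then (x : ℕ) + 2 * r
        else if (x : ℕ) / (2 * r) = i + 1 then (x : ℕ) - 2 * r else (x : ℕ))
    (hgen : Subgroup.centralizer {π} =
      Subgroup.closure (A '' {j | j < n} ∪ B '' {i | i + 1 < n}))
    (μ : ℂˣ) (hμ : μ = 1 ∨ μ = -1)
    (ρ : ↥(Subgroup.centralizer {π}) →* ℂˣ)
    (hρA : ∀ j (_ : j < n) (h : A j ∈ Subgroup.centralizer {π}), ρ ⟨A j, h⟩ = -1)
    (hρB : ∀ i (_ : i + 1 < n) (h : B i ∈ Subgroup.centralizer {π}), ρ ⟨B i, h⟩ = μ)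
    (hρπ : ∀ h : π ∈ Subgroup.centralizer {π}, ρ ⟨π, h⟩ = -1)
    (t t' : Equiv.Perm (Fin (2 * r * n))) (hcomm : t * t' = t' * t)
    (g g' : Equiv.Perm (Fin (2 * r * n))) (hg : g * π * g⁻¹ = t) (hg' : g' * π * g'⁻¹ = t') :
    g'⁻¹ * t * g' ∈ Subgroup.centralizer {π} ∧
    g⁻¹ * t' * g ∈ Subgroup.centralizer {π} ∧
    (∀ h : g⁻¹ * t * g ∈ Subgroup.centralizer {π}, ρ ⟨g⁻¹ * t * g, h⟩ = -1) ∧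
    (∀ (h1 : g'⁻¹ * t * g' ∈ Subgroup.centralizer {π})
       (h2 : g⁻¹ * t' * g ∈ Subgroup.centralizer {π}),
      ρ ⟨g'⁻¹ * t * g', h1⟩ * ρ ⟨g⁻¹ * t' * g, h2⟩ = 1) :=
  stmt12_general r n hr A hA π hπ B hB hgen μ hμ ρ hρA hρB hρπ t t' hcomm g g' hg hg'
end

section
/- Let r ≥ 2 and n ≥ 2. In S_{2rn}, for 1 ≤ j ≤ n let A_j be the 2r-cycle (2r(j-1)+1, …, 2rj), let π = A_1⋯A_n, for 1 ≤ i ≤ n-1 let B_i = ∏_{m=1}^{2r}(2r(i-1)+m, 2ri+m), and for 1 ≤ i < j ≤ n let B_{ij} = B_i if j = i+1 and B_{ij} = B_i B_{i+1}⋯B_{j-1}⋯B_{i+1} B_i otherwise. Let G be the centralizer of π in S_{2rn} (the subgroup generated by A_1,…,A_n, B_1,…,B_{n-1}) and let ρ : G → GL(V) be a finite-dimensional irreducible complex representation such that for every pair (i,j) with 1 ≤ i < j ≤ n there is ε_{ij} ∈ {1,-1} with ρ(π B_{ij}) = ε_{ij}·Id_V. Then dim V = 1. -/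
/-- If `a` is a two-sided inverse of `b` and `c` commutes with `b`, then `c` commutes
with `a`. -/
lemma stmt15_commute_of_inv {R : Type*} [Monoid R] {a b c : R} (hab : a * b = 1)
    (hba : b * a = 1) (h : Commute c b) : Commute c a := by
  show c * a = a * c
  calc c * a = (a * b) * (c * a) := by rw [hab, one_mul]
    _ = a * (b * c) * a := by simp only [mul_assoc]
    _ = a * (c * b) * a := by rw [h.eq]
    _ = (a * c) * (b * a) := by simp only [mul_assoc]
    _ = a * c := by rw [hba, mul_one]

/-- Let `r ≥ 2`, `n ≥ 2`.  In `S_{2rn}` (on `Fin (2*r*n)`,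
`0`-indexed), for `0 ≤ j < n` let `A j` be the `2r`-cycle on the `j`-th block of size
`2r`, `π = A_0 ⋯ A_{n-1}`, for `0 ≤ i < n-1` let `B i` swap blocks `i` and `i+1`
position-by-position, and for `0 ≤ i < j < n` let `Bij i j = B i` if `j = i+1` and
`Bij i j = B i · Bij (i+1) j · B i` otherwise.  Let `G` be the centralizer of `π`
(the subgroup generated by the `A j`'s and `B i`'s) and let `ρ : G →* End(V)` be a
finite-dimensional irreducible complex representation such that for every pair
`(i,j)` the operator `ρ(π · Bij i j)` is `± Id`.  Then `dim V = 1`. -/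
theorem stmt15 (r n : ℕ) (hr : 2 ≤ r) (hn : 2 ≤ n)
    (A : ℕ → Equiv.Perm (Fin (2 * r * n)))
    (hA : ∀ j < n, ∀ x : Fin (2 * r * n),
      ((A j x : ℕ)) = if (x : ℕ) / (2 * r) = j
        then 2 * r * j + ((x : ℕ) % (2 * r) + 1) % (2 * r) else (x : ℕ))
    (π : Equiv.Perm (Fin (2 * r * n)))
    (hπ : ∀ x : Fin (2 * r * n),
      ((π x : ℕ)) = 2 * r * ((x : ℕ) / (2 * r)) + ((x : ℕ) % (2 * r) + 1) % (2 * r))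
    (B : ℕ → Equiv.Perm (Fin (2 * r * n)))
    (hB : ∀ i, i + 1 < n → ∀ x : Fin (2 * r * n),
      ((B i x : ℕ)) = if (x : ℕ) / (2 * r) = i then (x : ℕ) + 2 * r
        else if (x : ℕ) / (2 * r) = i + 1 then (x : ℕ) - 2 * r else (x : ℕ))
    (hgen : Subgroup.centralizer {π} =
      Subgroup.closure (A '' {j | j < n} ∪ B '' {i | i + 1 < n}))
    (Bij : ℕ → ℕ → Equiv.Perm (Fin (2 * r * n)))
    (hBij1 : ∀ i, Bij i (i + 1) = B i)
    (hBij2 : ∀ i j, i + 1 < j → Bij i j = B i * Bij (i + 1) j * B i)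
    (V : Type*) [AddCommGroup V] [Module ℂ V] [FiniteDimensional ℂ V] [Nontrivial V]
    (ρ : ↥(Subgroup.centralizer {π}) →* (V →ₗ[ℂ] V))
    (hirr : ∀ W : Submodule ℂ V,
      (∀ (x : ↥(Subgroup.centralizer {π})), ∀ v ∈ W, ρ x v ∈ W) → W = ⊥ ∨ W = ⊤)
    (hscalar : ∀ i j, i < j → j < n → ∃ ε : ℂ, (ε = 1 ∨ ε = -1) ∧
      ∀ h : π * Bij i j ∈ Subgroup.centralizer {π},
        ρ ⟨π * Bij i j, h⟩ = ε • (1 : V →ₗ[ℂ] V)) :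
    Module.finrank ℂ V = 1 := by
  have hm : 0 < 2 * r := by positivity
  -- basic facts about A
  have hAfix : ∀ j, j < n → ∀ x : Fin (2 * r * n), (x : ℕ) / (2 * r) ≠ j → A j x = x := by
    intro j hj x hx
    exact Fin.ext (by rw [hA j hj x, if_neg hx])
  have hAdiv : ∀ j, j < n → ∀ x : Fin (2 * r * n), (x : ℕ) / (2 * r) = j →
      ((A j x : ℕ)) / (2 * r) = j := by
    intro j hj x hx
    rw [hA j hj x, if_pos hx, Nat.mul_add_div hm,
      Nat.div_eq_of_lt (Nat.mod_lt _ hm), add_zero]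
  have hAcomm : ∀ j, j < n → ∀ k, k < n → A j * A k = A k * A j := by
    intro j hj k hk
    rcases eq_or_ne j k with rfl | hjk
    · rfl
    · ext x
      simp only [Equiv.Perm.mul_apply]
      by_cases h1 : (x : ℕ) / (2 * r) = j
      · have hxk : (x : ℕ) / (2 * r) ≠ k := by rw [h1]; exact hjk
        rw [hAfix k hk x hxk, hAfix k hk (A j x) (by rw [hAdiv j hj x h1]; exact hjk)]
      · by_cases h2 : (x : ℕ) / (2 * r) = k
        · rw [hAfix j hj x h1,
            hAfix j hj (A k x) (by rw [hAdiv k hk x h2]; exact hjk.symm)]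
        · rw [hAfix j hj x h1, hAfix k hk x h2, hAfix j hj x h1]
  -- memberships
  have hπmem : π ∈ Subgroup.centralizer {π} := by
    apply Subgroup.mem_centralizer_iff.mpr
    intro g hg
    rw [Set.mem_singleton_iff] at hg
    subst hg; rfl
  have hAmem : ∀ j, j < n → A j ∈ Subgroup.centralizer {π} := by
    intro j hj
    rw [hgen]
    exact Subgroup.subset_closure (Or.inl ⟨j, hj, rfl⟩)
  have hBmem : ∀ i, i + 1 < n → B i ∈ Subgroup.centralizer {π} := by
    intro i hi
    rw [hgen]
    exact Subgroup.subset_closure (Or.inr ⟨i, hi, rfl⟩)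
  -- π is central in the centralizer
  have hπcent : ∀ h : ↥(Subgroup.centralizer {π}), Commute (⟨π, hπmem⟩ : ↥(Subgroup.centralizer {π})) h := by
    intro h
    exact Subtype.ext (Subgroup.mem_centralizer_iff.mp h.2 π rfl)
  have hπinv1 : ρ (⟨π, hπmem⟩ : ↥(Subgroup.centralizer {π}))⁻¹ * ρ ⟨π, hπmem⟩ = 1 := by
    rw [← map_mul, inv_mul_cancel, map_one]
  have hπicomm : ∀ h : ↥(Subgroup.centralizer {π}),
      Commute (ρ (⟨π, hπmem⟩ : ↥(Subgroup.centralizer {π}))⁻¹) (ρ h) :=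
    fun h => ((hπcent h).inv_left.map ρ)
  -- ρ(B i) is a scalar multiple of ρ(π⁻¹)
  have hBscal : ∀ i (hi : i + 1 < n), ∃ ε : ℂ,
      ρ ⟨B i, hBmem i hi⟩ = ε • ρ (⟨π, hπmem⟩ : ↥(Subgroup.centralizer {π}))⁻¹ := by
    intro i hi
    obtain ⟨ε, _, hε2⟩ := hscalar i (i + 1) (Nat.lt_succ_self i) hi
    have hmem : π * Bij i (i + 1) ∈ Subgroup.centralizer {π} := by
      rw [hBij1]; exact mul_mem hπmem (hBmem i hi)
    have h2 := hε2 hmem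
    have heq : (⟨π * Bij i (i + 1), hmem⟩ : ↥(Subgroup.centralizer {π}))
        = ⟨π, hπmem⟩ * ⟨B i, hBmem i hi⟩ := Subtype.ext (by simp [hBij1])
    rw [heq, map_mul] at h2
    refine ⟨ε, ?_⟩
    calc ρ ⟨B i, hBmem i hi⟩
        = (ρ (⟨π, hπmem⟩ : ↥(Subgroup.centralizer {π}))⁻¹ * ρ ⟨π, hπmem⟩) * ρ ⟨B i, hBmem i hi⟩ := by
          rw [hπinv1, one_mul]
      _ = ρ (⟨π, hπmem⟩ : ↥(Subgroup.centralizer {π}))⁻¹ * (ρ ⟨π, hπmem⟩ * ρ ⟨B i, hBmem i hi⟩) := by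
          rw [mul_assoc]
      _ = ρ (⟨π, hπmem⟩ : ↥(Subgroup.centralizer {π}))⁻¹ * (ε • 1) := by rw [h2]
      _ = ε • ρ (⟨π, hπmem⟩ : ↥(Subgroup.centralizer {π}))⁻¹ := by rw [mul_smul_comm, mul_one]
  -- ρ(B i) commutes with everything in the image
  have hBcomm : ∀ i (hi : i + 1 < n) (h : ↥(Subgroup.centralizer {π})),
      Commute (ρ ⟨B i, hBmem i hi⟩) (ρ h) := by
    intro i hi h
    obtain ⟨ε, hε⟩ := hBscal i hi
    rw [hε]
    show (ε • ρ (⟨π, hπmem⟩ : ↥(Subgroup.centralizer {π}))⁻¹) * ρ h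
        = ρ h * (ε • ρ (⟨π, hπmem⟩ : ↥(Subgroup.centralizer {π}))⁻¹)
    rw [smul_mul_assoc, mul_smul_comm, (hπicomm h).eq]
  -- ρ(A j) commutes with everything in the image
  have hAcommAll : ∀ j (hj : j < n) (y : Equiv.Perm (Fin (2 * r * n)))
      (hy : y ∈ Subgroup.centralizer {π}), Commute (ρ ⟨A j, hAmem j hj⟩) (ρ ⟨y, hy⟩) := by
    intro j hj y hy
    have hy' : y ∈ Subgroup.closure (A '' {j | j < n} ∪ B '' {i | i + 1 < n}) := by
      rw [← hgen]; exact hy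
    induction hy' using Subgroup.closure_induction with
    | mem z hz =>
      rcases hz with ⟨k, hk, rfl⟩ | ⟨i, hi, rfl⟩
      · have : Commute (⟨A j, hAmem j hj⟩ : ↥(Subgroup.centralizer {π})) ⟨A k, hy⟩ :=
          Subtype.ext (hAcomm j hj k hk)
        exact this.map ρ
      · exact (hBcomm i hi ⟨A j, hAmem j hj⟩).symm
    | one =>
      have h1 : (⟨(1 : Equiv.Perm (Fin (2 * r * n))), hy⟩ : ↥(Subgroup.centralizer {π})) = 1 := rfl
      rw [h1, map_one]
      exact Commute.one_right _
    | mul z w hz hw ihz ihw =>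
      have hzG : z ∈ Subgroup.centralizer {π} := by rw [hgen]; exact hz
      have hwG : w ∈ Subgroup.centralizer {π} := by rw [hgen]; exact hw
      have h1 : (⟨z * w, hy⟩ : ↥(Subgroup.centralizer {π})) = ⟨z, hzG⟩ * ⟨w, hwG⟩ := rfl
      rw [h1, map_mul]
      exact (ihz hzG).mul_right (ihw hwG)
    | inv z hz ihz =>
      have hzG : z ∈ Subgroup.centralizer {π} := by rw [hgen]; exact hz
      have h1 : ρ ⟨z⁻¹, hy⟩ * ρ ⟨z, hzG⟩ = 1 := by
        rw [← map_mul]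
        have h0 : (⟨z⁻¹, hy⟩ : ↥(Subgroup.centralizer {π})) * ⟨z, hzG⟩ = 1 :=
          Subtype.ext (inv_mul_cancel z)
        rw [h0, map_one]
      have h2 : ρ ⟨z, hzG⟩ * ρ ⟨z⁻¹, hy⟩ = 1 := by
        rw [← map_mul]
        have h0 : (⟨z, hzG⟩ : ↥(Subgroup.centralizer {π})) * ⟨z⁻¹, hy⟩ = 1 :=
          Subtype.ext (mul_inv_cancel z)
        rw [h0, map_one]
      exact stmt15_commute_of_inv h1 h2 (ihz hzG)
  -- full commutativity of the image
  have hcommAll : ∀ (g h : ↥(Subgroup.centralizer {π})), Commute (ρ g) (ρ h) := by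
    rintro ⟨x, hx⟩ h
    have hx' : x ∈ Subgroup.closure (A '' {j | j < n} ∪ B '' {i | i + 1 < n}) := by
      rw [← hgen]; exact hx
    induction hx' using Subgroup.closure_induction with
    | mem z hz =>
      rcases hz with ⟨k, hk, rfl⟩ | ⟨i, hi, rfl⟩
      · exact hAcommAll k hk h.1 h.2
      · exact hBcomm i hi h
    | one =>
      have h1 : (⟨(1 : Equiv.Perm (Fin (2 * r * n))), hx⟩ : ↥(Subgroup.centralizer {π})) = 1 := rfl
      rw [h1, map_one]
      exact Commute.one_left _
    | mul z w hz hw ihz ihw =>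
      have hzG : z ∈ Subgroup.centralizer {π} := by rw [hgen]; exact hz
      have hwG : w ∈ Subgroup.centralizer {π} := by rw [hgen]; exact hw
      have h1 : (⟨z * w, hx⟩ : ↥(Subgroup.centralizer {π})) = ⟨z, hzG⟩ * ⟨w, hwG⟩ := rfl
      rw [h1, map_mul]
      exact (ihz hzG).mul_left (ihw hwG)
    | inv z hz ihz =>
      have hzG : z ∈ Subgroup.centralizer {π} := by rw [hgen]; exact hz
      have h1 : ρ ⟨z⁻¹, hx⟩ * ρ ⟨z, hzG⟩ = 1 := by
        rw [← map_mul]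
        have h0 : (⟨z⁻¹, hx⟩ : ↥(Subgroup.centralizer {π})) * ⟨z, hzG⟩ = 1 :=
          Subtype.ext (inv_mul_cancel z)
        rw [h0, map_one]
      have h2 : ρ ⟨z, hzG⟩ * ρ ⟨z⁻¹, hx⟩ = 1 := by
        rw [← map_mul]
        have h0 : (⟨z, hzG⟩ : ↥(Subgroup.centralizer {π})) * ⟨z⁻¹, hx⟩ = 1 :=
          Subtype.ext (mul_inv_cancel z)
        rw [h0, map_one]
      exact (stmt15_commute_of_inv h1 h2 (ihz hzG).symm).symm
  -- Schur: every ρ g is a scalar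
  have hscal : ∀ g : ↥(Subgroup.centralizer {π}), ∃ μ : ℂ, ∀ v : V, ρ g v = μ • v := by
    intro g
    obtain ⟨μ, hμ⟩ := Module.End.exists_eigenvalue (ρ g)
    refine ⟨μ, ?_⟩
    have hinv : ∀ (x : ↥(Subgroup.centralizer {π})), ∀ v ∈ Module.End.eigenspace (ρ g) μ,
        ρ x v ∈ Module.End.eigenspace (ρ g) μ := by
      intro x v hv
      rw [Module.End.mem_eigenspace_iff] at hv ⊢
      have hcx := (hcommAll g x).eq
      calc ρ g (ρ x v) = (ρ g * ρ x) v := rfl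
        _ = (ρ x * ρ g) v := by rw [hcx]
        _ = ρ x (ρ g v) := rfl
        _ = ρ x (μ • v) := by rw [hv]
        _ = μ • ρ x v := map_smul _ _ _
    rcases hirr _ hinv with hbot | htop
    · exact absurd hbot (Module.End.hasEigenvalue_iff.mp hμ)
    · intro v
      have hvmem : v ∈ Module.End.eigenspace (ρ g) μ := htop ▸ Submodule.mem_top
      exact Module.End.mem_eigenspace_iff.mp hvmem
  -- conclude: any one-dimensional subspace is invariant, hence everything
  obtain ⟨v, hv⟩ := exists_ne (0 : V)
  have hinv : ∀ (x : ↥(Subgroup.centralizer {π})), ∀ w ∈ Submodule.span ℂ {v},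
      ρ x w ∈ Submodule.span ℂ {v} := by
    intro x w hw
    obtain ⟨μ, hμ⟩ := hscal x
    rw [hμ w]
    exact Submodule.smul_mem _ _ hw
  rcases hirr _ hinv with hbot | htop
  · exact absurd (Submodule.span_singleton_eq_bot.mp hbot) hv
  · rw [← finrank_top ℂ V, ← htop, finrank_span_singleton hv]
end

section
/- Let r ≥ 2 and n ≥ 2. In S_{2rn}, for 1 ≤ j ≤ n let A_j be the 2r-cycle (2r(j-1)+1, …, 2rj) and for 1 ≤ i ≤ n-1 let B_i = ∏_{m=1}^{2r}(2r(i-1)+m, 2ri+m). Let B be an element of the subgroup generated by B_1,…,B_{n-1}, and let β ∈ S_n be the induced permutation of the blocks 𝔸_j = {2r(j-1)+1,…,2rj} (so B sends 2r(j-1)+m to 2r(β(j)-1)+m). Let d_1, …, d_n be integers and suppose γ = (∏_{j=1}^n A_j^{d_j})·B satisfies γ^{2r} = id. Then for every subset J ⊆ {1,…,n} that is the support of a cycle of β of length L = card J, L divides ∑_{j∈J} d_j. -/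
def blk (r n : ℕ) [NeZero (2*r)] (j : Fin n) (m : ZMod (2*r)) : Fin (2*r*n) :=
  ⟨2*r*j + m.val, by
    have h1 : m.val < 2*r := ZMod.val_lt m
    have h2 : (j:ℕ) < n := j.isLt
    calc 2*r*j + m.val < 2*r*j + 2*r := by omega
    _ = 2*r*((j:ℕ)+1) := by ring
    _ ≤ 2*r*n := Nat.mul_le_mul_left _ (by omega)⟩

lemma blk_div (r n : ℕ) [NeZero (2*r)] (j : Fin n) (m : ZMod (2*r)) :
    ((blk r n j m : ℕ)) / (2*r) = j := by
  have h1 : m.val < 2*r := ZMod.val_lt m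
  have h0 : 0 < 2*r := Nat.pos_of_ne_zero (NeZero.ne _)
  show (2*r*j + m.val) / (2*r) = j
  rw [Nat.mul_add_div h0, Nat.div_eq_of_lt h1, Nat.add_zero]

lemma blk_mod (r n : ℕ) [NeZero (2*r)] (j : Fin n) (m : ZMod (2*r)) :
    ((blk r n j m : ℕ)) % (2*r) = m.val := by
  have h1 : m.val < 2*r := ZMod.val_lt m
  show (2*r*j + m.val) % (2*r) = m.val
  rw [Nat.mul_add_mod, Nat.mod_eq_of_lt h1]

lemma blk_inj (r n : ℕ) [NeZero (2*r)] {j₁ j₂ : Fin n} {m₁ m₂ : ZMod (2*r)}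
    (h : blk r n j₁ m₁ = blk r n j₂ m₂) : j₁ = j₂ ∧ m₁ = m₂ := by
  have hv : (blk r n j₁ m₁ : ℕ) = (blk r n j₂ m₂ : ℕ) := by rw [h]
  have hd := (blk_div r n j₁ m₁).symm.trans ((congrArg (· / (2*r)) hv).trans (blk_div r n j₂ m₂))
  have hm := (blk_mod r n j₁ m₁).symm.trans ((congrArg (· % (2*r)) hv).trans (blk_mod r n j₂ m₂))
  exact ⟨Fin.ext hd, ZMod.val_injective (2*r) hm⟩



/-- Let `r ≥ 2`, `n ≥ 2`.  In `S_{2rn}` (on `Fin (2*r*n)`,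
`0`-indexed), for `0 ≤ j < n` let `A j` be the `2r`-cycle on the `j`-th block
`𝔸_j = {2rj, …, 2rj + 2r - 1}` and for `0 ≤ i < n-1` let `B i` swap blocks `i` and
`i+1` position-by-position.  Let `B₀` be an element of the subgroup generated by the
`B i`'s and let `β ∈ S_n` be the induced permutation of the blocks (so `B₀` sends
`2r·j + m` to `2r·β(j) + m`).  Let `d_j` be integers and suppose
`γ = (∏_j A_j^{d_j}) · B₀` satisfies `γ^{2r} = id`.  Then for every cycle of `β`
with support `J` and length `L = card J`, `L` divides `∑_{j ∈ J} d_j`. -/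
theorem stmt16 (r n : ℕ) (hr : 2 ≤ r) (hn : 2 ≤ n)
    (A : ℕ → Equiv.Perm (Fin (2 * r * n)))
    (hA : ∀ j < n, ∀ x : Fin (2 * r * n),
      ((A j x : ℕ)) = if (x : ℕ) / (2 * r) = j
        then 2 * r * j + ((x : ℕ) % (2 * r) + 1) % (2 * r) else (x : ℕ))
    (B : ℕ → Equiv.Perm (Fin (2 * r * n)))
    (hB : ∀ i, i + 1 < n → ∀ x : Fin (2 * r * n),
      ((B i x : ℕ)) = if (x : ℕ) / (2 * r) = i then (x : ℕ) + 2 * r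
        else if (x : ℕ) / (2 * r) = i + 1 then (x : ℕ) - 2 * r else (x : ℕ))
    (B₀ : Equiv.Perm (Fin (2 * r * n)))
    (hB₀ : B₀ ∈ Subgroup.closure (B '' {i | i + 1 < n}))
    (β : Equiv.Perm (Fin n))
    (hβ : ∀ (x : Fin (2 * r * n)) (j : Fin n), (x : ℕ) / (2 * r) = (j : ℕ) →
      ((B₀ x : ℕ)) = 2 * r * ((β j : ℕ)) + (x : ℕ) % (2 * r))
    (d : Fin n → ℤ)
    (hord : ((List.ofFn fun j : Fin n => A (j : ℕ) ^ d j).prod * B₀) ^ (2 * r) = 1) :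
    ∀ c ∈ β.cycleFactorsFinset,
      ((c.support.card : ℤ)) ∣ ∑ j ∈ c.support, d j := by
  haveI : NeZero (2*r) := ⟨by omega⟩
  haveI : Fact (1 < 2*r) := ⟨by omega⟩
  have h0 : 0 < 2*r := by omega
  set P := (List.ofFn fun j : Fin n => A (j:ℕ) ^ d j).prod with hPdef
  -- A fixes points outside its block
  have hAfix : ∀ j < n, ∀ x : Fin (2*r*n), (x:ℕ)/(2*r) ≠ j → A j x = x := by
    intro j hj x hx
    have h := hA j hj x
    rw [if_neg hx] at h
    exact Fin.ext h
  have hAfixz : ∀ j < n, ∀ x : Fin (2*r*n), (x:ℕ)/(2*r) ≠ j → ∀ z : ℤ, (A j ^ z) x = x :=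
    fun j hj x hx z => Equiv.Perm.zpow_apply_eq_self_of_apply_eq_self (hAfix j hj x hx) z
  -- A acts on its block as +1
  have hAstep : ∀ (j : Fin n) (m : ZMod (2*r)), A (j:ℕ) (blk r n j m) = blk r n j (m+1) := by
    intro j m
    have h := hA j j.isLt (blk r n j m)
    rw [if_pos (blk_div r n j m), blk_mod] at h
    apply Fin.ext
    rw [h]
    show 2*r*(j:ℕ) + (m.val + 1) % (2*r) = 2*r*(j:ℕ) + (m+1).val
    congr 1
    rw [ZMod.val_add, ZMod.val_one]
  have hApow : ∀ (j : Fin n) (k : ℕ) (m : ZMod (2*r)),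
      ((A (j:ℕ))^k) (blk r n j m) = blk r n j (m + (k:ZMod (2*r))) := by
    intro j k
    induction k with
    | zero => intro m; simp
    | succ k ih =>
      intro m
      rw [pow_succ, Equiv.Perm.mul_apply, hAstep, ih]
      congr 1
      push_cast
      ring
  have hAzpow : ∀ (j : Fin n) (z : ℤ) (m : ZMod (2*r)),
      ((A (j:ℕ))^z) (blk r n j m) = blk r n j (m + (z:ZMod (2*r))) := by
    intro j z m
    obtain ⟨k, hk | hk⟩ := z.eq_nat_or_neg
    · subst hk
      rw [zpow_natCast, hApow]
      norm_num
    · subst hk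
      have h1 : ((A (j:ℕ))^(k:ℕ)) (blk r n j (m - (k : ZMod (2*r)))) = blk r n j m := by
        rw [hApow]; ring_nf
      have h2 : ((A (j:ℕ))^(-(k:ℤ))) (((A (j:ℕ))^(k:ℕ)) (blk r n j (m - (k : ZMod (2*r)))))
          = blk r n j (m - (k : ZMod (2*r))) := by
        rw [← zpow_natCast, ← Equiv.Perm.mul_apply, ← zpow_add, neg_add_cancel, zpow_zero,
          Equiv.Perm.one_apply]
      rw [h1] at h2
      rw [h2]
      congr 1
      push_cast
      ring
  -- product of the A's acts on block j as + d j
  have key : ∀ (l : List (Fin n)), l.Nodup → ∀ (j : Fin n) (m : ZMod (2*r)),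
      ((l.map fun i : Fin n => A (i:ℕ) ^ d i).prod) (blk r n j m)
        = if j ∈ l then blk r n j (m + ((d j : ℤ) : ZMod (2*r))) else blk r n j m := by
    intro l
    induction l with
    | nil => intro _ j m; simp
    | cons a l ih =>
      intro hnd j m
      rw [List.map_cons, List.prod_cons, Equiv.Perm.mul_apply,
        ih (List.Nodup.of_cons hnd) j m]
      by_cases hja : j = a
      · subst hja
        have hjl : j ∉ l := (List.nodup_cons.mp hnd).1
        rw [if_neg hjl, if_pos (List.mem_cons_self : j ∈ j :: l), hAzpow]
      · have hne : ∀ m' : ZMod (2*r), ((blk r n j m' : Fin (2*r*n)) : ℕ)/(2*r) ≠ (a:ℕ) := by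
          intro m'
          rw [blk_div]
          exact fun h => hja (Fin.ext h)
        by_cases hjl : j ∈ l
        · rw [if_pos hjl, if_pos (List.mem_cons_of_mem a hjl), hAfixz a a.isLt _ (hne _)]
        · rw [if_neg hjl, if_neg (by simp [hja, hjl]), hAfixz a a.isLt _ (hne _)]
  have hPapp : ∀ (j : Fin n) (m : ZMod (2*r)),
      P (blk r n j m) = blk r n j (m + ((d j : ℤ) : ZMod (2*r))) := by
    intro j m
    have h := key (List.finRange n) (List.nodup_finRange n) j m
    rw [if_pos (List.mem_finRange j)] at h
    rw [hPdef, List.ofFn_eq_map]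
    exact h
  have hB₀app : ∀ (j : Fin n) (m : ZMod (2*r)), B₀ (blk r n j m) = blk r n (β j) m := by
    intro j m
    apply Fin.ext
    rw [hβ (blk r n j m) j (blk_div r n j m), blk_mod]
    rfl
  have hγ : ∀ (j : Fin n) (m : ZMod (2*r)),
      (P * B₀) (blk r n j m) = blk r n (β j) (m + ((d (β j) : ℤ) : ZMod (2*r))) := by
    intro j m
    rw [Equiv.Perm.mul_apply, hB₀app, hPapp]
  -- the iterated action
  have hsum : ∀ (k : ℕ) (j : Fin n),
      (∑ i ∈ Finset.range (k+1), d ((β^(i+1)) j))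
        = (∑ i ∈ Finset.range k, d ((β^(i+1)) (β j))) + d (β j) := by
    intro k j
    rw [Finset.sum_range_succ' (fun i => d ((β^(i+1)) j)) k]
    have he : ∀ i : ℕ, (β^(i+1+1)) j = (β^(i+1)) (β j) := fun i => by
      rw [← Equiv.Perm.mul_apply, ← pow_succ]
    simp [he]
  have hpow : ∀ (k : ℕ) (j : Fin n) (m : ZMod (2*r)),
      ((P * B₀)^k) (blk r n j m)
        = blk r n ((β^k) j) (m + (((∑ i ∈ Finset.range k, d ((β^(i+1)) j)) : ℤ) : ZMod (2*r))) := by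
    intro k
    induction k with
    | zero => intro j m; simp
    | succ k ih =>
      intro j m
      rw [pow_succ, Equiv.Perm.mul_apply, hγ, ih (β j)]
      have h1 : (β^k) (β j) = (β^(k+1)) j := by
        rw [← Equiv.Perm.mul_apply, ← pow_succ]
      rw [h1]
      congr 1
      rw [hsum k j]
      push_cast
      ring
  -- consequences of γ^{2r} = 1
  have hfix : ∀ j : Fin n, (β^(2*r)) j = j := by
    intro j
    have h := congrFun (congrArg (fun σ : Equiv.Perm (Fin (2*r*n)) => (σ : Fin (2*r*n) → Fin (2*r*n))) hord) (blk r n j 0)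
    simp only [Equiv.Perm.coe_one, id_eq] at h
    rw [hpow (2*r) j 0] at h
    exact (blk_inj r n h).1
  have hdvd : ∀ j : Fin n, ((2*r : ℕ) : ℤ) ∣ ∑ i ∈ Finset.range (2*r), d ((β^(i+1)) j) := by
    intro j
    have h := congrFun (congrArg (fun σ : Equiv.Perm (Fin (2*r*n)) => (σ : Fin (2*r*n) → Fin (2*r*n))) hord) (blk r n j 0)
    simp only [Equiv.Perm.coe_one, id_eq] at h
    rw [hpow (2*r) j 0] at h
    have h2 := (blk_inj r n h).2
    rw [zero_add] at h2
    exact (ZMod.intCast_zmod_eq_zero_iff_dvd _ _).mp h2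
  -- now the cycle argument
  intro c hcmem
  obtain ⟨hcyc, hsupp⟩ := (Equiv.Perm.mem_cycleFactorsFinset_iff).mp hcmem
  obtain ⟨j, hj, -⟩ := id hcyc
  have hjs : j ∈ c.support := Equiv.Perm.mem_support.mpr hj
  have hceq : c = β.cycleOf j := Equiv.Perm.cycle_is_cycleOf hjs hcmem
  have hck : ∀ k : ℕ, (c ^ k) j = (β ^ k) j := by
    intro k; rw [hceq]; exact Equiv.Perm.cycleOf_pow_apply_self β j k
  set L := c.support.card with hL
  have hLord : orderOf c = L := hcyc.orderOf
  have hc2r : c ^ (2*r) = 1 := (hcyc.pow_eq_one_iff' hj).mpr (by rw [hck]; exact hfix j)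
  have hLdvd : L ∣ 2*r := by rw [← hLord]; exact orderOf_dvd_of_pow_eq_one hc2r
  obtain ⟨t, ht⟩ := hLdvd
  have hcL : c ^ L = 1 := by rw [← hLord]; exact pow_orderOf_eq_one c
  have hβL : (β^L) j = j := by rw [← hck, hcL]; rfl
  have horb : ∀ u : ℕ, (β^(L*u)) j = j := by
    intro u
    induction u with
    | zero => simp
    | succ u ih => rw [Nat.mul_succ, pow_add, Equiv.Perm.mul_apply, hβL, ih]
  have hsplit : ∀ u : ℕ, (∑ i ∈ Finset.range (L*u), d ((β^(i+1)) j))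
      = u * ∑ i ∈ Finset.range L, d ((β^(i+1)) j) := by
    intro u
    induction u with
    | zero => simp
    | succ u ih =>
      rw [Nat.mul_succ, Finset.sum_range_add, ih]
      have h2 : ∀ i ∈ Finset.range L, d ((β^(L*u + i + 1)) j) = d ((β^(i+1)) j) := by
        intro i _
        congr 1
        have : L*u + i + 1 = (i+1) + L*u := by ring
        rw [this, pow_add, Equiv.Perm.mul_apply, horb u]
      rw [Finset.sum_congr rfl h2]
      push_cast
      ring
  have hshift : (∑ i ∈ Finset.range L, d ((β^(i+1)) j)) = ∑ i ∈ Finset.range L, d ((β^i) j) := by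
    have h1 := Finset.sum_range_succ' (fun i => d ((β^i) j)) L
    have h2 := Finset.sum_range_succ (fun i => d ((β^i) j)) L
    have h3 : d ((β^L) j) = d ((β^(0:ℕ)) j) := by rw [hβL]; simp
    simp only [h3] at h2
    have := h1.symm.trans h2
    simp only [pow_zero, Equiv.Perm.one_apply] at this ⊢
    linarith
  have hmain : (∑ i ∈ Finset.range L, d ((β^i) j)) = ∑ x ∈ c.support, d x := by
    have haux : ∀ a b : ℕ, a ≤ b → b < L → (β^a) j = (β^b) j → a = b := by
      intro a b hab hbL he
      have he' : (c^a) j = (c^b) j := by rw [hck, hck]; exact he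
      have hb : b = a + (b - a) := by omega
      rw [hb, pow_add, Equiv.Perm.mul_apply] at he'
      have hfixed : (c^(b-a)) j = j := ((c^a).injective he'.symm)
      have hone : c ^ (b-a) = 1 := (hcyc.pow_eq_one_iff' hj).mpr hfixed
      have hdv : L ∣ (b - a) := by rw [← hLord]; exact orderOf_dvd_of_pow_eq_one hone
      have := Nat.eq_zero_of_dvd_of_lt hdv (by omega)
      omega
    refine Finset.sum_bij (fun i _ => (β^i) j) ?_ ?_ ?_ ?_
    · intro a ha
      have : (c^a) j ∈ c.support := Equiv.Perm.pow_apply_mem_support.mpr hjs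
      rw [hck] at this
      exact this
    · intro a₁ ha₁ a₂ ha₂ he
      rcases le_total a₁ a₂ with h | h
      · exact haux a₁ a₂ h (Finset.mem_range.mp ha₂) he
      · exact (haux a₂ a₁ h (Finset.mem_range.mp ha₁) he.symm).symm
    · intro y hy
      have hsc : c.SameCycle j y := hcyc.sameCycle hj (Equiv.Perm.mem_support.mp hy)
      obtain ⟨i, hiL, hiy⟩ := hsc.exists_pow_eq'
      rw [hLord] at hiL
      rw [hck] at hiy
      exact ⟨i, Finset.mem_range.mpr hiL, hiy⟩
    · intro a _; rfl
  -- put it together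
  have hbig := hdvd j
  rw [ht, hsplit t, hshift, hmain] at hbig
  obtain ⟨q, hq⟩ := hbig
  have ht0 : 0 < t := by
    rcases Nat.eq_zero_or_pos t with h | h
    · exfalso; rw [h, Nat.mul_zero] at ht; omega
    · exact h
  refine ⟨q, ?_⟩
  have ht0' : (t : ℤ) ≠ 0 := by positivity
  apply mul_left_cancel₀ ht0'
  push_cast at hq ⊢
  linarith
end
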